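/- arXiv:2512.13829 — 9 statements merged into one kernel-verified Lean document; each statement's English description precedes it below -/
import Mathlib

section
/- Let V be an ordered vector space and A ⊆ V⁺. Then the order induced on the ideal V_A generated by A is generating, i.e. V_A = V_A⁺ − V_A⁺. -/
/-- An ideal in an ordered vector space: a subspace closed under order-intervals. -/
def IsIdeal {V : Type*} [AddCommGroup V] [PartialOrder V] [Module ℝ V]
    (W : Submodule ℝ V) : Prop :=
  ∀ ⦃w w' v : V⦄, w ∈ W → w' ∈ W → w ≤ v → v ≤ w' → v ∈ W

/-- The ideal generated by a subset `A`: the intersection of all ideals containing `A`. -/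
noncomputable def idealGen {V : Type*} [AddCommGroup V] [PartialOrder V] [Module ℝ V]
    (A : Set V) : Submodule ℝ V :=
  sInf {W : Submodule ℝ V | IsIdeal W ∧ A ⊆ W}

private lemma nonneg_of_symm_bound {V : Type*} [AddCommGroup V] [PartialOrder V] [IsOrderedAddMonoid V] [Module ℝ V]
    [PosSMulStrictMono ℝ V] [PosSMulReflectLT ℝ V] {x : V} (h : -x ≤ x) : 0 ≤ x := by
  have h2 : 0 ≤ (2 : ℝ) • x := by
    rw [two_smul]
    have := add_le_add_right h x
    simpa using this
  have := smul_nonneg (by norm_num : (0:ℝ) ≤ (1/2 : ℝ)) h2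
  rwa [smul_smul, show (1/2 : ℝ) * 2 = 1 by norm_num, one_smul] at this

/-- For `A ⊆ V⁺`, the order induced on the ideal generated by `A` is generating:
every element of `V_A` is a difference of two positive elements of `V_A`. -/
theorem idealGen_order_generating {V : Type*} [AddCommGroup V] [PartialOrder V] [IsOrderedAddMonoid V] [Module ℝ V]
    [PosSMulStrictMono ℝ V] [PosSMulReflectLT ℝ V] (A : Set V) (hA : ∀ a ∈ A, 0 ≤ a) :
    ∀ v ∈ idealGen A, ∃ x y : V, x ∈ idealGen A ∧ y ∈ idealGen A ∧
      0 ≤ x ∧ 0 ≤ y ∧ v = x - y := by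
  have hAsub : ∀ a ∈ A, a ∈ idealGen A := fun a ha =>
    Submodule.mem_sInf.mpr fun W hW => hW.2 ha
  -- the candidate ideal
  set P : Submodule ℝ V :=
    { carrier := {v | ∃ x, x ∈ idealGen A ∧ -x ≤ v ∧ v ≤ x}
      zero_mem' := ⟨0, Submodule.zero_mem _, by simp, le_refl 0⟩
      add_mem' := by
        rintro u w ⟨x, hx, hx1, hx2⟩ ⟨y, hy, hy1, hy2⟩
        exact ⟨x + y, Submodule.add_mem _ hx hy, by
          rw [neg_add]; exact add_le_add hx1 hy1, add_le_add hx2 hy2⟩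
      smul_mem' := by
        rintro c v ⟨x, hx, hx1, hx2⟩
        refine ⟨|c| • x, Submodule.smul_mem _ _ hx, ?_, ?_⟩
        · rcases le_or_gt 0 c with hc | hc
          · rw [abs_of_nonneg hc, ← smul_neg]
            exact smul_le_smul_of_nonneg_left hx1 hc
          · rw [abs_of_neg hc, ← smul_neg, show c • v = (-c) • (-v) by
              rw [neg_smul, smul_neg, neg_neg]]
            exact smul_le_smul_of_nonneg_left (neg_le_neg hx2) (by linarith)
        · rcases le_or_gt 0 c with hc | hc
          · rw [abs_of_nonneg hc]
            exact smul_le_smul_of_nonneg_left hx2 hc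
          · rw [abs_of_neg hc, show c • v = (-c) • (-v) by
              rw [neg_smul, smul_neg, neg_neg]]
            exact smul_le_smul_of_nonneg_left (by simpa using neg_le_neg hx1) (by linarith) } with hP
  have hPideal : IsIdeal P := by
    rintro w w' v ⟨x, hx, hx1, hx2⟩ ⟨y, hy, hy1, hy2⟩ h1 h2
    have hx0 : 0 ≤ x := nonneg_of_symm_bound (hx1.trans hx2)
    have hy0 : 0 ≤ y := nonneg_of_symm_bound (hy1.trans hy2)
    refine ⟨x + y, Submodule.add_mem _ hx hy, ?_, ?_⟩
    · calc -(x + y) ≤ -x := by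
            rw [neg_add]; exact add_le_of_nonpos_right (neg_nonpos_of_nonneg hy0)
        _ ≤ w := hx1
        _ ≤ v := h1
    · calc v ≤ w' := h2
        _ ≤ y := hy2
        _ ≤ x + y := le_add_of_nonneg_left hx0
  have hPA : A ⊆ (P : Set V) := fun a ha =>
    ⟨a, hAsub a ha, (neg_nonpos_of_nonneg (hA a ha)).trans (hA a ha), le_refl a⟩
  have hle : idealGen A ≤ P := sInf_le ⟨hPideal, hPA⟩
  intro v hv
  obtain ⟨x, hx, hx1, hx2⟩ := hle hv
  refine ⟨(1/2 : ℝ) • (x + v), (1/2 : ℝ) • (x - v), ?_, ?_, ?_, ?_, ?_⟩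
  · exact Submodule.smul_mem _ _ (Submodule.add_mem _ hx hv)
  · exact Submodule.smul_mem _ _ (Submodule.sub_mem _ hx hv)
  · exact smul_nonneg (by norm_num) (by simpa using add_le_add_right hx1 x)
  · exact smul_nonneg (by norm_num) (sub_nonneg.mpr hx2)
  · module
end

section
/- Let r be a vector pricing on an ordered vector space V and v ∈ V⁺ nonzero. Then r(t·u, v) = t·r(u, v) for all t ∈ ℝ with t > 0 and all u ∈ V⁺. -/
open scoped ENNReal

/-- A vector pricing on an ordered vector space `V`: a map `r : V⁺ × V⁺ → [0, +∞]`
satisfying additivity in the first variable (VP1), the cocycle identity when not of the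
indeterminate form `0·∞` (VP2), and the normalization `r(u,u) = 1` (VP3).
It is encoded as a total map on `V × V` whose axioms are imposed on positive vectors. -/
structure VectorPricing (V : Type*) [AddCommGroup V] [PartialOrder V] [Module ℝ V] where
  r : V → V → ℝ≥0∞
  add : ∀ u v w : V, 0 ≤ u → 0 ≤ v → 0 ≤ w → w ≠ 0 → r (u + v) w = r u w + r v w
  cocycle : ∀ u v w : V, 0 ≤ u → 0 ≤ v → 0 ≤ w →
      ¬((r u v = 0 ∧ r v w = ⊤) ∨ (r u v = ⊤ ∧ r v w = 0)) → r u w = r u v * r v w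
  one : ∀ u : V, 0 ≤ u → r u u = 1

section Aux

variable {V : Type*} [AddCommGroup V] [PartialOrder V]
    [IsOrderedAddMonoid V] [Module ℝ V]
    [PosSMulStrictMono ℝ V] [PosSMulReflectLT ℝ V]
  (r : VectorPricing V) (v : V)

/-- Monotonicity in the first variable on the positive cone. -/
lemma VectorPricing.mono_left (hv : 0 ≤ v) (hv0 : v ≠ 0) {u u' : V}
    (hu : 0 ≤ u) (huu' : u ≤ u') : r.r u v ≤ r.r u' v := by
  have h0 : 0 ≤ u' - u := sub_nonneg.2 huu'
  have : r.r u' v = r.r u v + r.r (u' - u) v := by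
    have := r.add u (u' - u) v hu h0 hv hv0
    rwa [add_sub_cancel] at this
  rw [this]; exact le_self_add

/-- Natural homogeneity (for `n ≥ 1`). -/
lemma VectorPricing.nat_smul_left (hv : 0 ≤ v) (hv0 : v ≠ 0) (u : V) (hu : 0 ≤ u) :
    ∀ n : ℕ, 1 ≤ n → r.r ((n : ℝ) • u) v = (n : ℝ≥0∞) * r.r u v := by
  intro n hn
  induction n with
  | zero => omega
  | succ m ih =>
    rcases Nat.eq_or_lt_of_le hn with h | h
    · simp [← h]
    · have hm : 1 ≤ m := by omega
      have hmu : (0 : V) ≤ (m : ℝ) • u := smul_nonneg (by positivity) hu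
      have hsplit : ((m + 1 : ℕ) : ℝ) • u = (m : ℝ) • u + u := by
        push_cast; rw [add_smul, one_smul]
      rw [hsplit, r.add _ _ _ hmu hu hv hv0, ih hm]
      push_cast
      ring

/-- Rational homogeneity. -/
lemma VectorPricing.rat_smul_left (hv : 0 ≤ v) (hv0 : v ≠ 0) (u : V) (hu : 0 ≤ u)
    (q : ℚ) (hq : 0 < q) :
    r.r ((q : ℝ) • u) v = ENNReal.ofReal (q : ℝ) * r.r u v := by
  set p : ℕ := q.num.toNat with hp
  set d : ℕ := q.den with hd
  have hp1 : 1 ≤ p := by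
    have : 0 < q.num := Rat.num_pos.2 hq
    omega
  have hd1 : 1 ≤ d := q.pos
  have hqu : (0 : V) ≤ (q : ℝ) • u := smul_nonneg (by positivity) hu
  have key : r.r ((d : ℝ) • ((q : ℝ) • u)) v = (d : ℝ≥0∞) * r.r ((q : ℝ) • u) v :=
    r.nat_smul_left v hv hv0 _ hqu d hd1
  have hden : ((q.den : ℝ)) ≠ 0 := Nat.cast_ne_zero.mpr q.pos.ne'
  have h1 : ((p : ℕ) : ℝ) = (q.num : ℝ) := by
    exact_mod_cast congrArg (Int.cast : ℤ → ℝ) (Int.toNat_of_nonneg (Rat.num_pos.2 hq).le)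
  have h2 : (q : ℝ) = (q.num : ℝ) / (q.den : ℝ) := by
    exact_mod_cast (Rat.num_div_den q).symm
  have hreal : (d : ℝ) * (q : ℝ) = (p : ℝ) := by
    rw [h1, h2, hd]; field_simp
  have hvec : (d : ℝ) • ((q : ℝ) • u) = (p : ℝ) • u := by
    rw [smul_smul, hreal]
  rw [hvec, r.nat_smul_left v hv hv0 u hu p hp1] at key
  have hd0 : (d : ℝ≥0∞) ≠ 0 := Nat.cast_ne_zero.mpr (by omega)
  have hdt : (d : ℝ≥0∞) ≠ ⊤ := ENNReal.natCast_ne_top d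
  have hcast : (d : ℝ≥0∞) * ENNReal.ofReal (q : ℝ) = (p : ℝ≥0∞) := by
    rw [show ((d : ℝ≥0∞)) = ENNReal.ofReal (d : ℝ) by simp,
      ← ENNReal.ofReal_mul (by positivity),
      show ((p : ℝ≥0∞)) = ENNReal.ofReal (p : ℝ) by simp]
    rw [hreal]
  apply (ENNReal.mul_right_inj hd0 hdt).mp
  rw [← key, ← mul_assoc, hcast]

end Aux

/-- (VP8) Positive homogeneity of a vector pricing in the first variable:
`r(t·u, v) = t·r(u, v)` for real `t > 0`. -/
theorem VectorPricing.smul_left {V : Type*} [AddCommGroup V] [PartialOrder V]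
    [IsOrderedAddMonoid V] [Module ℝ V]
    [PosSMulStrictMono ℝ V] [PosSMulReflectLT ℝ V] (r : VectorPricing V) (v : V) (hv : 0 ≤ v) (hv0 : v ≠ 0) :
    ∀ (t : ℝ), 0 < t → ∀ u : V, 0 ≤ u →
      r.r (t • u) v = ENNReal.ofReal t * r.r u v := by
  intro t ht u hu
  have htu : (0 : V) ≤ t • u := smul_nonneg ht.le hu
  -- scalar monotonicity of smul on the nonneg cone
  have smono : ∀ a b : ℝ, 0 ≤ a → a ≤ b → a • u ≤ b • u := by
    intro a b ha hab
    have h1 : (0 : V) ≤ (b - a) • u := smul_nonneg (sub_nonneg.2 hab) hu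
    have h2 : (b - a) • u = b • u - a • u := sub_smul b a u
    rw [h2, sub_nonneg] at h1
    exact h1
  -- upper bound via rationals above t
  have upper : ∀ q : ℚ, t ≤ (q : ℝ) →
      r.r (t • u) v ≤ ENNReal.ofReal (q : ℝ) * r.r u v := by
    intro q hq
    have hq0 : (0 : ℚ) < q := by exact_mod_cast lt_of_lt_of_le ht hq
    rw [← r.rat_smul_left v hv hv0 u hu q hq0]
    exact r.mono_left v hv hv0 htu (smono t q ht.le hq)
  -- lower bound via rationals below t
  have lower : ∀ q : ℚ, 0 < q → (q : ℝ) ≤ t →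
      ENNReal.ofReal (q : ℝ) * r.r u v ≤ r.r (t • u) v := by
    intro q hq0 hq
    rw [← r.rat_smul_left v hv hv0 u hu q hq0]
    have hqu : (0 : V) ≤ (q : ℝ) • u := smul_nonneg (by positivity) hu
    exact r.mono_left v hv hv0 hqu (smono q t (by positivity) hq)
  rcases eq_or_ne (r.r u v) 0 with h0 | h0
  · obtain ⟨q, hq⟩ := exists_rat_gt t
    have := upper q hq.le
    rw [h0, mul_zero] at this ⊢
    exact le_antisymm this zero_le
  rcases eq_or_ne (r.r u v) ⊤ with htop | htop
  · obtain ⟨q, hq1, hq2⟩ := exists_rat_btwn ht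
    have hq0 : (0 : ℚ) < q := by exact_mod_cast hq1
    have := lower q hq0 hq2.le
    rw [htop, ENNReal.mul_top (by simp [ENNReal.ofReal_eq_zero]; exact_mod_cast hq0)] at this
    rw [htop, ENNReal.mul_top (by simp [ENNReal.ofReal_eq_zero]; exact ht)]
    exact le_antisymm le_top this
  -- finite nonzero case
  · set c := r.r u v with hc
    have hcfin : c ≠ ⊤ := htop
    have hc0 : c ≠ 0 := h0
    -- r (t•u) v is finite
    obtain ⟨q', hq'⟩ := exists_rat_gt t
    have hfin : r.r (t • u) v ≠ ⊤ := by
      intro habs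
      have := upper q' hq'.le
      rw [habs] at this
      exact (ENNReal.mul_ne_top ENNReal.ofReal_ne_top hcfin) (top_le_iff.mp this)
    set a : ℝ := (r.r (t • u) v).toReal with ha
    set c' : ℝ := c.toReal with hc'
    have hc'pos : 0 < c' := ENNReal.toReal_pos hc0 hcfin
    have ha0 : 0 ≤ a := ENNReal.toReal_nonneg
    have upperR : ∀ q : ℚ, t ≤ (q : ℝ) → a ≤ (q : ℝ) * c' := by
      intro q hq
      have := upper q hq
      have hq0 : (0 : ℝ) ≤ (q : ℝ) := le_trans ht.le hq
      have := ENNReal.toReal_le_toReal hfin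
        (ENNReal.mul_ne_top ENNReal.ofReal_ne_top hcfin) |>.2 this
      rwa [ENNReal.toReal_mul, ENNReal.toReal_ofReal hq0] at this
    have lowerR : ∀ q : ℚ, 0 < q → (q : ℝ) ≤ t → (q : ℝ) * c' ≤ a := by
      intro q hq0 hq
      have := lower q hq0 hq
      have := ENNReal.toReal_le_toReal
        (ENNReal.mul_ne_top ENNReal.ofReal_ne_top hcfin) hfin |>.2 this
      rwa [ENNReal.toReal_mul, ENNReal.toReal_ofReal (by positivity)] at this
    have hale : a ≤ t * c' := by
      by_contra habs
      push_neg at habs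
      have : t < a / c' := (lt_div_iff₀ hc'pos).2 (by linarith)
      obtain ⟨q, hq1, hq2⟩ := exists_rat_btwn this
      have := upperR q hq1.le
      have : a < a := lt_of_le_of_lt this (by
        rw [← lt_div_iff₀ hc'pos]; exact hq2)
      exact lt_irrefl _ this
    have hage : t * c' ≤ a := by
      by_contra habs
      push_neg at habs
      have h1 : a / c' < t := (div_lt_iff₀ hc'pos).2 (by linarith)
      obtain ⟨q, hq1, hq2⟩ := exists_rat_btwn h1
      have hq0 : (0 : ℚ) < q := by
        have : (0 : ℝ) ≤ a / c' := by positivity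
        exact_mod_cast lt_of_le_of_lt this hq1
      have := lowerR q hq0 hq2.le
      have : a < a := lt_of_lt_of_le ((div_lt_iff₀ hc'pos).1 hq1) this
      exact lt_irrefl _ this
    have haeq : a = t * c' := le_antisymm hale hage
    have : r.r (t • u) v = ENNReal.ofReal a := (ENNReal.ofReal_toReal hfin).symm
    rw [this, haeq, ENNReal.ofReal_mul ht.le, hc', ENNReal.ofReal_toReal hcfin]
end

section
/- Let P be a conditional mean on an ordered vector space V. Then the formula r_P(u, v) = P(u | u+v) / P(v | u+v), for u, v ∈ V⁺ with v ≠ 0 (extended by r_P(0,0)=1 and r_P(u,0)=+∞ for u≠0), is well defined with values in [0, +∞] and defines a vector pricing on V. -/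
open scoped ENNReal

/-- A conditional mean on an ordered vector space `V`: a `[0,1]`-valued function
`P(u | v)` defined on pairs `0 ≤ u ≤ v ≠ 0`, additive in the first argument (CM1),
multiplicative along inclusions (CM2), and normalized (CM3).  It is encoded as a total
map whose axioms are imposed on its intended domain. -/
structure ConditionalMean (V : Type*) [AddCommGroup V] [PartialOrder V] [Module ℝ V] where
  P : V → V → ℝ
  nonneg : ∀ u v : V, 0 ≤ u → u ≤ v → v ≠ 0 → 0 ≤ P u v
  le_one : ∀ u v : V, 0 ≤ u → u ≤ v → v ≠ 0 → P u v ≤ 1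
  add : ∀ u₁ u₂ w : V, 0 ≤ u₁ → 0 ≤ u₂ → u₁ + u₂ ≤ w → w ≠ 0 →
      P (u₁ + u₂) w = P u₁ w + P u₂ w
  trans : ∀ u v w : V, 0 ≤ u → u ≤ v → v ≤ w → v ≠ 0 → P u w = P u v * P v w
  one : ∀ u : V, 0 ≤ u → u ≠ 0 → P u u = 1

open Classical

set_option linter.unusedSectionVars false

section Aux

variable {V : Type*} [AddCommGroup V] [PartialOrder V] [IsOrderedAddMonoid V] [Module ℝ V] (P : ConditionalMean V)

private lemma aux_sum_ne_zero {u v : V} (hu : 0 ≤ u) (hv : 0 ≤ v) (hv0 : v ≠ 0) :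
    u + v ≠ 0 := by
  intro h
  have hvu : v = -u := eq_neg_of_add_eq_zero_left (by rwa [add_comm])
  have : v ≤ 0 := hvu ▸ neg_nonpos_of_nonneg hu
  exact hv0 (le_antisymm this hv)

private lemma aux_partition {u v : V} (hu : 0 ≤ u) (hv : 0 ≤ v) (hs : u + v ≠ 0) :
    P.P u (u + v) + P.P v (u + v) = 1 := by
  rw [← P.add u v (u + v) hu hv le_rfl hs]
  exact P.one _ (add_nonneg hu hv) hs

private lemma aux_zero {v : V} (hv : 0 ≤ v) (hv0 : v ≠ 0) : P.P 0 v = 0 := by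
  have h := P.add 0 0 v le_rfl le_rfl (by simpa using hv) hv0
  simp only [add_zero] at h
  linarith

/-- The pricing quotient associated to a conditional mean. -/
noncomputable def qr (P : ConditionalMean V) : V → V → ℝ≥0∞ := fun u v =>
  if v = 0 then (if u = 0 then 1 else ⊤)
  else ENNReal.ofReal (P.P u (u + v)) / ENNReal.ofReal (P.P v (u + v))

private lemma qr_eq {u v T : V} (hu : 0 ≤ u) (hv : 0 ≤ v) (hv0 : v ≠ 0)
    (hle : u + v ≤ T) (hne : P.P (u + v) T ≠ 0) :
    qr P u v = ENNReal.ofReal (P.P u T) / ENNReal.ofReal (P.P v T) := by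
  have hs : u + v ≠ 0 := aux_sum_ne_zero hu hv hv0
  have hT0 : T ≠ 0 := by
    intro h; subst h; exact hs (le_antisymm hle (add_nonneg hu hv))
  have h1 : P.P u T = P.P u (u + v) * P.P (u + v) T :=
    P.trans u (u + v) T hu (le_add_of_nonneg_right hv) hle hs
  have h2 : P.P v T = P.P v (u + v) * P.P (u + v) T :=
    P.trans v (u + v) T hv (le_add_of_nonneg_left hu) hle hs
  have hcn : 0 ≤ P.P (u + v) T := P.nonneg _ _ (add_nonneg hu hv) hle hT0
  have hpos : 0 < P.P (u + v) T := lt_of_le_of_ne hcn (Ne.symm hne)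
  have hc0 : ENNReal.ofReal (P.P (u + v) T) ≠ 0 := (ENNReal.ofReal_pos.2 hpos).ne'
  simp only [qr, if_neg hv0]
  rw [h1, h2,
    ENNReal.ofReal_mul (P.nonneg u (u + v) hu (le_add_of_nonneg_right hv) hs),
    ENNReal.ofReal_mul (P.nonneg v (u + v) hv (le_add_of_nonneg_left hu) hs),
    ENNReal.mul_div_mul_right _ _ hc0 ENNReal.ofReal_ne_top]

end Aux

/-- Given a conditional mean `P`, the quotients `P(u | u+v) / P(v | u+v)` are well defined
(the numerator and denominator cannot both vanish) and the resulting map `r_P` is a vector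
pricing on `V`. -/
theorem conditionalMean_to_vectorPricing {V : Type*} [AddCommGroup V] [PartialOrder V] [IsOrderedAddMonoid V]
    [Module ℝ V]
    [PosSMulStrictMono ℝ V] [PosSMulReflectLT ℝ V] (P : ConditionalMean V) :
    (∀ u v : V, 0 ≤ u → 0 ≤ v → v ≠ 0 →
      ¬(P.P u (u + v) = 0 ∧ P.P v (u + v) = 0)) ∧
    (∃ R : VectorPricing V, ∀ u v : V, 0 ≤ u → 0 ≤ v →
      R.r u v = if v = 0 then (if u = 0 then 1 else ⊤)
        else ENNReal.ofReal (P.P u (u + v)) / ENNReal.ofReal (P.P v (u + v))) := by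
  constructor
  · rintro u v hu hv hv0 ⟨h1, h2⟩
    have := aux_partition P hu hv (aux_sum_ne_zero hu hv hv0)
    rw [h1, h2] at this
    norm_num at this
  refine ⟨⟨qr P, ?_, ?_, ?_⟩, fun u v _ _ => rfl⟩
  · -- VP1 : additivity
    intro u v w hu hv hw hw0
    have huv : 0 ≤ u + v := add_nonneg hu hv
    have hT0 : u + v + w ≠ 0 := aux_sum_ne_zero huv hw hw0
    have huwle : u + w ≤ u + v + w := add_le_add_left (le_add_of_nonneg_right hv) w
    have hvwle : v + w ≤ u + v + w := add_le_add_left (le_add_of_nonneg_left hu) w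
    have hule : u ≤ u + v + w := (le_add_of_nonneg_right hv).trans (le_add_of_nonneg_right hw)
    have hvle : v ≤ u + v + w := (le_add_of_nonneg_left hu).trans (le_add_of_nonneg_right hw)
    have hpart := aux_partition P huv hw hT0
    have hsplit : P.P (u + v) (u + v + w) = P.P u (u + v + w) + P.P v (u + v + w) :=
      P.add u v _ hu hv (le_add_of_nonneg_right hw) hT0
    have hwnn : 0 ≤ P.P w (u + v + w) := P.nonneg w _ hw (le_add_of_nonneg_left huv) hT0
    have hunn : 0 ≤ P.P u (u + v + w) := P.nonneg u _ hu hule hT0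
    have hvnn : 0 ≤ P.P v (u + v + w) := P.nonneg v _ hv hvle hT0
    by_cases hc : P.P w (u + v + w) = 0
    · have huv1 : P.P (u + v) (u + v + w) = 1 := by linarith
      have hL : qr P (u + v) w = ⊤ := by
        simp only [qr, if_neg hw0]
        rw [huv1, hc, ENNReal.ofReal_one, ENNReal.ofReal_zero, ENNReal.div_zero one_ne_zero]
      have hkey : P.P w (u + w) = 0 ∨ P.P w (v + w) = 0 := by
        by_contra hcon
        push_neg at hcon
        obtain ⟨h1, h2⟩ := hcon
        have huw0 : u + w ≠ 0 := aux_sum_ne_zero hu hw hw0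
        have hvw0 : v + w ≠ 0 := aux_sum_ne_zero hv hw hw0
        have hc1 := hc
        have hc2 := hc
        rw [P.trans w (u + w) _ hw (le_add_of_nonneg_left hu) huwle huw0] at hc1
        rw [P.trans w (v + w) _ hw (le_add_of_nonneg_left hv) hvwle hvw0] at hc2
        have f1 : P.P (u + w) (u + v + w) = 0 := (mul_eq_zero.1 hc1).resolve_left h1
        have f2 : P.P (v + w) (u + v + w) = 0 := (mul_eq_zero.1 hc2).resolve_left h2
        rw [P.add u w _ hu hw huwle hT0] at f1
        rw [P.add v w _ hv hw hvwle hT0] at f2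
        have : P.P u (u + v + w) = 0 := by linarith
        have : P.P v (u + v + w) = 0 := by linarith
        linarith
      rw [hL]
      rcases hkey with h | h
      · have h1 : qr P u w = ⊤ := by
          have hpu := aux_partition P hu hw (aux_sum_ne_zero hu hw hw0)
          have hu1 : P.P u (u + w) = 1 := by linarith
          simp only [qr, if_neg hw0]
          rw [hu1, h, ENNReal.ofReal_one, ENNReal.ofReal_zero, ENNReal.div_zero one_ne_zero]
        rw [h1, top_add]
      · have h2 : qr P v w = ⊤ := by
          have hpv := aux_partition P hv hw (aux_sum_ne_zero hv hw hw0)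
          have hv1 : P.P v (v + w) = 1 := by linarith
          simp only [qr, if_neg hw0]
          rw [hv1, h, ENNReal.ofReal_one, ENNReal.ofReal_zero, ENNReal.div_zero one_ne_zero]
        rw [h2, add_top]
    · have hL : qr P (u + v) w
          = ENNReal.ofReal (P.P (u + v) (u + v + w)) / ENNReal.ofReal (P.P w (u + v + w)) := by
        simp only [qr, if_neg hw0]
      have h1 : qr P u w
          = ENNReal.ofReal (P.P u (u + v + w)) / ENNReal.ofReal (P.P w (u + v + w)) := by
        refine qr_eq P hu hw hw0 huwle ?_
        rw [P.add u w _ hu hw huwle hT0]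
        have : 0 < P.P w (u + v + w) := lt_of_le_of_ne hwnn (Ne.symm hc)
        linarith
      have h2 : qr P v w
          = ENNReal.ofReal (P.P v (u + v + w)) / ENNReal.ofReal (P.P w (u + v + w)) := by
        refine qr_eq P hv hw hw0 hvwle ?_
        rw [P.add v w _ hv hw hvwle hT0]
        have : 0 < P.P w (u + v + w) := lt_of_le_of_ne hwnn (Ne.symm hc)
        linarith
      rw [hL, h1, h2, hsplit, ENNReal.ofReal_add hunn hvnn, ENNReal.add_div]
  · -- VP2 : cocycle
    intro u v w hu hv hw hexc
    by_cases hw0 : w = 0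
    · subst hw0
      by_cases hv0 : v = 0
      · subst hv0; simp [qr]
      · have hrvw : qr P v 0 = ⊤ := by simp [qr, hv0]
        have hne : qr P u v ≠ 0 := fun h => hexc (Or.inl ⟨h, hrvw⟩)
        by_cases hu0 : u = 0
        · exfalso
          apply hne
          simp [qr, hv0, hu0, aux_zero P hv hv0]
        · rw [hrvw, ENNReal.mul_top hne]
          simp [qr, hu0]
    · by_cases hv0 : v = 0
      · subst hv0
        have hrvw : qr P 0 w = 0 := by simp [qr, hw0, aux_zero P hw hw0]
        have hne : qr P u 0 ≠ ⊤ := fun h => hexc (Or.inr ⟨h, hrvw⟩)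
        have hu0 : u = 0 := by
          by_contra h; exact hne (by simp [qr, h])
        subst hu0
        have h00 : qr P (0 : V) 0 = 1 := by simp [qr]
        rw [h00, one_mul]
      · -- main case : u, v, w with v ≠ 0, w ≠ 0
        have huv : 0 ≤ u + v := add_nonneg hu hv
        have hT0 : u + v + w ≠ 0 := aux_sum_ne_zero huv hw hw0
        have huvle : u + v ≤ u + v + w := le_add_of_nonneg_right hw
        have huwle : u + w ≤ u + v + w := add_le_add_left (le_add_of_nonneg_right hv) w
        have hvwle : v + w ≤ u + v + w := add_le_add_left (le_add_of_nonneg_left hu) w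
        have hule : u ≤ u + v + w := (le_add_of_nonneg_right hv).trans (le_add_of_nonneg_right hw)
        have hvle : v ≤ u + v + w := (le_add_of_nonneg_left hu).trans (le_add_of_nonneg_right hw)
        have hwle : w ≤ u + v + w := le_add_of_nonneg_left huv
        have hunn : 0 ≤ P.P u (u + v + w) := P.nonneg u _ hu hule hT0
        have hvnn : 0 ≤ P.P v (u + v + w) := P.nonneg v _ hv hvle hT0
        have hwnn : 0 ≤ P.P w (u + v + w) := P.nonneg w _ hw hwle hT0
        have hpart := aux_partition P huv hw hT0
        have hab : P.P (u + v) (u + v + w) = P.P u (u + v + w) + P.P v (u + v + w) :=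
          P.add u v _ hu hv huvle hT0
        have hac : P.P (u + w) (u + v + w) = P.P u (u + v + w) + P.P w (u + v + w) :=
          P.add u w _ hu hw huwle hT0
        have hbc : P.P (v + w) (u + v + w) = P.P v (u + v + w) + P.P w (u + v + w) :=
          P.add v w _ hv hw hvwle hT0
        have habc : P.P u (u + v + w) + P.P v (u + v + w) + P.P w (u + v + w) = 1 := by
          linarith
        by_cases hac0 : P.P (u + w) (u + v + w) = 0
        · -- a = c = 0, b = 1 : excluded by hypothesis
          exfalso
          have ha : P.P u (u + v + w) = 0 := by linarith
          have hcc : P.P w (u + v + w) = 0 := by linarith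
          have hb : P.P v (u + v + w) = 1 := by linarith
          have e1 : qr P u v = 0 := by
            rw [qr_eq P hu hv hv0 huvle (by linarith), ha, hb, ENNReal.ofReal_zero, ENNReal.zero_div]
          have e2 : qr P v w = ⊤ := by
            rw [qr_eq P hv hw hw0 hvwle (by linarith), hb, hcc, ENNReal.ofReal_one,
              ENNReal.ofReal_zero, ENNReal.div_zero one_ne_zero]
          exact hexc (Or.inl ⟨e1, e2⟩)
        · have euw : qr P u w
              = ENNReal.ofReal (P.P u (u + v + w)) / ENNReal.ofReal (P.P w (u + v + w)) :=
            qr_eq P hu hw hw0 huwle hac0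
          by_cases hab0 : P.P (u + v) (u + v + w) = 0
          · -- a = b = 0, c = 1
            have ha : P.P u (u + v + w) = 0 := by linarith
            have hb : P.P v (u + v + w) = 0 := by linarith
            have hcc : P.P w (u + v + w) = 1 := by linarith
            have e2 : qr P v w = 0 := by
              rw [qr_eq P hv hw hw0 hvwle (by linarith), hb, ENNReal.ofReal_zero, ENNReal.zero_div]
            rw [euw, ha, ENNReal.ofReal_zero, ENNReal.zero_div, e2, mul_zero]
          · have euv : qr P u v
                = ENNReal.ofReal (P.P u (u + v + w)) / ENNReal.ofReal (P.P v (u + v + w)) :=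
              qr_eq P hu hv hv0 huvle hab0
            by_cases hbc0 : P.P (v + w) (u + v + w) = 0
            · -- b = c = 0, a = 1
              have hb : P.P v (u + v + w) = 0 := by linarith
              have hcc : P.P w (u + v + w) = 0 := by linarith
              have ha : P.P u (u + v + w) = 1 := by linarith
              have e1 : qr P u v = ⊤ := by
                rw [euv, ha, hb, ENNReal.ofReal_one, ENNReal.ofReal_zero,
                  ENNReal.div_zero one_ne_zero]
              have hne : qr P v w ≠ 0 := fun h => hexc (Or.inr ⟨e1, h⟩)
              rw [euw, ha, hcc, ENNReal.ofReal_one, ENNReal.ofReal_zero,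
                ENNReal.div_zero one_ne_zero, e1, ENNReal.top_mul hne]
            · have evw : qr P v w
                  = ENNReal.ofReal (P.P v (u + v + w)) / ENNReal.ofReal (P.P w (u + v + w)) :=
                qr_eq P hv hw hw0 hvwle hbc0
              by_cases hb : P.P v (u + v + w) = 0
              · -- b = 0 with a ≠ 0 and c ≠ 0 : excluded
                exfalso
                have ha : P.P u (u + v + w) ≠ 0 := by rw [hab, hb] at hab0; simpa using hab0
                have hcc : P.P w (u + v + w) ≠ 0 := by rw [hbc, hb] at hbc0; simpa using hbc0
                have e1 : qr P u v = ⊤ := by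
                  rw [euv, hb, ENNReal.ofReal_zero]
                  exact ENNReal.div_zero ((ENNReal.ofReal_pos.2 (lt_of_le_of_ne hunn (Ne.symm ha))).ne')
                have e2 : qr P v w = 0 := by
                  rw [evw, hb, ENNReal.ofReal_zero, ENNReal.zero_div]
                exact hexc (Or.inr ⟨e1, e2⟩)
              · -- generic case : cancel b
                have hbpos : 0 < P.P v (u + v + w) := lt_of_le_of_ne hvnn (Ne.symm hb)
                have hb0 : ENNReal.ofReal (P.P v (u + v + w)) ≠ 0 :=
                  (ENNReal.ofReal_pos.2 hbpos).ne'
                rw [euw, euv, evw]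
                rw [div_eq_mul_inv, div_eq_mul_inv, div_eq_mul_inv]
                calc ENNReal.ofReal (P.P u (u + v + w)) * (ENNReal.ofReal (P.P w (u + v + w)))⁻¹
                    = ENNReal.ofReal (P.P u (u + v + w)) *
                      ((ENNReal.ofReal (P.P v (u + v + w)))⁻¹ * ENNReal.ofReal (P.P v (u + v + w))) *
                      (ENNReal.ofReal (P.P w (u + v + w)))⁻¹ := by
                      rw [ENNReal.inv_mul_cancel hb0 ENNReal.ofReal_ne_top, mul_one]
                  _ = ENNReal.ofReal (P.P u (u + v + w)) * (ENNReal.ofReal (P.P v (u + v + w)))⁻¹ *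
                      (ENNReal.ofReal (P.P v (u + v + w)) * (ENNReal.ofReal (P.P w (u + v + w)))⁻¹) := by
                      ring
  · -- VP3 : normalization
    intro u hu
    by_cases h0 : u = 0
    · simp [qr, h0]
    · have hs : u + u ≠ 0 := aux_sum_ne_zero hu hu h0
      have hpart := aux_partition P hu hu hs
      have hhalf : P.P u (u + u) = 1 / 2 := by linarith
      simp only [qr, if_neg h0]
      refine ENNReal.div_self ?_ ENNReal.ofReal_ne_top
      rw [hhalf]
      simp [ENNReal.ofReal_eq_zero]
end

section
/- The assignments r ↦ P_r (restriction of a vector pricing to pairs 0 ≤ u ≤ v ≠ 0) and P ↦ r_P (with r_P(u,v) = P(u|u+v)/P(v|u+v)) are mutually inverse bijections between vector pricings and conditional means on an ordered vector space V. -/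
open scoped ENNReal

/-- `OrderedSMul R M` as in the older Mathlib (removed since): scalar multiplication by
positive elements is strictly monotone and strictly reflects `<`. -/
class OrderedSMul (R M : Type*) [Semiring R] [PartialOrder R] [AddCommMonoid M]
    [PartialOrder M] [SMulWithZero R M] : Prop where
  protected smul_lt_smul_of_pos : ∀ {a b : M} {c : R}, a < b → 0 < c → c • a < c • b
  protected lt_of_smul_lt_smul_of_pos : ∀ {a b : M} {c : R}, c • a < c • b → 0 < c → a < b

/-- The assignments `r ↦ P_r` (restriction of a vector pricing to pairs `0 ≤ u ≤ v ≠ 0`)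
and `P ↦ r_P` (with `r_P(u,v) = P(u|u+v)/P(v|u+v)`) are mutually inverse: applying one
after the other returns the original data on its domain of definition. -/
theorem vectorPricing_conditionalMean_inverse {V : Type*} [AddCommGroup V] [PartialOrder V]
    [IsOrderedAddMonoid V] [Module ℝ V] [OrderedSMul ℝ V] :
    (∀ R : VectorPricing V, ∀ u v : V, 0 ≤ u → 0 ≤ v → v ≠ 0 →
      R.r u v = ENNReal.ofReal (R.r u (u + v)).toReal /
        ENNReal.ofReal (R.r v (u + v)).toReal) ∧
    (∀ P : ConditionalMean V, ∀ u v : V, 0 ≤ u → u ≤ v → v ≠ 0 →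
      P.P u v = (ENNReal.ofReal (P.P u (u + v)) /
        ENNReal.ofReal (P.P v (u + v))).toReal) := by

  constructor
  · intro R u v hu hv hv0
    set w := u + v with hw
    have hw0 : 0 ≤ w := add_nonneg hu hv
    have hwne : w ≠ 0 := by
      intro h
      have hvle : v ≤ w := le_add_of_nonneg_left hu
      exact hv0 (le_antisymm (h ▸ hvle) hv)
    have hsum : R.r u w + R.r v w = 1 := by
      rw [← R.add u v w hu hv hw0 hwne, ← hw, R.one w hw0]
    have huT : R.r u w ≠ ⊤ := by
      intro h; rw [h, top_add] at hsum; exact ENNReal.top_ne_one hsum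
    have hvT : R.r v w ≠ ⊤ := by
      intro h; rw [h, add_top] at hsum; exact ENNReal.top_ne_one hsum
    rw [ENNReal.ofReal_toReal huT, ENNReal.ofReal_toReal hvT]
    by_cases h0 : R.r v w = 0
    · have hu1 : R.r u w = 1 := by rwa [h0, add_zero] at hsum
      have hwvT : R.r w v = ⊤ := by
        by_contra hne
        have hc : R.r w w = R.r w v * R.r v w := by
          apply R.cocycle w v w hw0 hv hw0
          rintro (⟨_, h⟩ | ⟨h, _⟩)
          · rw [h0] at h; simp at h
          · exact hne h
        rw [R.one w hw0, h0, mul_zero] at hc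
        exact one_ne_zero hc
      have huv : R.r u v = R.r u w * R.r w v := by
        apply R.cocycle u w v hu hw0 hv
        rw [hu1]
        rintro (⟨h, _⟩ | ⟨h, _⟩)
        · exact one_ne_zero h
        · exact ENNReal.one_ne_top h
      rw [huv, hu1, hwvT, one_mul, h0]
      simp [ENNReal.div_zero]
    · have hc : R.r u w = R.r u v * R.r v w := by
        apply R.cocycle u v w hu hv hw0
        rintro (⟨_, h⟩ | ⟨_, h⟩)
        · exact hvT h
        · exact h0 h
      rw [hc, div_eq_mul_inv, mul_assoc, ENNReal.mul_inv_cancel h0 hvT, mul_one]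
  · intro P u v hu huv hv0
    set w := u + v with hw
    have hv : 0 ≤ v := le_trans hu huv
    have hvw : v ≤ w := le_add_of_nonneg_left hu
    have hw0 : 0 ≤ w := add_nonneg hu hv
    have hwne : w ≠ 0 := by
      intro h
      exact hv0 (le_antisymm (h ▸ hvw) hv)
    have hsum : P.P u w + P.P v w = 1 := by
      rw [← P.add u v w hu hv (le_of_eq hw.symm) hwne, ← hw, P.one w hw0 hwne]
    have htr : P.P u w = P.P u v * P.P v w := P.trans u v w hu huv hvw hv0
    have hvwpos : 0 < P.P v w := by
      rcases lt_or_eq_of_le (P.nonneg v w hv hvw hwne) with h | h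
      · exact h
      · exfalso
        rw [htr, ← h] at hsum
        simp at hsum
    have ha : 0 ≤ P.P u v := P.nonneg u v hu huv hv0
    rw [htr, ENNReal.ofReal_mul ha,
      div_eq_mul_inv, mul_assoc,
      ENNReal.mul_inv_cancel (by simpa using hvwpos) ENNReal.ofReal_ne_top, mul_one,
      ENNReal.toReal_ofReal ha]
end

section
/- Let 𝒞 be a full chain of positive partial functionals on an ordered vector space V, with respect to the strict order (U₁, J₁) ≺ (U₂, J₂) ⇔ U₁ ⊆ ker J₂. Then V admits a unique vector pricing r such that for all (U, J) ∈ 𝒞 and all u, v ∈ U⁺ with J(v) ≠ 0, r(u, v) = J(u)/J(v). -/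
open scoped ENNReal

/-- A positive partial functional on `V`: an ideal `U ⊆ V` together with a nonzero
positive linear functional `J : U → ℝ`. -/
structure PPFunctional (V : Type*) [AddCommGroup V] [PartialOrder V] [Module ℝ V] where
  dom : Submodule ℝ V
  isIdeal : IsIdeal dom
  J : dom →ₗ[ℝ] ℝ
  pos : ∀ u : dom, 0 ≤ (u : V) → 0 ≤ J u
  ne_zero : J ≠ 0

/-- The Rényi-type strict order on positive partial functionals:
`(U₁, J₁) ≺ (U₂, J₂)` iff `U₁ ⊆ ker J₂`. -/
def ppfLT {V : Type*} [AddCommGroup V] [PartialOrder V] [Module ℝ V]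
    (p q : PPFunctional V) : Prop :=
  ∃ h : p.dom ≤ q.dom, ∀ (u : V) (hu : u ∈ p.dom), q.J ⟨u, h hu⟩ = 0

/-- A collection of positive partial functionals is full if every nonzero positive vector
lies in the domain of one of them with nonzero value. -/
def PPFFull {V : Type*} [AddCommGroup V] [PartialOrder V] [Module ℝ V]
    (𝒞 : Set (PPFunctional V)) : Prop :=
  ∀ v : V, 0 ≤ v → v ≠ 0 → ∃ p ∈ 𝒞, ∃ h : v ∈ p.dom, p.J ⟨v, h⟩ ≠ 0


section Aux
variable {V : Type*} [AddCommGroup V] [PartialOrder V] [IsOrderedAddMonoid V] [Module ℝ V]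

theorem myUniq {𝒞 : Set (PPFunctional V)} (hchain : IsChain ppfLT 𝒞)
    {p q : PPFunctional V} (hp : p ∈ 𝒞) (hq : q ∈ 𝒞) {v : V}
    (hvp : v ∈ p.dom) (hvq : v ∈ q.dom)
    (h1 : p.J ⟨v, hvp⟩ ≠ 0) (h2 : q.J ⟨v, hvq⟩ ≠ 0) : p = q := by
  by_contra hne
  rcases hchain hp hq hne with ⟨hle, hk⟩ | ⟨hle, hk⟩
  · exact h2 (hk v hvp)
  · exact h1 (hk v hvq)

noncomputable def myPick (𝒞 : Set (PPFunctional V)) (hfull : PPFFull 𝒞)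
    (v : V) (h1 : 0 ≤ v) (h2 : v ≠ 0) : PPFunctional V :=
  (hfull v h1 h2).choose

theorem myPick_mem (𝒞 : Set (PPFunctional V)) (hfull : PPFFull 𝒞)
    (v : V) (h1 : 0 ≤ v) (h2 : v ≠ 0) : myPick 𝒞 hfull v h1 h2 ∈ 𝒞 :=
  (hfull v h1 h2).choose_spec.1

theorem myPick_dom (𝒞 : Set (PPFunctional V)) (hfull : PPFFull 𝒞)
    (v : V) (h1 : 0 ≤ v) (h2 : v ≠ 0) : v ∈ (myPick 𝒞 hfull v h1 h2).dom :=
  (hfull v h1 h2).choose_spec.2.choose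

theorem myPick_ne (𝒞 : Set (PPFunctional V)) (hfull : PPFFull 𝒞)
    (v : V) (h1 : 0 ≤ v) (h2 : v ≠ 0) :
    (myPick 𝒞 hfull v h1 h2).J ⟨v, myPick_dom 𝒞 hfull v h1 h2⟩ ≠ 0 :=
  (hfull v h1 h2).choose_spec.2.choose_spec

theorem myJ_pos (p : PPFunctional V) {v : V} (hv : v ∈ p.dom) (h0 : 0 ≤ v)
    (hne : p.J ⟨v, hv⟩ ≠ 0) : 0 < p.J ⟨v, hv⟩ :=
  lt_of_le_of_ne (p.pos ⟨v, hv⟩ h0) (Ne.symm hne)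

open Classical in
noncomputable def myPrice (𝒞 : Set (PPFunctional V)) (hfull : PPFFull 𝒞) :
    V → V → ℝ≥0∞ := fun u v =>
  if hv : v = 0 then (if u = 0 then (1 : ℝ≥0∞) else ⊤)
  else if h : 0 ≤ u ∧ 0 ≤ v then
    if hu : u ∈ (myPick 𝒞 hfull v h.2 hv).dom then
      ENNReal.ofReal ((myPick 𝒞 hfull v h.2 hv).J ⟨u, hu⟩ /
        (myPick 𝒞 hfull v h.2 hv).J ⟨v, myPick_dom 𝒞 hfull v h.2 hv⟩)
    else ⊤
  else 0

theorem myPrice_zero_zero (𝒞 : Set (PPFunctional V)) (hfull : PPFFull 𝒞) :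
    myPrice 𝒞 hfull (0 : V) 0 = 1 := by
  simp [myPrice]

theorem myPrice_top_zero (𝒞 : Set (PPFunctional V)) (hfull : PPFFull 𝒞) {u : V}
    (hu : u ≠ 0) : myPrice 𝒞 hfull u 0 = ⊤ := by
  simp [myPrice, hu]

open Classical in
theorem myPrice_def (𝒞 : Set (PPFunctional V)) (hfull : PPFFull 𝒞) {u v : V}
    (h0u : 0 ≤ u) (h0v : 0 ≤ v) (hv0 : v ≠ 0) :
    myPrice 𝒞 hfull u v =
      if hu : u ∈ (myPick 𝒞 hfull v h0v hv0).dom then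
        ENNReal.ofReal ((myPick 𝒞 hfull v h0v hv0).J ⟨u, hu⟩ /
          (myPick 𝒞 hfull v h0v hv0).J ⟨v, myPick_dom 𝒞 hfull v h0v hv0⟩)
      else ⊤ := by
  unfold myPrice
  rw [dif_neg hv0, dif_pos ⟨h0u, h0v⟩]

theorem myPrice_eval (𝒞 : Set (PPFunctional V)) (hchain : IsChain ppfLT 𝒞)
    (hfull : PPFFull 𝒞) {p : PPFunctional V} (hp : p ∈ 𝒞) {u v : V}
    (hu : u ∈ p.dom) (hv : v ∈ p.dom) (h0u : 0 ≤ u) (h0v : 0 ≤ v)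
    (hJv : p.J ⟨v, hv⟩ ≠ 0) :
    myPrice 𝒞 hfull u v = ENNReal.ofReal (p.J ⟨u, hu⟩ / p.J ⟨v, hv⟩) := by
  have hv0 : v ≠ 0 := by
    rintro rfl
    apply hJv
    have : (⟨0, hv⟩ : p.dom) = 0 := rfl
    rw [this, map_zero]
  have hpq : myPick 𝒞 hfull v h0v hv0 = p :=
    myUniq hchain (myPick_mem 𝒞 hfull v h0v hv0) hp
      (myPick_dom 𝒞 hfull v h0v hv0) hv (myPick_ne 𝒞 hfull v h0v hv0) hJv
  rw [myPrice_def 𝒞 hfull h0u h0v hv0]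
  subst hpq
  rw [dif_pos hu]

theorem myPrice_top (𝒞 : Set (PPFunctional V)) (hfull : PPFFull 𝒞) {u v : V}
    (h0u : 0 ≤ u) (h0v : 0 ≤ v) (hv0 : v ≠ 0)
    (hu : u ∉ (myPick 𝒞 hfull v h0v hv0).dom) :
    myPrice 𝒞 hfull u v = ⊤ := by
  rw [myPrice_def 𝒞 hfull h0u h0v hv0, dif_neg hu]

end Aux

section Aux2
variable {V : Type*} [AddCommGroup V] [PartialOrder V] [IsOrderedAddMonoid V] [Module ℝ V]

theorem myPrice_zero_left (𝒞 : Set (PPFunctional V)) (hfull : PPFFull 𝒞) {v : V}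
    (h0v : 0 ≤ v) (hv0 : v ≠ 0) : myPrice 𝒞 hfull 0 v = 0 := by
  rw [myPrice_def 𝒞 hfull le_rfl h0v hv0,
    dif_pos (Submodule.zero_mem (myPick 𝒞 hfull v h0v hv0).dom)]
  have h0 : (⟨0, Submodule.zero_mem (myPick 𝒞 hfull v h0v hv0).dom⟩ :
      (myPick 𝒞 hfull v h0v hv0).dom) = 0 := rfl
  rw [h0, map_zero, zero_div, ENNReal.ofReal_zero]

theorem myJ_congr {p q : PPFunctional V} (h : p = q) {v : V} (hv : v ∈ p.dom) :
    p.J ⟨v, hv⟩ = q.J ⟨v, h ▸ hv⟩ := by subst h; rfl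

end Aux2

/-- Given a full chain `𝒞` of positive partial functionals on `V` (for the order `≺`),
there is a vector pricing `r` on `V` with `r(u, v) = J(u)/J(v)` whenever `(U, J) ∈ 𝒞`,
`u, v ∈ U⁺` and `J(v) ≠ 0`; moreover it is unique (on positive vectors). -/
theorem chain_vectorPricing {V : Type*} [AddCommGroup V] [PartialOrder V]
    [IsOrderedAddMonoid V] [Module ℝ V]
    [PosSMulStrictMono ℝ V] [PosSMulReflectLT ℝ V] (𝒞 : Set (PPFunctional V)) (hchain : IsChain ppfLT 𝒞)
    (hfull : PPFFull 𝒞) :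
    ∃ R : VectorPricing V,
      (∀ p ∈ 𝒞, ∀ u v : V, ∀ (hu : u ∈ p.dom) (hv : v ∈ p.dom), 0 ≤ u → 0 ≤ v →
        p.J ⟨v, hv⟩ ≠ 0 → R.r u v = ENNReal.ofReal (p.J ⟨u, hu⟩ / p.J ⟨v, hv⟩)) ∧
      (∀ R' : VectorPricing V,
        (∀ p ∈ 𝒞, ∀ u v : V, ∀ (hu : u ∈ p.dom) (hv : v ∈ p.dom), 0 ≤ u → 0 ≤ v →
          p.J ⟨v, hv⟩ ≠ 0 → R'.r u v = ENNReal.ofReal (p.J ⟨u, hu⟩ / p.J ⟨v, hv⟩)) →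
        ∀ u v : V, 0 ≤ u → 0 ≤ v → R'.r u v = R.r u v) := by

  classical
  -- Axiom VP1: additivity
  have hadd : ∀ u v w : V, 0 ≤ u → 0 ≤ v → 0 ≤ w → w ≠ 0 →
      myPrice 𝒞 hfull (u + v) w = myPrice 𝒞 hfull u w + myPrice 𝒞 hfull v w := by
    intro u v w h0u h0v h0w hw0
    have hpmem := myPick_mem 𝒞 hfull w h0w hw0
    have hwdom := myPick_dom 𝒞 hfull w h0w hw0
    have hJw := myPick_ne 𝒞 hfull w h0w hw0
    set p := myPick 𝒞 hfull w h0w hw0 with hpdef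
    by_cases hu : u ∈ p.dom
    · by_cases hvd : v ∈ p.dom
      · have hsum : u + v ∈ p.dom := p.dom.add_mem hu hvd
        rw [myPrice_eval 𝒞 hchain hfull hpmem hsum hwdom (add_nonneg h0u h0v) h0w hJw,
            myPrice_eval 𝒞 hchain hfull hpmem hu hwdom h0u h0w hJw,
            myPrice_eval 𝒞 hchain hfull hpmem hvd hwdom h0v h0w hJw]
        have hJsum : p.J ⟨u + v, hsum⟩ = p.J ⟨u, hu⟩ + p.J ⟨v, hvd⟩ := by
          have h1 : (⟨u + v, hsum⟩ : p.dom) = ⟨u, hu⟩ + ⟨v, hvd⟩ := rfl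
          rw [h1, map_add]
        rw [hJsum, add_div,
          ENNReal.ofReal_add
            (div_nonneg (p.pos ⟨u, hu⟩ h0u) (p.pos ⟨w, hwdom⟩ h0w))
            (div_nonneg (p.pos ⟨v, hvd⟩ h0v) (p.pos ⟨w, hwdom⟩ h0w))]
      · have hsum : u + v ∉ p.dom := fun h =>
          hvd (p.isIdeal p.dom.zero_mem h h0v (le_add_of_nonneg_left h0u))
        rw [myPrice_top 𝒞 hfull (add_nonneg h0u h0v) h0w hw0 hsum,
            myPrice_top 𝒞 hfull h0v h0w hw0 hvd, add_top]
    · have hsum : u + v ∉ p.dom := fun h =>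
        hu (p.isIdeal p.dom.zero_mem h h0u (le_add_of_nonneg_right h0v))
      rw [myPrice_top 𝒞 hfull (add_nonneg h0u h0v) h0w hw0 hsum,
          myPrice_top 𝒞 hfull h0u h0w hw0 hu, top_add]
  -- Axiom VP2: cocycle identity
  have hcoc : ∀ u v w : V, 0 ≤ u → 0 ≤ v → 0 ≤ w →
      ¬((myPrice 𝒞 hfull u v = 0 ∧ myPrice 𝒞 hfull v w = ⊤) ∨
        (myPrice 𝒞 hfull u v = ⊤ ∧ myPrice 𝒞 hfull v w = 0)) →
      myPrice 𝒞 hfull u w = myPrice 𝒞 hfull u v * myPrice 𝒞 hfull v w := by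
    intro u v w h0u h0v h0w hne
    by_cases hw0 : w = 0
    · subst hw0
      by_cases hv0 : v = 0
      · subst hv0
        rw [myPrice_zero_zero, mul_one]
      · have hvw : myPrice 𝒞 hfull v 0 = ⊤ := myPrice_top_zero 𝒞 hfull hv0
        have huv : myPrice 𝒞 hfull u v ≠ 0 := fun h => hne (Or.inl ⟨h, hvw⟩)
        have hu0 : u ≠ 0 := by
          rintro rfl
          exact huv (myPrice_zero_left 𝒞 hfull h0v hv0)
        rw [myPrice_top_zero 𝒞 hfull hu0, hvw, ENNReal.mul_top huv]
    · by_cases hv0 : v = 0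
      · subst hv0
        have h0w' : myPrice 𝒞 hfull (0 : V) w = 0 := myPrice_zero_left 𝒞 hfull h0w hw0
        have hu0 : u = 0 := by
          by_contra hu0
          exact hne (Or.inr ⟨myPrice_top_zero 𝒞 hfull hu0, h0w'⟩)
        subst hu0
        rw [myPrice_zero_zero, one_mul]
      · -- both v and w nonzero
        have hpm := myPick_mem 𝒞 hfull v h0v hv0
        have hvp := myPick_dom 𝒞 hfull v h0v hv0
        have hJv := myPick_ne 𝒞 hfull v h0v hv0
        have hqm := myPick_mem 𝒞 hfull w h0w hw0
        have hwq := myPick_dom 𝒞 hfull w h0w hw0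
        have hJw := myPick_ne 𝒞 hfull w h0w hw0
        set p := myPick 𝒞 hfull v h0v hv0 with hpdef
        set q := myPick 𝒞 hfull w h0w hw0 with hqdef
        by_cases hpq : p = q
        · have hvq : v ∈ q.dom := hpq ▸ hvp
          have hJvq : q.J ⟨v, hvq⟩ ≠ 0 := by
            rw [← myJ_congr hpq hvp]; exact hJv
          have hJvpos : 0 < q.J ⟨v, hvq⟩ := myJ_pos q hvq h0v hJvq
          have hJwpos : 0 < q.J ⟨w, hwq⟩ := myJ_pos q hwq h0w hJw
          have hrvw : myPrice 𝒞 hfull v w =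
              ENNReal.ofReal (q.J ⟨v, hvq⟩ / q.J ⟨w, hwq⟩) :=
            myPrice_eval 𝒞 hchain hfull hqm hvq hwq h0v h0w hJw
          by_cases hu : u ∈ q.dom
          · rw [myPrice_eval 𝒞 hchain hfull hqm hu hwq h0u h0w hJw,
                myPrice_eval 𝒞 hchain hfull hqm hu hvq h0u h0v hJvq, hrvw,
                ← ENNReal.ofReal_mul
                  (div_nonneg (q.pos ⟨u, hu⟩ h0u) hJvpos.le)]
            congr 1
            field_simp
          · have hup : u ∉ p.dom := by rw [hpq]; exact hu
            rw [myPrice_top 𝒞 hfull h0u h0w hw0 hu,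
                myPrice_top 𝒞 hfull h0u h0v hv0 hup, hrvw,
                ENNReal.top_mul
                  (ENNReal.ofReal_pos.2 (div_pos hJvpos hJwpos)).ne']
        · rcases hchain hpm hqm hpq with ⟨hle, hk⟩ | ⟨hle, hk⟩
          · -- p ≺ q
            have hrvw : myPrice 𝒞 hfull v w = 0 := by
              rw [myPrice_eval 𝒞 hchain hfull hqm (hle hvp) hwq h0v h0w hJw,
                  hk v hvp, zero_div, ENNReal.ofReal_zero]
            have hu : u ∈ p.dom := by
              by_contra hu
              exact hne (Or.inr ⟨myPrice_top 𝒞 hfull h0u h0v hv0 hu, hrvw⟩)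
            have hruw : myPrice 𝒞 hfull u w = 0 := by
              rw [myPrice_eval 𝒞 hchain hfull hqm (hle hu) hwq h0u h0w hJw,
                  hk u hu, zero_div, ENNReal.ofReal_zero]
            rw [hruw, hrvw, mul_zero]
          · -- q ≺ p
            have hvnq : v ∉ q.dom := fun hvq => hJv (hk v hvq)
            have hrvw : myPrice 𝒞 hfull v w = ⊤ :=
              myPrice_top 𝒞 hfull h0v h0w hw0 hvnq
            have hruv : myPrice 𝒞 hfull u v ≠ 0 := fun h => hne (Or.inl ⟨h, hrvw⟩)
            have hunq : u ∉ q.dom := by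
              intro huq
              apply hruv
              rw [myPrice_eval 𝒞 hchain hfull hpm (hle huq) hvp h0u h0v hJv,
                  hk u huq, zero_div, ENNReal.ofReal_zero]
            rw [myPrice_top 𝒞 hfull h0u h0w hw0 hunq, hrvw, ENNReal.mul_top hruv]
  -- Axiom VP3: normalization
  have hone : ∀ u : V, 0 ≤ u → myPrice 𝒞 hfull u u = 1 := by
    intro u h0u
    by_cases hu0 : u = 0
    · subst hu0; exact myPrice_zero_zero 𝒞 hfull
    · have hpm := myPick_mem 𝒞 hfull u h0u hu0
      have hud := myPick_dom 𝒞 hfull u h0u hu0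
      have hJu := myPick_ne 𝒞 hfull u h0u hu0
      rw [myPrice_eval 𝒞 hchain hfull hpm hud hud h0u h0u hJu, div_self hJu,
          ENNReal.ofReal_one]
  refine ⟨⟨myPrice 𝒞 hfull, hadd, hcoc, hone⟩, ?_, ?_⟩
  · intro p hp u v hu hv h0u h0v hJv
    exact myPrice_eval 𝒞 hchain hfull hp hu hv h0u h0v hJv
  · intro R' hspec u v h0u h0v
    have hzl : ∀ u : V, 0 ≤ u → u ≠ 0 → R'.r 0 u = 0 := by
      intro u h0u hu0
      have hpm := myPick_mem 𝒞 hfull u h0u hu0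
      have hud := myPick_dom 𝒞 hfull u h0u hu0
      have hJu := myPick_ne 𝒞 hfull u h0u hu0
      rw [hspec _ hpm 0 u (Submodule.zero_mem _) hud le_rfl h0u hJu]
      have h0 : (⟨0, Submodule.zero_mem _⟩ : (myPick 𝒞 hfull u h0u hu0).dom) = 0 := rfl
      rw [h0, map_zero, zero_div, ENNReal.ofReal_zero]
    have htop0 : ∀ u : V, 0 ≤ u → u ≠ 0 → R'.r u 0 = ⊤ := by
      intro u h0u hu0
      by_contra htop
      have h2 := R'.cocycle u 0 u h0u le_rfl h0u ?_
      · rw [hzl u h0u hu0, mul_zero] at h2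
        exact one_ne_zero ((R'.one u h0u).symm.trans h2)
      · rintro (⟨h3, h4⟩ | ⟨h3, h4⟩)
        · rw [hzl u h0u hu0] at h4
          exact ENNReal.zero_ne_top h4
        · exact htop h3
    have htopv : ∀ u v : V, ∀ (h0u : 0 ≤ u) (h0v : 0 ≤ v) (hv0 : v ≠ 0),
        u ∉ (myPick 𝒞 hfull v h0v hv0).dom → R'.r u v = ⊤ := by
      intro u v h0u h0v hv0 hu
      have hu0 : u ≠ 0 := fun h => hu (h ▸ Submodule.zero_mem _)
      have hqm := myPick_mem 𝒞 hfull u h0u hu0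
      have hud := myPick_dom 𝒞 hfull u h0u hu0
      have hJu := myPick_ne 𝒞 hfull u h0u hu0
      have hpm := myPick_mem 𝒞 hfull v h0v hv0
      have hvd := myPick_dom 𝒞 hfull v h0v hv0
      have hJv := myPick_ne 𝒞 hfull v h0v hv0
      have hpq : myPick 𝒞 hfull v h0v hv0 ≠ myPick 𝒞 hfull u h0u hu0 := by
        intro h
        exact hu (h.symm ▸ hud)
      rcases hchain hpm hqm hpq with ⟨hle, hk⟩ | ⟨hle, hk⟩
      · have hrvu : R'.r v u = 0 := by
          rw [hspec _ hqm v u (hle hvd) hud h0v h0u hJu, hk v hvd, zero_div,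
              ENNReal.ofReal_zero]
        by_contra htop
        have h2 := R'.cocycle u v u h0u h0v h0u ?_
        · rw [hrvu, mul_zero] at h2
          exact one_ne_zero ((R'.one u h0u).symm.trans h2)
        · rintro (⟨h3, h4⟩ | ⟨h3, h4⟩)
          · rw [hrvu] at h4
            exact ENNReal.zero_ne_top h4
          · exact htop h3
      · exact absurd (hle hud) hu
    by_cases hv0 : v = 0
    · subst hv0
      by_cases hu0 : u = 0
      · subst hu0
        rw [R'.one 0 le_rfl]
        exact (myPrice_zero_zero 𝒞 hfull).symm
      · rw [htop0 u h0u hu0]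
        exact (myPrice_top_zero 𝒞 hfull hu0).symm
    · by_cases hu : u ∈ (myPick 𝒞 hfull v h0v hv0).dom
      · rw [hspec _ (myPick_mem 𝒞 hfull v h0v hv0) u v hu (myPick_dom 𝒞 hfull v h0v hv0)
            h0u h0v (myPick_ne 𝒞 hfull v h0v hv0)]
        exact (myPrice_eval 𝒞 hchain hfull (myPick_mem 𝒞 hfull v h0v hv0) hu
          (myPick_dom 𝒞 hfull v h0v hv0) h0u h0v (myPick_ne 𝒞 hfull v h0v hv0)).symm
      · rw [htopv u v h0u h0v hv0 hu]
        exact (myPrice_top 𝒞 hfull h0u h0v hv0 hu).symm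
end

section
/- Every ordered vector space admits a vector pricing. -/
open scoped ENNReal NNReal

namespace VPAux

variable {V : Type*} [AddCommGroup V] [Module ℝ V]

/-- A total proper convex cone. -/
structure IsGoodCone (C : Set V) : Prop where
  add : ∀ x ∈ C, ∀ y ∈ C, x + y ∈ C
  smul : ∀ t : ℝ, 0 ≤ t → ∀ x ∈ C, t • x ∈ C
  proper : ∀ x ∈ C, -x ∈ C → x = 0
  total : ∀ x : V, x ∈ C ∨ -x ∈ C

variable {C : Set V}

lemma IsGoodCone.zero_mem (hC : IsGoodCone C) : (0 : V) ∈ C := by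
  rcases hC.total 0 with h | h
  · exact h
  · simpa using h

/-- The ratio (the "standard part" of u/w in the total order given by `C`). -/
noncomputable def ratio (C : Set V) (u w : V) : ℝ≥0∞ :=
  sSup {t | ∃ s : ℝ≥0, t = (s : ℝ≥0∞) ∧ u - (s : ℝ) • w ∈ C}

lemma le_ratio {u w : V} {s : ℝ≥0} (h : u - (s : ℝ) • w ∈ C) :
    (s : ℝ≥0∞) ≤ ratio C u w :=
  le_sSup ⟨s, rfl, h⟩

lemma exists_of_lt_ratio {u w : V} {x : ℝ≥0∞} (h : x < ratio C u w) :
    ∃ s : ℝ≥0, x < (s : ℝ≥0∞) ∧ u - (s : ℝ) • w ∈ C := by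
  obtain ⟨t, ⟨s, rfl, hs⟩, hlt⟩ := lt_sSup_iff.mp h
  exact ⟨s, hlt, hs⟩

lemma gap (hC : IsGoodCone C) {u w : V} {s : ℝ≥0}
    (h : ratio C u w < (s : ℝ≥0∞)) : (s : ℝ) • w - u ∈ C := by
  have hnot : u - (s : ℝ) • w ∉ C := fun hm => absurd (le_ratio hm) (not_le.mpr h)
  rcases hC.total (u - (s : ℝ) • w) with h' | h'
  · exact absurd h' hnot
  · simpa [neg_sub] using h'

lemma ratio_self (hC : IsGoodCone C) {u : V} (hu : u ∈ C) (hu0 : u ≠ 0) :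
    ratio C u u = 1 := by
  apply le_antisymm
  · apply sSup_le
    rintro t ⟨s, rfl, hs⟩
    by_contra hlt
    push_neg at hlt
    have hs1 : (1 : ℝ≥0) < s := by exact_mod_cast hlt
    have hs1' : (0 : ℝ) ≤ (s : ℝ) - 1 := by
      have : (1 : ℝ) < (s : ℝ) := by exact_mod_cast hs1
      linarith
    have hmem : ((s : ℝ) - 1) • u ∈ C := hC.smul _ hs1' u hu
    have hneg : -(((s : ℝ) - 1) • u) ∈ C := by
      have heq : u - (s : ℝ) • u = -(((s : ℝ) - 1) • u) := by module
      rw [← heq]; exact hs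
    have hz : ((s : ℝ) - 1) • u = 0 := hC.proper _ hmem hneg
    rcases smul_eq_zero.mp hz with h | h
    · have : (s : ℝ) = 1 := by linarith [h]
      exact absurd this (by exact_mod_cast hs1.ne')
    · exact hu0 h
  · have h1 : u - ((1 : ℝ≥0) : ℝ) • u ∈ C := by simpa using hC.zero_mem
    simpa using le_ratio h1

lemma ratio_zero_right {u : V} (hu : u ∈ C) : ratio C u 0 = ⊤ := by
  apply ENNReal.eq_top_of_forall_nnreal_le
  intro r
  exact le_ratio (by simpa using hu)

lemma ratio_zero_left (hC : IsGoodCone C) {w : V} (hw : w ∈ C) (hw0 : w ≠ 0) :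
    ratio C 0 w = 0 := by
  apply sSup_eq_bot.mpr
  rintro t ⟨s, rfl, hs⟩
  have hmem : (s : ℝ) • w ∈ C := hC.smul _ s.coe_nonneg w hw
  have hneg : -((s : ℝ) • w) ∈ C := by simpa using hs
  have hz : (s : ℝ) • w = 0 := hC.proper _ hmem hneg
  rcases smul_eq_zero.mp hz with h | h
  · have : s = 0 := by exact_mod_cast h
    simp [this]
  · exact absurd h hw0

lemma ratio_add (hC : IsGoodCone C) {u v w : V} (hu : u ∈ C) (hv : v ∈ C) (hw : w ∈ C)
    (hw0 : w ≠ 0) : ratio C (u + v) w = ratio C u w + ratio C v w := by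
  set a := ratio C u w with ha
  set b := ratio C v w with hb
  apply le_antisymm
  · apply sSup_le
    rintro t ⟨s, rfl, hs⟩
    by_contra hcon
    push_neg at hcon
    have haT : a ≠ ⊤ := by
      intro h; rw [h] at hcon; simp at hcon
    have hbT : b ≠ ⊤ := by
      intro h; rw [h] at hcon; simp at hcon
    set A := a.toNNReal with hA
    set B := b.toNNReal with hB
    have haA : a = (A : ℝ≥0∞) := (ENNReal.coe_toNNReal haT).symm
    have hbB : b = (B : ℝ≥0∞) := (ENNReal.coe_toNNReal hbT).symm
    have hABs : A + B < s := by
      have := hcon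
      rw [haA, hbB] at this
      exact_mod_cast this
    have hABs' : (A : ℝ) + (B : ℝ) < (s : ℝ) := by exact_mod_cast hABs
    set e : ℝ := ((s : ℝ) - (A : ℝ) - (B : ℝ)) / 3 with he
    have he0 : 0 < e := by rw [he]; linarith
    set d : ℝ≥0 := e.toNNReal with hd
    have hdc : (d : ℝ) = e := Real.coe_toNNReal e he0.le
    have hd0 : 0 < d := by
      rw [← NNReal.coe_lt_coe, hdc]; simpa using he0
    have h1 : a < ((A + d : ℝ≥0) : ℝ≥0∞) := by
      rw [haA]; exact_mod_cast lt_add_of_pos_right A hd0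
    have h2 : b < ((B + d : ℝ≥0) : ℝ≥0∞) := by
      rw [hbB]; exact_mod_cast lt_add_of_pos_right B hd0
    have g1 : ((A + d : ℝ≥0) : ℝ) • w - u ∈ C := gap hC h1
    have g2 : ((B + d : ℝ≥0) : ℝ) • w - v ∈ C := gap hC h2
    have hsum : (((A + d : ℝ≥0) : ℝ) • w - u) + (((B + d : ℝ≥0) : ℝ) • w - v)
        + (u + v - (s : ℝ) • w) ∈ C :=
      hC.add _ (hC.add _ g1 _ g2) _ hs
    have hcoeff : ((A + d : ℝ≥0) : ℝ) + ((B + d : ℝ≥0) : ℝ) < (s : ℝ) := by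
      push_cast
      rw [hdc, he]
      linarith
    have heq : (((A + d : ℝ≥0) : ℝ) • w - u) + (((B + d : ℝ≥0) : ℝ) • w - v)
        + (u + v - (s : ℝ) • w)
        = (((A + d : ℝ≥0) : ℝ) + ((B + d : ℝ≥0) : ℝ) - (s : ℝ)) • w := by module
    have hX : (((A + d : ℝ≥0) : ℝ) + ((B + d : ℝ≥0) : ℝ) - (s : ℝ)) • w ∈ C := by
      rw [← heq]; exact hsum
    have hY : ((s : ℝ) - (((A + d : ℝ≥0) : ℝ) + ((B + d : ℝ≥0) : ℝ))) • w ∈ C :=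
      hC.smul _ (by linarith) w hw
    have hY' : -((((A + d : ℝ≥0) : ℝ) + ((B + d : ℝ≥0) : ℝ) - (s : ℝ)) • w) ∈ C := by
      have : -((((A + d : ℝ≥0) : ℝ) + ((B + d : ℝ≥0) : ℝ) - (s : ℝ)) • w)
          = ((s : ℝ) - (((A + d : ℝ≥0) : ℝ) + ((B + d : ℝ≥0) : ℝ))) • w := by module
      rw [this]; exact hY
    have hz := hC.proper _ hX hY'
    rcases smul_eq_zero.mp hz with h | h
    · have : ((A + d : ℝ≥0) : ℝ) + ((B + d : ℝ≥0) : ℝ) = (s : ℝ) := by linarith [h]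
      linarith
    · exact hw0 h
  · by_contra hcon
    push_neg at hcon
    set c := ratio C (u + v) w with hc
    have hcT : c ≠ ⊤ := fun h => by rw [h] at hcon; exact absurd hcon (by simp)
    have key : ∃ s₁ s₂ : ℝ≥0, u - (s₁ : ℝ) • w ∈ C ∧ v - (s₂ : ℝ) • w ∈ C ∧
        c < (s₁ : ℝ≥0∞) + (s₂ : ℝ≥0∞) := by
      rcases lt_or_ge c a with h1 | h1
      · obtain ⟨s₁, hlt, hmem⟩ := exists_of_lt_ratio h1
        exact ⟨s₁, 0, hmem, by simpa using hv, by simpa using hlt⟩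
      · rcases lt_or_ge c b with h2 | h2
        · obtain ⟨s₂, hlt, hmem⟩ := exists_of_lt_ratio h2
          exact ⟨0, s₂, by simpa using hu, hmem, by simpa using hlt⟩
        · have hbT' : b ≠ ⊤ := fun h => hcT (top_le_iff.mp (h ▸ h2))
          have hsub1 : c - b < a := (ENNReal.sub_lt_iff_lt_right hbT' h2).mpr hcon
          obtain ⟨s₁, hlt1, hmem1⟩ := exists_of_lt_ratio hsub1
          have hlt1' : c < (s₁ : ℝ≥0∞) + b := (ENNReal.sub_lt_iff_lt_right hbT' h2).mp hlt1
          rcases lt_or_ge c (s₁ : ℝ≥0∞) with h3 | h3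
          · exact ⟨s₁, 0, hmem1, by simpa using hv, by simpa using h3⟩
          · have hsub2 : c - (s₁ : ℝ≥0∞) < b :=
              (ENNReal.sub_lt_iff_lt_right ENNReal.coe_ne_top h3).mpr
                (by rwa [add_comm] at hlt1')
            obtain ⟨s₂, hlt2, hmem2⟩ := exists_of_lt_ratio hsub2
            have h4 : c < (s₂ : ℝ≥0∞) + (s₁ : ℝ≥0∞) :=
              (ENNReal.sub_lt_iff_lt_right ENNReal.coe_ne_top h3).mp hlt2
            exact ⟨s₁, s₂, hmem1, hmem2, by rwa [add_comm] at h4⟩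
    obtain ⟨s₁, s₂, hm1, hm2, hlt⟩ := key
    have hmem : (u + v) - ((s₁ + s₂ : ℝ≥0) : ℝ) • w ∈ C := by
      have := hC.add _ hm1 _ hm2
      have heq : (u - (s₁ : ℝ) • w) + (v - (s₂ : ℝ) • w)
          = (u + v) - ((s₁ : ℝ) + (s₂ : ℝ)) • w := by module
      rw [heq] at this
      have hcast : ((s₁ + s₂ : ℝ≥0) : ℝ) = (s₁ : ℝ) + (s₂ : ℝ) := by push_cast; ring
      rw [hcast]
      exact this
    have hle : ((s₁ + s₂ : ℝ≥0) : ℝ≥0∞) ≤ c := le_ratio hmem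
    rw [ENNReal.coe_add] at hle
    exact absurd hle (not_le.mpr hlt)

lemma ratio_cocycle (hC : IsGoodCone C) {u v w : V} (hu : u ∈ C) (hv : v ∈ C) (hw : w ∈ C)
    (hv0 : v ≠ 0) (hw0 : w ≠ 0)
    (hguard : ¬((ratio C u v = 0 ∧ ratio C v w = ⊤) ∨ (ratio C u v = ⊤ ∧ ratio C v w = 0))) :
    ratio C u w = ratio C u v * ratio C v w := by
  set a := ratio C u v with ha
  set b := ratio C v w with hb
  apply le_antisymm
  · apply sSup_le
    rintro t ⟨s, rfl, hs⟩
    by_contra hcon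
    push_neg at hcon
    have haT : a ≠ ⊤ := by
      intro h
      rcases eq_or_ne b 0 with hb0 | hb0
      · exact hguard (Or.inr ⟨h, hb0⟩)
      · rw [h, ENNReal.top_mul hb0] at hcon
        exact absurd hcon (by simp)
    have hbT : b ≠ ⊤ := by
      intro h
      rcases eq_or_ne a 0 with ha0 | ha0
      · exact hguard (Or.inl ⟨ha0, h⟩)
      · rw [h, ENNReal.mul_top ha0] at hcon
        exact absurd hcon (by simp)
    set A := a.toNNReal with hA
    set B := b.toNNReal with hB
    have haA : a = (A : ℝ≥0∞) := (ENNReal.coe_toNNReal haT).symm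
    have hbB : b = (B : ℝ≥0∞) := (ENNReal.coe_toNNReal hbT).symm
    have hABs : (A : ℝ) * (B : ℝ) < (s : ℝ) := by
      have : (A * B : ℝ≥0) < s := by
        have := hcon; rw [haA, hbB, ← ENNReal.coe_mul] at this
        exact_mod_cast this
      exact_mod_cast this
    set e : ℝ := min 1 (((s : ℝ) - (A : ℝ) * (B : ℝ)) / ((A : ℝ) + (B : ℝ) + 2)) with he
    have hA0 : (0 : ℝ) ≤ (A : ℝ) := A.coe_nonneg
    have hB0 : (0 : ℝ) ≤ (B : ℝ) := B.coe_nonneg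
    have he0 : 0 < e := by
      apply lt_min one_pos
      apply div_pos (by linarith) (by linarith)
    have he1 : e ≤ 1 := min_le_left _ _
    have hkey : ((A : ℝ) + e) * ((B : ℝ) + e) < (s : ℝ) := by
      have h2 : e ≤ ((s : ℝ) - (A : ℝ) * (B : ℝ)) / ((A : ℝ) + (B : ℝ) + 2) :=
        min_le_right _ _
      have h3 : e * ((A : ℝ) + (B : ℝ) + 2) ≤ (s : ℝ) - (A : ℝ) * (B : ℝ) := by
        rw [← le_div_iff₀ (by linarith)]
        exact h2
      nlinarith [mul_le_of_le_one_right he0.le he1]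
    set d : ℝ≥0 := e.toNNReal with hd
    have hdc : (d : ℝ) = e := Real.coe_toNNReal e he0.le
    have hd0 : 0 < d := by rw [← NNReal.coe_lt_coe, hdc]; simpa using he0
    have h1 : a < ((A + d : ℝ≥0) : ℝ≥0∞) := by
      rw [haA]; exact_mod_cast lt_add_of_pos_right A hd0
    have h2 : b < ((B + d : ℝ≥0) : ℝ≥0∞) := by
      rw [hbB]; exact_mod_cast lt_add_of_pos_right B hd0
    have g1 : ((A + d : ℝ≥0) : ℝ) • v - u ∈ C := gap hC h1
    have g2 : ((B + d : ℝ≥0) : ℝ) • w - v ∈ C := gap hC h2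
    have g2' : ((A + d : ℝ≥0) : ℝ) • (((B + d : ℝ≥0) : ℝ) • w - v) ∈ C :=
      hC.smul _ (NNReal.coe_nonneg _) _ g2
    have hsum : ((A + d : ℝ≥0) : ℝ) • (((B + d : ℝ≥0) : ℝ) • w - v)
        + (((A + d : ℝ≥0) : ℝ) • v - u) + (u - (s : ℝ) • w) ∈ C :=
      hC.add _ (hC.add _ g2' _ g1) _ hs
    have hprod : ((A + d : ℝ≥0) : ℝ) * ((B + d : ℝ≥0) : ℝ) < (s : ℝ) := by
      push_cast
      rw [hdc]
      exact hkey
    have heq : ((A + d : ℝ≥0) : ℝ) • (((B + d : ℝ≥0) : ℝ) • w - v)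
        + (((A + d : ℝ≥0) : ℝ) • v - u) + (u - (s : ℝ) • w)
        = (((A + d : ℝ≥0) : ℝ) * ((B + d : ℝ≥0) : ℝ) - (s : ℝ)) • w := by module
    have hX : (((A + d : ℝ≥0) : ℝ) * ((B + d : ℝ≥0) : ℝ) - (s : ℝ)) • w ∈ C := by
      rw [← heq]; exact hsum
    have hY' : -((((A + d : ℝ≥0) : ℝ) * ((B + d : ℝ≥0) : ℝ) - (s : ℝ)) • w) ∈ C := by
      have h5 : ((s : ℝ) - ((A + d : ℝ≥0) : ℝ) * ((B + d : ℝ≥0) : ℝ)) • w ∈ C :=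
        hC.smul _ (by linarith) w hw
      have : -((((A + d : ℝ≥0) : ℝ) * ((B + d : ℝ≥0) : ℝ) - (s : ℝ)) • w)
          = ((s : ℝ) - ((A + d : ℝ≥0) : ℝ) * ((B + d : ℝ≥0) : ℝ)) • w := by module
      rw [this]; exact h5
    have hz := hC.proper _ hX hY'
    rcases smul_eq_zero.mp hz with h | h
    · have : ((A + d : ℝ≥0) : ℝ) * ((B + d : ℝ≥0) : ℝ) = (s : ℝ) := by linarith [h]
      linarith
    · exact hw0 h
  · apply ENNReal.le_of_forall_nnreal_lt
    intro r hr
    rcases eq_or_ne r 0 with hr0 | hr0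
    · simp [hr0]
    have hrpos : (0 : ℝ≥0∞) < (r : ℝ≥0∞) := by
      simpa [pos_iff_ne_zero] using (ENNReal.coe_ne_zero.mpr hr0)
    have ha0 : a ≠ 0 := by
      intro h; rw [h, zero_mul] at hr; exact absurd hr (by simp)
    have hb0 : b ≠ 0 := by
      intro h; rw [h, mul_zero] at hr; exact absurd hr (by simp)
    have step1 : (r : ℝ≥0∞) / b < a := by
      rcases eq_or_ne b ⊤ with hbT | hbT
      · rw [hbT, ENNReal.div_top]
        exact pos_iff_ne_zero.mpr ha0
      · rw [ENNReal.div_lt_iff (Or.inl hb0) (Or.inl hbT)]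
        exact hr
    obtain ⟨s, hslt, hsmem⟩ := exists_of_lt_ratio step1
    have hs0 : s ≠ 0 := by
      intro h
      rw [h] at hslt
      exact absurd (lt_of_le_of_lt zero_le hslt) (by simp)
    have step2 : (r : ℝ≥0∞) / (s : ℝ≥0∞) < b := by
      rcases eq_or_ne b ⊤ with hbT | hbT
      · rw [hbT]
        exact ENNReal.div_lt_top ENNReal.coe_ne_top (ENNReal.coe_ne_zero.mpr hs0)
      · have hrs : (r : ℝ≥0∞) < (s : ℝ≥0∞) * b := by
          rw [← ENNReal.div_lt_iff (Or.inl hb0) (Or.inl hbT)]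
          exact hslt
        rw [ENNReal.div_lt_iff (Or.inl (ENNReal.coe_ne_zero.mpr hs0))
          (Or.inl ENNReal.coe_ne_top)]
        rw [mul_comm] at hrs
        exact hrs
    obtain ⟨t, htlt, htmem⟩ := exists_of_lt_ratio step2
    have hrst : (r : ℝ≥0∞) < (t : ℝ≥0∞) * (s : ℝ≥0∞) := by
      rw [← ENNReal.div_lt_iff (Or.inl (ENNReal.coe_ne_zero.mpr hs0))
        (Or.inl ENNReal.coe_ne_top)]
      exact htlt
    have hmem : u - ((s * t : ℝ≥0) : ℝ) • w ∈ C := by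
      have h6 : (s : ℝ) • (v - (t : ℝ) • w) ∈ C := hC.smul _ s.coe_nonneg _ htmem
      have h7 := hC.add _ hsmem _ h6
      have heq : (u - (s : ℝ) • v) + (s : ℝ) • (v - (t : ℝ) • w)
          = u - ((s : ℝ) * (t : ℝ)) • w := by module
      rw [heq] at h7
      have hcast : ((s * t : ℝ≥0) : ℝ) = (s : ℝ) * (t : ℝ) := by push_cast; ring
      rw [hcast]
      exact h7
    have hle : ((s * t : ℝ≥0) : ℝ≥0∞) ≤ ratio C u w := le_ratio hmem
    refine le_trans ?_ hle
    rw [ENNReal.coe_mul]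
    rw [mul_comm] at hrst
    exact hrst.le

end VPAux

open VPAux in
lemma exists_goodCone (V : Type*) [AddCommGroup V] [PartialOrder V] [IsOrderedAddMonoid V]
    [Module ℝ V] [PosSMulStrictMono ℝ V] : ∃ C : Set V, IsGoodCone C ∧ ∀ x : V, 0 ≤ x → x ∈ C := by
  set P : Set (Set V) := {C | (∀ x ∈ C, ∀ y ∈ C, x + y ∈ C) ∧
      (∀ t : ℝ, 0 ≤ t → ∀ x ∈ C, t • x ∈ C) ∧
      (∀ x ∈ C, -x ∈ C → x = 0) ∧ (∀ x : V, 0 ≤ x → x ∈ C)} with hP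
  have h0 : {x : V | 0 ≤ x} ∈ P := by
    refine ⟨?_, ?_, ?_, ?_⟩
    · intro x hx y hy; exact add_nonneg hx hy
    · intro t ht x hx; exact smul_nonneg ht hx
    · intro x hx hx'; exact le_antisymm (by simpa using hx') hx
    · intro x hx; exact hx
  have hzorn : ∀ c ⊆ P, IsChain (· ⊆ ·) c → c.Nonempty → ∃ ub ∈ P, ∀ s ∈ c, s ⊆ ub := by
    intro c hc hchain hne
    refine ⟨⋃₀ c, ⟨?_, ?_, ?_, ?_⟩, fun s hs => Set.subset_sUnion_of_mem hs⟩
    · rintro x ⟨S, hS, hxS⟩ y ⟨T, hT, hyT⟩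
      rcases hchain.total hS hT with h | h
      · exact ⟨T, hT, (hc hT).1 _ (h hxS) _ hyT⟩
      · exact ⟨S, hS, (hc hS).1 _ hxS _ (h hyT)⟩
    · rintro t ht x ⟨S, hS, hxS⟩
      exact ⟨S, hS, (hc hS).2.1 t ht x hxS⟩
    · rintro x ⟨S, hS, hxS⟩ ⟨T, hT, hxT⟩
      rcases hchain.total hS hT with h | h
      · exact (hc hT).2.2.1 _ (h hxS) hxT
      · exact (hc hS).2.2.1 _ hxS (h hxT)
    · obtain ⟨S, hS⟩ := hne
      intro x hx
      exact ⟨S, hS, (hc hS).2.2.2 x hx⟩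
  obtain ⟨M, -, hM⟩ := zorn_subset_nonempty P hzorn _ h0
  obtain ⟨⟨Madd, Msmul, Mproper, Mpos⟩, hmax⟩ := hM
  refine ⟨M, ⟨Madd, Msmul, Mproper, ?_⟩, Mpos⟩
  intro v
  by_contra hcon
  push_neg at hcon
  obtain ⟨hv1, hv2⟩ := hcon
  set M' : Set V := {z | ∃ c ∈ M, ∃ t : ℝ, 0 ≤ t ∧ z = c + t • v} with hM'
  have hMM' : M ⊆ M' := fun c hc => ⟨c, hc, 0, le_refl 0, by simp⟩
  have hM'P : M' ∈ P := by
    refine ⟨?_, ?_, ?_, ?_⟩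
    · rintro x ⟨c, hc, t, ht, rfl⟩ y ⟨c', hc', t', ht', rfl⟩
      exact ⟨c + c', Madd _ hc _ hc', t + t', by linarith, by module⟩
    · rintro r hr x ⟨c, hc, t, ht, rfl⟩
      exact ⟨r • c, Msmul r hr c hc, r * t, mul_nonneg hr ht, by module⟩
    · rintro x ⟨c, hc, t, ht, rfl⟩ hnx
      obtain ⟨c', hc', t', ht', heq⟩ := hnx
      have hzero : (0 : V) = (c + c') + (t + t') • v := by
        have : (c + t • v) + (c' + t' • v) = (c + c') + (t + t') • v := by module
        rw [← this, ← heq]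
        abel
      rcases eq_or_lt_of_le (by linarith : (0:ℝ) ≤ t + t') with htt | htt
      · have ht0 : t = 0 := by linarith
        have ht'0 : t' = 0 := by linarith
        have hx : c + t • v = c := by rw [ht0]; simp
        have hx' : c' + t' • v = c' := by rw [ht'0]; simp
        rw [hx] at heq ⊢
        rw [hx'] at heq
        exact Mproper c hc (by rw [heq]; exact hc')
      · exfalso
        apply hv2
        have hvv : -v = ((t + t')⁻¹) • (c + c') := by
          have h8 : (t + t') • v = -(c + c') :=
            eq_neg_of_add_eq_zero_right hzero.symm
          have h9 : ((t + t')⁻¹) • ((t + t') • v) = ((t + t')⁻¹) • (-(c + c')) := by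
            rw [h8]
          rw [smul_smul, inv_mul_cancel₀ (ne_of_gt htt), one_smul] at h9
          rw [h9]
          module
        rw [hvv]
        exact Msmul _ (inv_nonneg.mpr htt.le) _ (Madd _ hc _ hc')
    · intro x hx
      exact hMM' (Mpos x hx)
  have : M' ⊆ M := hmax hM'P hMM'
  exact hv1 (this ⟨0, Mpos 0 (le_refl 0), 1, zero_le_one, by simp⟩)

open VPAux in
/-- Every ordered vector space admits a vector pricing. -/
theorem exists_vectorPricing (V : Type*) [AddCommGroup V] [PartialOrder V] [IsOrderedAddMonoid V]
    [Module ℝ V] [PosSMulStrictMono ℝ V] : Nonempty (VectorPricing V) := by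
  classical
  obtain ⟨C, hC, hpos⟩ := exists_goodCone V
  refine ⟨⟨fun u w => if u = 0 ∧ w = 0 then 1 else ratio C u w, ?_, ?_, ?_⟩⟩
  · intro u v w hu hv hw hw0
    rw [if_neg (fun h => hw0 h.2), if_neg (fun h => hw0 h.2), if_neg (fun h => hw0 h.2)]
    exact ratio_add hC (hpos u hu) (hpos v hv) (hpos w hw) hw0
  · intro u v w hu hv hw hguard
    by_cases hu0 : u = 0 <;> by_cases hv0 : v = 0 <;> by_cases hw0 : w = 0
    · subst hu0; subst hv0; subst hw0; simp
    · subst hu0; subst hv0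
      rw [if_neg (fun h => hw0 h.2), if_pos ⟨rfl, rfl⟩, one_mul]
    · subst hu0; subst hw0
      rw [if_neg (fun h => hv0 h.2), if_neg (fun h => hv0 h.1)] at hguard
      exact absurd (Or.inl ⟨ratio_zero_left hC (hpos v hv) hv0,
        ratio_zero_right (hpos v hv)⟩) hguard
    · subst hu0
      rw [if_neg (fun h => hw0 h.2), if_neg (fun h => hv0 h.2), if_neg (fun h => hv0 h.1)]
      rw [ratio_zero_left hC (hpos w hw) hw0, ratio_zero_left hC (hpos v hv) hv0, zero_mul]
    · subst hv0; subst hw0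
      rw [if_neg (fun h => hu0 h.1), if_pos ⟨rfl, rfl⟩, mul_one]
    · subst hv0
      rw [if_neg (fun h => hu0 h.1), if_neg (fun h => hw0 h.2)] at hguard
      exact absurd (Or.inr ⟨ratio_zero_right (hpos u hu),
        ratio_zero_left hC (hpos w hw) hw0⟩) hguard
    · subst hw0
      rw [if_neg (fun h => hu0 h.1), if_neg (fun h => hv0 h.1)] at hguard
      rw [ratio_zero_right (hpos v hv)] at hguard
      rw [if_neg (fun h => hu0 h.1), if_neg (fun h => hu0 h.1), if_neg (fun h => hv0 h.1)]
      rw [ratio_zero_right (hpos u hu), ratio_zero_right (hpos v hv)]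
      have hne : ratio C u v ≠ 0 := fun h => hguard (Or.inl ⟨h, rfl⟩)
      rw [ENNReal.mul_top hne]
    · rw [if_neg (fun h => hu0 h.1), if_neg (fun h => hv0 h.1)] at hguard
      rw [if_neg (fun h => hu0 h.1), if_neg (fun h => hu0 h.1), if_neg (fun h => hv0 h.1)]
      exact ratio_cocycle hC (hpos u hu) (hpos v hv) (hpos w hw) hv0 hw0 hguard
  · intro u hu
    by_cases hu0 : u = 0
    · subst hu0; simp
    · rw [if_neg (fun h => hu0 h.1)]
      exact ratio_self hC (hpos u hu) hu0
end

section
/- Let V be a vector subspace of an ordered vector space W, with the induced order. Then every vector pricing on V extends to a vector pricing on W. -/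
open scoped ENNReal

set_option linter.unusedSectionVars false
set_option linter.unusedVariables false
set_option maxHeartbeats 1000000

/-- an additive, monotone function on nonnegative reals is linear there -/
theorem lin_of_add_mono (f : ℝ → ℝ)
    (hadd : ∀ s t : ℝ, 0 ≤ s → 0 ≤ t → f (s + t) = f s + f t)
    (hmono : ∀ s t : ℝ, 0 ≤ s → s ≤ t → f s ≤ f t) :
    ∀ t : ℝ, 0 ≤ t → f t = t * f 1 := by
  have hf0 : f 0 = 0 := by have := hadd 0 0 le_rfl le_rfl; simp at this; linarith
  have hnat : ∀ (n : ℕ) (t : ℝ), 0 ≤ t → f (n * t) = n * f t := by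
    intro n
    induction n with
    | zero => intro t ht; simp [hf0]
    | succ k ih =>
        intro t ht
        have : ((k:ℝ) + 1) * t = k * t + t := by ring
        rw [Nat.cast_succ, this, hadd _ _ (by positivity) ht, ih t ht]
        ring
  have hrat : ∀ q : ℚ, 0 ≤ q → f q = q * f 1 := by
    intro q hq
    have hden : (0:ℝ) < (q.den : ℝ) := by positivity
    have hnum : (0:ℝ) ≤ (q.num : ℝ) := by exact_mod_cast Rat.num_nonneg.mpr hq
    have hqr : (0:ℝ) ≤ (q:ℝ) := by exact_mod_cast hq
    have hh : ((q.num.toNat:ℕ):ℝ) = (q.num:ℝ) :=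
      mod_cast congrArg (Int.cast : ℤ → ℝ) (Int.toNat_of_nonneg (Rat.num_nonneg.mpr hq))
    have e1 : (q.den : ℝ) * (q:ℝ) = ((q.num.toNat:ℕ) : ℝ) := by
      rw [hh, Rat.cast_def, mul_comm, div_mul_cancel₀ _ (ne_of_gt hden)]
    have e2 : f ((q.den : ℝ) * (q:ℝ)) = (q.den : ℝ) * f q := hnat q.den _ hqr
    have e3 : f ((q.num.toNat : ℝ)) = (q.num.toNat : ℝ) * f 1 := by
      have := hnat q.num.toNat 1 zero_le_one
      simpa using this
    rw [e1, e3, hh] at e2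
    have : f q = ((q.num : ℝ) / (q.den : ℝ)) * f 1 := by
      field_simp at e2 ⊢
      linarith
    rw [this, Rat.cast_def]
  have hf1 : 0 ≤ f 1 := by have := hmono 0 1 le_rfl zero_le_one; linarith
  intro t ht
  rcases eq_or_lt_of_le hf1 with hz | hpos
  · -- f 1 = 0 : f vanishes on nonnegatives
    obtain ⟨n, hn⟩ := exists_nat_ge t
    have h1 : f t ≤ f n := hmono t n ht hn
    have h2 : f n = 0 := by
      have := hnat n 1 zero_le_one
      simpa [← hz] using this
    have h3 : 0 ≤ f t := by have := hmono 0 t le_rfl ht; linarith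
    rw [← hz]; rw [h2] at h1; linarith
  · refine le_antisymm ?_ ?_
    · by_contra hlt
      push_neg at hlt
      have : t < f t / f 1 := by rw [lt_div_iff₀ hpos]; linarith
      obtain ⟨q, hq1, hq2⟩ := exists_rat_btwn this
      have hq0 : 0 ≤ q := by
        have : (0:ℝ) ≤ (q:ℝ) := le_trans ht hq1.le
        exact_mod_cast this
      have := hmono t q ht hq1.le
      rw [hrat q hq0] at this
      rw [lt_div_iff₀ hpos] at hq2
      linarith
    · by_contra hlt
      push_neg at hlt
      have h0 : 0 ≤ f t := by have := hmono 0 t le_rfl ht; linarith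
      have : f t / f 1 < t := by rw [div_lt_iff₀ hpos]; linarith
      obtain ⟨q, hq1, hq2⟩ := exists_rat_btwn this
      have hq0 : 0 ≤ q := by
        have : (0:ℝ) ≤ (q:ℝ) := by
          have : 0 ≤ f t / f 1 := div_nonneg h0 hpos.le
          linarith
        exact_mod_cast this
      have := hmono q t (by exact_mod_cast hq0) hq2.le
      rw [hrat q hq0] at this
      rw [div_lt_iff₀ hpos] at hq1
      linarith


namespace VPExt

variable {W : Type*} [AddCommGroup W] [PartialOrder W] [IsOrderedAddMonoid W] [Module ℝ W]
  [PosSMulStrictMono ℝ W]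

/-- partial functionals: (domain, function) -/
abbrev PF (W : Type*) := Set W × (W → ℝ)

def Ker (pf : PF W) : Set W := {a | a ∈ pf.1 ∧ pf.2 a = 0}

structure IsPF (pf : PF W) : Prop where
  zero_mem : (0:W) ∈ pf.1
  add_mem : ∀ a ∈ pf.1, ∀ b ∈ pf.1, a + b ∈ pf.1
  divisor : ∀ a b : W, 0 ≤ a → 0 ≤ b → a + b ∈ pf.1 → a ∈ pf.1
  nonneg_mem : ∀ a ∈ pf.1, (0:W) ≤ a
  span_closed : ∀ z : W, 0 ≤ z → z ∈ Submodule.span ℝ pf.1 → z ∈ pf.1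
  fadd : ∀ a ∈ pf.1, ∀ b ∈ pf.1, pf.2 (a+b) = pf.2 a + pf.2 b
  fnonneg : ∀ a ∈ pf.1, 0 ≤ pf.2 a

namespace IsPF

variable {pf : PF W}

theorem fzero (h : IsPF pf) : pf.2 0 = 0 := by
  have := h.fadd 0 h.zero_mem 0 h.zero_mem
  simp at this; linarith

theorem natsmul_mem (h : IsPF pf) (a : W) (ha : a ∈ pf.1) (n : ℕ) : (n:ℝ) • a ∈ pf.1 := by
  induction n with
  | zero => simpa using h.zero_mem
  | succ k ih =>
      have : ((k+1:ℕ):ℝ) • a = (k:ℝ) • a + a := by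
        push_cast; rw [add_smul, one_smul]
      rw [this]; exact h.add_mem _ ih _ ha

theorem f_natsmul (h : IsPF pf) (a : W) (ha : a ∈ pf.1) (n : ℕ) : pf.2 ((n:ℝ) • a) = n * pf.2 a := by
  induction n with
  | zero => simpa using h.fzero
  | succ k ih =>
      have e : ((k+1:ℕ):ℝ) • a = (k:ℝ) • a + a := by
        push_cast; rw [add_smul, one_smul]
      rw [e, h.fadd _ (h.natsmul_mem a ha k) _ ha, ih]; push_cast; ring

theorem smul_mem (h : IsPF pf) (a : W) (ha : a ∈ pf.1) {t : ℝ} (ht : 0 ≤ t) : t • a ∈ pf.1 := by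
  obtain ⟨n, hn⟩ := exists_nat_ge t
  have hA : (0:W) ≤ a := h.nonneg_mem a ha
  have key : t • a + ((n:ℝ) - t) • a = (n:ℝ) • a := by rw [← add_smul]; ring_nf
  refine h.divisor (t • a) (((n:ℝ) - t) • a) (smul_nonneg ht hA)
    (smul_nonneg (by linarith) hA) ?_
  rw [key]; exact h.natsmul_mem a ha n

theorem mono (h : IsPF pf) {a b : W} (ha : 0 ≤ a) (hab : 0 ≤ b - a) (hb : b ∈ pf.1) :
    a ∈ pf.1 ∧ pf.2 a ≤ pf.2 b := by
  have h1 : a + (b - a) = b := by abel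
  have hmem : a ∈ pf.1 := h.divisor a (b-a) ha hab (by rw [h1]; exact hb)
  have hmem2 : b - a ∈ pf.1 := by
    refine h.divisor (b-a) a hab ha ?_
    rw [add_comm] at h1; rw [h1]; exact hb
  refine ⟨hmem, ?_⟩
  have := h.fadd a hmem (b-a) hmem2
  rw [h1] at this
  have := h.fnonneg (b-a) hmem2
  linarith

theorem f_smul_zero (h : IsPF pf) {a : W} (ha : a ∈ pf.1) (hz : pf.2 a = 0) {t : ℝ} (ht : 0 ≤ t) :
    t • a ∈ pf.1 ∧ pf.2 (t • a) = 0 := by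
  obtain ⟨n, hn⟩ := exists_nat_ge t
  have hA : (0:W) ≤ a := h.nonneg_mem a ha
  have hm : 0 ≤ (n:ℝ) • a - t • a := by
    rw [← sub_smul]; exact smul_nonneg (by linarith) hA
  have := h.mono (smul_nonneg ht hA) hm (h.natsmul_mem a ha n)
  refine ⟨this.1, le_antisymm ?_ (h.fnonneg _ this.1)⟩
  calc pf.2 (t • a) ≤ pf.2 ((n:ℝ) • a) := this.2
    _ = 0 := by rw [h.f_natsmul a ha n, hz, mul_zero]

end IsPF

def Valid (S : Set (PF W)) : Prop :=
  (∀ pf ∈ S, IsPF pf) ∧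
  (∀ pf ∈ S, ∀ pg ∈ S, pf = pg ∨ pf.1 ⊆ Ker pg ∨ pg.1 ⊆ Ker pf) ∧
  (∀ pf ∈ S, ∃ m ∈ pf.1, 0 < pf.2 m)

structure IsCone (N : Set W) : Prop where
  zero_mem : (0:W) ∈ N
  add_mem : ∀ a ∈ N, ∀ b ∈ N, a + b ∈ N
  smul_mem : ∀ a ∈ N, ∀ t : ℝ, 0 ≤ t → t • a ∈ N
  nonneg_mem : ∀ a ∈ N, (0:W) ≤ a

/-- the face of the positive cone generated by N -/
def FaceOf (N : Set W) : Set W := {m | 0 ≤ m ∧ ∃ n ∈ N, 0 ≤ n - m}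

theorem subset_faceOf {N : Set W} (hN : IsCone N) : N ⊆ FaceOf N :=
  fun n hn => ⟨hN.nonneg_mem n hn, n, hn, by simp⟩

theorem span_bound {N : Set W} (hN : IsCone N) :
    ∀ z ∈ Submodule.span ℝ (FaceOf N), (∃ n ∈ N, 0 ≤ n - z) ∧ (∃ n ∈ N, 0 ≤ n + z) := by
  intro z hz
  induction hz using Submodule.span_induction with
  | mem x hx =>
      obtain ⟨hx0, n, hn, hnn⟩ := hx
      exact ⟨⟨n, hn, hnn⟩, ⟨0, hN.zero_mem, by simpa using hx0⟩⟩
  | zero => exact ⟨⟨0, hN.zero_mem, by simp⟩, ⟨0, hN.zero_mem, by simp⟩⟩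
  | add x y hx hy ihx ihy =>
      obtain ⟨⟨n1, hn1, h1⟩, ⟨n2, hn2, h2⟩⟩ := ihx
      obtain ⟨⟨m1, hm1, g1⟩, ⟨m2, hm2, g2⟩⟩ := ihy
      constructor
      · refine ⟨n1 + m1, hN.add_mem _ hn1 _ hm1, ?_⟩
        have e : n1 + m1 - (x + y) = (n1 - x) + (m1 - y) := by abel
        rw [e]; exact add_nonneg h1 g1
      · refine ⟨n2 + m2, hN.add_mem _ hn2 _ hm2, ?_⟩
        have e : n2 + m2 + (x + y) = (n2 + x) + (m2 + y) := by abel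
        rw [e]; exact add_nonneg h2 g2
  | smul c x hx ihx =>
      obtain ⟨⟨n1, hn1, h1⟩, ⟨n2, hn2, h2⟩⟩ := ihx
      rcases le_or_gt 0 c with hc | hc
      · refine ⟨⟨c • n1, hN.smul_mem _ hn1 c hc, ?_⟩, ⟨c • n2, hN.smul_mem _ hn2 c hc, ?_⟩⟩
        · rw [← smul_sub]; exact smul_nonneg hc h1
        · rw [← smul_add]; exact smul_nonneg hc h2
      · refine ⟨⟨(-c) • n2, hN.smul_mem _ hn2 (-c) (by linarith), ?_⟩,
               ⟨(-c) • n1, hN.smul_mem _ hn1 (-c) (by linarith), ?_⟩⟩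
        · have : (-c) • n2 - c • x = (-c) • (n2 + x) := by rw [smul_add]; module
          rw [this]; exact smul_nonneg (by linarith) h2
        · have : (-c) • n1 + c • x = (-c) • (n1 - x) := by rw [smul_sub]; module
          rw [this]; exact smul_nonneg (by linarith) h1


theorem ext_lemma {N : Set W} (hN : IsCone N) (φ : W → ℝ)
    (hadd : ∀ a ∈ N, ∀ b ∈ N, φ (a + b) = φ a + φ b)
    (hmono : ∀ a ∈ N, ∀ b ∈ N, 0 ≤ a - b → φ b ≤ φ a) :
    ∃ g : W →ₗ[ℝ] ℝ, (∀ n ∈ N, g n = φ n) ∧ (∀ m ∈ FaceOf N, 0 ≤ g m) := by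
  classical
  have hsmul : ∀ a ∈ N, ∀ t : ℝ, 0 ≤ t → φ (t • a) = t * φ a := by
    intro a ha t ht
    have key := lin_of_add_mono (fun s => φ (s • a))
      (fun s t hs ht => by
        simp only [add_smul]
        exact hadd _ (hN.smul_mem a ha s hs) _ (hN.smul_mem a ha t ht))
      (fun s t hs hst => hmono _ (hN.smul_mem a ha t (hs.trans hst)) _
        (hN.smul_mem a ha s hs)
        (by rw [← sub_smul]; exact smul_nonneg (by linarith) (hN.nonneg_mem a ha)))
      t ht
    simpa using key
  have hφ0 : φ 0 = 0 := by
    have := hadd 0 hN.zero_mem 0 hN.zero_mem; simp at this; linarith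
  set V₀ : Submodule ℝ W := Submodule.span ℝ N with hV₀
  have dec0 : ∀ z ∈ V₀, ∃ pq : W × W, pq.1 ∈ N ∧ pq.2 ∈ N ∧ z = pq.1 - pq.2 := by
    intro z hz
    induction hz using Submodule.span_induction with
    | mem x hx => exact ⟨(x, 0), hx, hN.zero_mem, by simp⟩
    | zero => exact ⟨(0, 0), hN.zero_mem, hN.zero_mem, by simp⟩
    | add x y hx hy ihx ihy =>
        obtain ⟨⟨p, q⟩, hp, hq, he⟩ := ihx
        obtain ⟨⟨p', q'⟩, hp', hq', he'⟩ := ihy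
        exact ⟨(p + p', q + q'), hN.add_mem _ hp _ hp', hN.add_mem _ hq _ hq',
          by rw [he, he']; dsimp only; abel⟩
    | smul c x hx ihx =>
        obtain ⟨⟨p, q⟩, hp, hq, he⟩ := ihx
        rcases le_or_gt 0 c with hc | hc
        · exact ⟨(c • p, c • q), hN.smul_mem _ hp c hc, hN.smul_mem _ hq c hc,
            by rw [he, smul_sub]⟩
        · refine ⟨((-c) • q, (-c) • p), hN.smul_mem _ hq _ (by linarith),
            hN.smul_mem _ hp _ (by linarith), ?_⟩
          rw [he, smul_sub]; module
  have welldef : ∀ p q p' q', p ∈ N → q ∈ N → p' ∈ N → q' ∈ N → p - q = p' - q' →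
      φ p - φ q = φ p' - φ q' := by
    intro p q p' q' hp hq hp' hq' h
    have h2 : p + q' = p' + q := sub_eq_sub_iff_add_eq_add.mp h
    have e1 := hadd p hp q' hq'
    have e2 := hadd p' hp' q hq
    rw [h2, e2] at e1; linarith
  set dfn : ↥V₀ → ℝ := fun z =>
    φ (Classical.choose (dec0 z.1 z.2)).1 - φ (Classical.choose (dec0 z.1 z.2)).2 with hdfn
  have Φspec : ∀ (z : ↥V₀) (p q : W), p ∈ N → q ∈ N → (z : W) = p - q →
      dfn z = φ p - φ q := by
    intro z p q hp hq he
    obtain ⟨h1, h2, h3⟩ := Classical.choose_spec (dec0 z.1 z.2)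
    exact welldef _ _ _ _ h1 h2 hp hq (by rw [← h3, ← he])
  have memN : ∀ n ∈ N, n ∈ V₀ := fun n hn => Submodule.subset_span hn
  have Φadd : ∀ z z' : ↥V₀, dfn (z + z') = dfn z + dfn z' := by
    intro z z'
    obtain ⟨⟨p, q⟩, hp, hq, he⟩ := dec0 z.1 z.2
    obtain ⟨⟨p', q'⟩, hp', hq', he'⟩ := dec0 z'.1 z'.2
    rw [Φspec z p q hp hq he, Φspec z' p' q' hp' hq' he',
      Φspec (z + z') (p + p') (q + q') (hN.add_mem _ hp _ hp') (hN.add_mem _ hq _ hq')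
        (by push_cast [he, he']; abel),
      hadd _ hp _ hp', hadd _ hq _ hq']
    ring
  have Φsmul : ∀ (c : ℝ) (z : ↥V₀), dfn (c • z) = c * dfn z := by
    intro c z
    obtain ⟨⟨p, q⟩, hp, hq, he⟩ := dec0 z.1 z.2
    rw [Φspec z p q hp hq he]
    rcases le_or_gt 0 c with hc | hc
    · rw [Φspec (c • z) (c • p) (c • q) (hN.smul_mem _ hp c hc) (hN.smul_mem _ hq c hc)
        (by push_cast [he]; rw [smul_sub]),
        hsmul _ hp c hc, hsmul _ hq c hc]
      ring
    · rw [Φspec (c • z) ((-c) • q) ((-c) • p) (hN.smul_mem _ hq _ (by linarith))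
        (hN.smul_mem _ hp _ (by linarith))
        (by push_cast [he]; rw [smul_sub]; module),
        hsmul _ hq _ (by linarith), hsmul _ hp _ (by linarith)]
      ring
  set ψ : ↥V₀ →ₗ[ℝ] ℝ :=
    { toFun := dfn, map_add' := Φadd, map_smul' := Φsmul } with hψ
  set fpm : W →ₗ.[ℝ] ℝ := ⟨V₀, ψ⟩ with hfpm
  set F : Set W := FaceOf N with hF
  have hNF : N ⊆ F := subset_faceOf hN
  set sF : Submodule ℝ W := Submodule.span ℝ F with hsF
  obtain ⟨U, hU⟩ := Submodule.exists_isCompl sF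
  have hFadd : ∀ a ∈ F, ∀ b ∈ F, a + b ∈ F := by
    intro a ha b hb
    obtain ⟨ha0, n, hn, hna⟩ := ha
    obtain ⟨hb0, n', hn', hnb⟩ := hb
    refine ⟨add_nonneg ha0 hb0, n + n', hN.add_mem _ hn _ hn', ?_⟩
    have e : n + n' - (a + b) = (n - a) + (n' - b) := by abel
    rw [e]; exact add_nonneg hna hnb
  have hFsmul : ∀ a ∈ F, ∀ c : ℝ, 0 ≤ c → c • a ∈ F := by
    intro a ha c hc
    obtain ⟨ha0, n, hn, hna⟩ := ha
    refine ⟨smul_nonneg hc ha0, c • n, hN.smul_mem _ hn c hc, ?_⟩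
    rw [← smul_sub]; exact smul_nonneg hc hna
  set s : ConvexCone ℝ W :=
    { carrier := {z | ∃ m ∈ F, z - m ∈ U},
      smul_mem' := by
        rintro c hc z ⟨m, hm, hmu⟩
        exact ⟨c • m, hFsmul m hm c hc.le, by rw [← smul_sub]; exact U.smul_mem c hmu⟩,
      add_mem' := by
        rintro z ⟨m, hm, hmu⟩ z' ⟨m', hm', hmu'⟩
        refine ⟨m + m', hFadd m hm m' hm', ?_⟩
        have e : z + z' - (m + m') = (z - m) + (z' - m') := by abel
        rw [e]; exact U.add_mem hmu hmu' } with hs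
  have nonneg : ∀ x : fpm.domain, (x : W) ∈ s → 0 ≤ fpm x := by
    rintro x ⟨m, hm, hmu⟩
    have hx1 : (x : W) ∈ sF := Submodule.span_mono hNF x.2
    have hd : (x : W) - m ∈ sF := sub_mem hx1 (Submodule.subset_span hm)
    have h0 : (x : W) - m = 0 := by
      have := Submodule.disjoint_def.mp hU.disjoint _ hd hmu
      exact this
    have hxm : (x : W) = m := by
      have := sub_eq_zero.mp h0; exact this
    obtain ⟨⟨p, q⟩, hp, hq, he⟩ := dec0 x.1 x.2
    have : fpm x = φ p - φ q := Φspec x p q hp hq he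
    rw [this]
    have hx0 : (0:W) ≤ (x:W) := by rw [hxm]; exact hm.1
    have : 0 ≤ p - q := by rw [← he]; exact hx0
    linarith [hmono p hp q hq this]
  have dense : ∀ y : W, ∃ x : fpm.domain, (x : W) + y ∈ s := by
    intro y
    have hy : y ∈ sF ⊔ U := by rw [hU.sup_eq_top]; trivial
    obtain ⟨a, ha, b, hb, hab⟩ := Submodule.mem_sup.mp hy
    obtain ⟨⟨n1, hn1, h1⟩, ⟨n2, hn2, h2⟩⟩ := span_bound hN a ha
    refine ⟨⟨n2, memN n2 hn2⟩, n2 + a, ⟨h2, n2 + n1, hN.add_mem _ hn2 _ hn1, ?_⟩, ?_⟩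
    · have e : n2 + n1 - (n2 + a) = n1 - a := by abel
      rw [e]; exact h1
    · have e : (n2 : W) + y - (n2 + a) = b := by rw [← hab]; abel
      rw [e]; exact hb
  obtain ⟨g, hg1, hg2⟩ := riesz_extension (s.toPointedCone ⟨0, subset_faceOf hN hN.zero_mem, by simp⟩) fpm nonneg dense
  refine ⟨g, ?_, ?_⟩
  · intro n hn
    have : g n = fpm ⟨n, memN n hn⟩ := hg1 ⟨n, memN n hn⟩
    rw [this, show fpm ⟨n, memN n hn⟩ = dfn ⟨n, memN n hn⟩ from rfl,
      Φspec _ n 0 hn hN.zero_mem (by simp), hφ0]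
    ring
  · intro m hm
    exact hg2 m ⟨m, hm, by rw [sub_self]; exact U.zero_mem⟩


/-- `(FaceOf N, g)` is a partial functional when `g` is linear and nonneg on the face. -/
theorem isPF_faceOf {N : Set W} (hN : IsCone N) (g : W →ₗ[ℝ] ℝ)
    (hg : ∀ m ∈ FaceOf N, 0 ≤ g m) : IsPF (FaceOf N, fun w => g w) := by
  constructor
  · exact ⟨le_refl 0, 0, hN.zero_mem, by simp⟩
  · intro a ha b hb
    obtain ⟨ha0, n, hn, hna⟩ := ha
    obtain ⟨hb0, n', hn', hnb⟩ := hb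
    refine ⟨add_nonneg ha0 hb0, n + n', hN.add_mem _ hn _ hn', ?_⟩
    have e : n + n' - (a + b) = (n - a) + (n' - b) := by abel
    rw [e]; exact add_nonneg hna hnb
  · rintro a b ha hb ⟨hab0, n, hn, hnab⟩
    refine ⟨ha, n, hn, ?_⟩
    have e : n - a = (n - (a + b)) + b := by abel
    rw [e]; exact add_nonneg hnab hb
  · exact fun a ha => ha.1
  · intro z hz0 hz
    obtain ⟨⟨n, hn, hnz⟩, -⟩ := span_bound hN z hz
    exact ⟨hz0, n, hn, hnz⟩
  · intro a _ b _; exact g.map_add a b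
  · exact fun a ha => hg a ha

def Covering (S : Set (PF W)) : Prop :=
  ∀ m : W, 0 ≤ m → m ≠ 0 → ∃ pf ∈ S, m ∈ pf.1 ∧ 0 < pf.2 m

theorem both_ker_contra {S : Set (PF W)} (hS : Valid S) {pf pg : PF W}
    (hpf : pf ∈ S) (hpg : pg ∈ S) (h1 : pf.1 ⊆ Ker pg) (h2 : pg.1 ⊆ Ker pf) : False := by
  obtain ⟨m, hm, hpos⟩ := hS.2.2 pf hpf
  have : m ∈ Ker pf := h2 (h1 hm).1
  rw [this.2] at hpos; exact lt_irrefl 0 hpos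

theorem active_unique {S : Set (PF W)} (hS : Valid S) {pf pg : PF W}
    (hpf : pf ∈ S) (hpg : pg ∈ S) {m : W} (h1 : m ∈ pf.1) (h2 : 0 < pf.2 m)
    (h3 : m ∈ pg.1) (h4 : 0 < pg.2 m) : pf = pg := by
  rcases hS.2.1 pf hpf pg hpg with h | h | h
  · exact h
  · exact absurd (h h1).2 (by positivity)
  · exact absurd (h h3).2 (by positivity)

theorem exists_maximal_covering {S₀ : Set (PF W)} (h₀ : Valid S₀) :
    ∃ S : Set (PF W), Valid S ∧ S₀ ⊆ S ∧ Covering S := by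
  classical
  set 𝒵 : Set (Set (PF W)) := {S | Valid S ∧ S₀ ⊆ S} with h𝒵
  have hchain : ∀ c ⊆ 𝒵, IsChain (· ⊆ ·) c → c.Nonempty → ∃ ub ∈ 𝒵, ∀ s ∈ c, s ⊆ ub := by
    intro c hc hcc ⟨S1, hS1⟩
    refine ⟨⋃₀ c, ⟨⟨?_, ?_, ?_⟩, ?_⟩, fun s hs => Set.subset_sUnion_of_mem hs⟩
    · rintro pf ⟨S, hS, hpf⟩
      exact (hc hS).1.1 pf hpf
    · rintro pf ⟨S, hS, hpf⟩ pg ⟨T, hT, hpg⟩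
      rcases eq_or_ne S T with rfl | hST
      · exact (hc hS).1.2.1 pf hpf pg hpg
      · rcases hcc hS hT hST with h | h
        · exact (hc hT).1.2.1 pf (h hpf) pg hpg
        · exact (hc hS).1.2.1 pf hpf pg (h hpg)
    · rintro pf ⟨S, hS, hpf⟩
      exact (hc hS).1.2.2 pf hpf
    · exact (hc hS1).2.trans (Set.subset_sUnion_of_mem hS1)
  obtain ⟨S, hS₀S, hSmax⟩ := zorn_subset_nonempty 𝒵 hchain S₀ ⟨h₀, subset_rfl⟩
  obtain ⟨hSval, hS₀S'⟩ := hSmax.prop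
  refine ⟨S, hSval, hS₀S, ?_⟩
  by_contra hnc
  simp only [Covering] at hnc
  push_neg at hnc
  obtain ⟨x, hx0, hxne, hxnc⟩ := hnc
  -- x is in no domain with positive value; for pf with x in domain, pf.2 x = 0
  have hxz : ∀ pf ∈ S, x ∈ pf.1 → pf.2 x = 0 := by
    intro pf hpf hx
    rcases eq_or_lt_of_le ((hSval.1 pf hpf).fnonneg x hx) with h | h
    · exact h.symm
    · have := hxnc pf hpf hx; linarith
  set DB : Set W := {m | m = 0 ∨ ∃ pf ∈ S, x ∉ pf.1 ∧ m ∈ pf.1} with hDB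
  have hDB0 : (0:W) ∈ DB := Or.inl rfl
  have hDBnn : ∀ d ∈ DB, (0:W) ≤ d := by
    rintro d (rfl | ⟨pf, hpf, -, hd⟩); · exact le_refl 0
    · exact (hSval.1 pf hpf).nonneg_mem d hd
  have hDBpair : ∀ d ∈ DB, ∀ d' ∈ DB, d = 0 ∨ d' = 0 ∨
      ∃ pf ∈ S, x ∉ pf.1 ∧ d ∈ pf.1 ∧ d' ∈ pf.1 := by
    rintro d (rfl | ⟨pf, hpf, hxf, hd⟩) d' hd'; · exact Or.inl rfl
    rcases hd' with rfl | ⟨pg, hpg, hxg, hd'⟩; · exact Or.inr (Or.inl rfl)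
    rcases hSval.2.1 pf hpf pg hpg with rfl | h | h
    · exact Or.inr (Or.inr ⟨pf, hpf, hxf, hd, hd'⟩)
    · exact Or.inr (Or.inr ⟨pg, hpg, hxg, (h hd).1, hd'⟩)
    · exact Or.inr (Or.inr ⟨pf, hpf, hxf, hd, (h hd').1⟩)
  have hDBadd : ∀ d ∈ DB, ∀ d' ∈ DB, d + d' ∈ DB := by
    intro d hd d' hd'
    rcases hDBpair d hd d' hd' with rfl | rfl | ⟨pf, hpf, hxf, h1, h2⟩
    · simpa using hd'
    · simpa using hd
    · exact Or.inr ⟨pf, hpf, hxf, (hSval.1 pf hpf).add_mem d h1 d' h2⟩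
  have hDBsmul : ∀ d ∈ DB, ∀ t : ℝ, 0 ≤ t → t • d ∈ DB := by
    rintro d (rfl | ⟨pf, hpf, hxf, hd⟩) t ht; · exact Or.inl (by simp)
    · exact Or.inr ⟨pf, hpf, hxf, (hSval.1 pf hpf).smul_mem d hd ht⟩
  have hDBspan : ∀ z : W, 0 ≤ z → z ∈ Submodule.span ℝ DB → z ∈ DB := by
    have key : ∀ z ∈ Submodule.span ℝ DB,
        z = 0 ∨ ∃ pf ∈ S, x ∉ pf.1 ∧ z ∈ Submodule.span ℝ pf.1 := by
      intro z hz
      induction hz using Submodule.span_induction with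
      | mem m hm =>
          rcases hm with rfl | ⟨pf, hpf, hxf, hm⟩; · exact Or.inl rfl
          · exact Or.inr ⟨pf, hpf, hxf, Submodule.subset_span hm⟩
      | zero => exact Or.inl rfl
      | add a b ha hb iha ihb =>
          rcases iha with rfl | ⟨pf, hpf, hxf, hza⟩; · simpa using ihb
          rcases ihb with rfl | ⟨pg, hpg, hxg, hzb⟩
          · exact Or.inr ⟨pf, hpf, hxf, by simpa using hza⟩
          rcases hSval.2.1 pf hpf pg hpg with rfl | h | h
          · exact Or.inr ⟨pf, hpf, hxf, add_mem hza hzb⟩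
          · refine Or.inr ⟨pg, hpg, hxg, add_mem ?_ hzb⟩
            exact Submodule.span_mono (fun y hy => (h hy).1) hza
          · refine Or.inr ⟨pf, hpf, hxf, add_mem hza ?_⟩
            exact Submodule.span_mono (fun y hy => (h hy).1) hzb
      | smul c a ha iha =>
          rcases iha with rfl | ⟨pf, hpf, hxf, hza⟩; · exact Or.inl (by simp)
          · exact Or.inr ⟨pf, hpf, hxf, Submodule.smul_mem _ c hza⟩
    intro z hz0 hz
    rcases key z hz with rfl | ⟨pf, hpf, hxf, hzs⟩
    · exact hDB0
    · exact Or.inr ⟨pf, hpf, hxf, (hSval.1 pf hpf).span_closed z hz0 hzs⟩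
  have hxDB : x ∉ DB := by
    rintro (rfl | ⟨pf, hpf, hxf, hm⟩); · exact hxne rfl
    · exact hxf hm
  -- the new cone
  set N : Set W := {z | ∃ t : ℝ, 0 ≤ t ∧ ∃ d ∈ DB, z = d + t • x} with hNdef
  have hNcone : IsCone N := by
    constructor
    · exact ⟨0, le_refl 0, 0, hDB0, by simp⟩
    · rintro a ⟨t, ht, d, hd, rfl⟩ b ⟨t', ht', d', hd', rfl⟩
      exact ⟨t + t', by linarith, d + d', hDBadd d hd d' hd', by rw [add_smul]; abel⟩
    · rintro a ⟨t, ht, d, hd, rfl⟩ c hc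
      exact ⟨c * t, mul_nonneg hc ht, c • d, hDBsmul d hd c hc,
        by rw [smul_add, smul_smul]⟩
    · rintro a ⟨t, ht, d, hd, rfl⟩
      exact add_nonneg (hDBnn d hd) (smul_nonneg ht hx0)
  -- uniqueness of the coefficient t
  have hUniq : ∀ t t' : ℝ, 0 ≤ t → 0 ≤ t' → ∀ d ∈ DB, ∀ d' ∈ DB,
      d + t • x = d' + t' • x → t = t' := by
    intro t t' ht ht' d hd d' hd' he
    by_contra hne
    have he2 : d - d' = (t' - t) • x := by
      rw [sub_smul]; rw [sub_eq_sub_iff_add_eq_add]; rw [he]; abel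
    have hxspan : x ∈ Submodule.span ℝ DB := by
      have : x = (t' - t)⁻¹ • (d - d') := by
        rw [he2, smul_smul, inv_mul_cancel₀ (sub_ne_zero.mpr (Ne.symm hne)), one_smul]
      rw [this]
      exact Submodule.smul_mem _ _ (sub_mem (Submodule.subset_span hd)
        (Submodule.subset_span hd'))
    exact hxDB (hDBspan x hx0 hxspan)
  set φ : W → ℝ := fun z =>
    if h : ∃ t : ℝ, 0 ≤ t ∧ ∃ d ∈ DB, z = d + t • x then h.choose else 0 with hφdef
  have hφspec : ∀ t : ℝ, 0 ≤ t → ∀ d ∈ DB, φ (d + t • x) = t := by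
    intro t ht d hd
    have hex : ∃ t' : ℝ, 0 ≤ t' ∧ ∃ d' ∈ DB, d + t • x = d' + t' • x :=
      ⟨t, ht, d, hd, rfl⟩
    rw [hφdef]; simp only [hex, dif_pos]
    obtain ⟨ht'0, d', hd', he⟩ := hex.choose_spec
    exact (hUniq _ _ ht'0 ht d' hd' d hd he.symm)
  -- ext_lemma hypotheses
  have hφadd : ∀ a ∈ N, ∀ b ∈ N, φ (a + b) = φ a + φ b := by
    rintro a ⟨t, ht, d, hd, rfl⟩ b ⟨t', ht', d', hd', rfl⟩
    have he : d + t • x + (d' + t' • x) = (d + d') + (t + t') • x := by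
      rw [add_smul]; abel
    rw [he, hφspec _ (by linarith) _ (hDBadd d hd d' hd'), hφspec _ ht _ hd,
      hφspec _ ht' _ hd']
  have hφsmul : ∀ a ∈ N, ∀ c : ℝ, 0 ≤ c → φ (c • a) = c * φ a := by
    rintro a ⟨t, ht, d, hd, rfl⟩ c hc
    have he : c • (d + t • x) = c • d + (c * t) • x := by rw [smul_add, smul_smul]
    rw [he, hφspec _ (mul_nonneg hc ht) _ (hDBsmul d hd c hc), hφspec _ ht _ hd]
  have hφmono : ∀ a ∈ N, ∀ b ∈ N, 0 ≤ a - b → φ b ≤ φ a := by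
    rintro a ⟨t, ht, d, hd, rfl⟩ b ⟨t', ht', d', hd', rfl⟩ hab
    rw [hφspec _ ht _ hd, hφspec _ ht' _ hd']
    by_contra hlt
    push_neg at hlt
    have he2 : (t' - t) • x + (d + t • x - (d' + t' • x)) = d - d' := by
      rw [sub_smul]; abel
    have hdd' : d - d' ∈ DB := by
      refine hDBspan _ ?_ (sub_mem (Submodule.subset_span hd) (Submodule.subset_span hd'))
      rw [← he2]
      exact add_nonneg (smul_nonneg (by linarith) hx0) hab
    have htx : (t' - t) • x ∈ DB := by
      rcases hdd' with h0 | ⟨pf, hpf, hxf, hmem⟩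
      · exfalso
        have h1 : (0:W) ≤ (t' - t) • x := smul_nonneg (by linarith) hx0
        have h2 : (t' - t) • x ≤ d - d' := by
          rw [← sub_nonneg, ← he2]; simpa using hab
        have h3 : (t' - t) • x = 0 := le_antisymm (h0 ▸ h2) h1
        have hne' : t' - t ≠ 0 := (show (0:ℝ) < t' - t by linarith).ne'
        have hx' : x = (t' - t)⁻¹ • ((t' - t) • x) := by
          rw [smul_smul, inv_mul_cancel₀ hne', one_smul]
        rw [h3, smul_zero] at hx'
        exact hxne hx'
      · refine Or.inr ⟨pf, hpf, hxf, ?_⟩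
        refine (hSval.1 pf hpf).divisor _ (d + t • x - (d' + t' • x))
          (smul_nonneg (by linarith) hx0) hab ?_
        rw [he2]; exact hmem
    refine hxDB ?_
    have hne' : t' - t ≠ 0 := (show (0:ℝ) < t' - t by linarith).ne'
    have hx' : x = (t' - t)⁻¹ • ((t' - t) • x) := by
      rw [smul_smul, inv_mul_cancel₀ hne', one_smul]
    rw [hx']
    exact hDBsmul _ htx _ (le_of_lt (inv_pos.mpr (by linarith)))
  obtain ⟨g, hg1, hg2⟩ := ext_lemma hNcone φ hφadd hφmono
  set pfS : PF W := (FaceOf N, fun w => g w) with hpfS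
  have hpfSisPF : IsPF pfS := isPF_faceOf hNcone g hg2
  have hxN : x ∈ N := ⟨1, zero_le_one, 0, hDB0, by simp⟩
  have hgx : pfS.2 x = 1 := by
    have : g x = φ x := hg1 x hxN
    rw [hpfS]; simp only []
    rw [this]
    have : φ (0 + (1:ℝ) • x) = 1 := hφspec 1 zero_le_one 0 hDB0
    simpa using this
  have hxF : x ∈ pfS.1 := subset_faceOf hNcone hxN
  have hDBN : DB ⊆ N := fun d hd => ⟨0, le_refl 0, d, hd, by simp⟩
  have hDBker : DB ⊆ Ker pfS := by
    intro d hd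
    refine ⟨subset_faceOf hNcone (hDBN hd), ?_⟩
    have e1 : g d = φ d := hg1 d (hDBN hd)
    have e2 : φ (d + (0:ℝ) • x) = 0 := hφspec 0 (le_refl 0) d hd
    simp only [zero_smul, add_zero] at e2
    show g d = 0
    rw [e1, e2]
  -- chain conditions for the new element
  have hcond : ∀ pf ∈ S, pf.1 ⊆ Ker pfS ∨ pfS.1 ⊆ Ker pf := by
    intro pf hpf
    by_cases hxf : x ∈ pf.1
    · -- pf ∈ A : FaceOf N ⊆ Ker pf
      right
      have hDBkerpf : DB ⊆ Ker pf := by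
        rintro d (rfl | ⟨pg, hpg, hxg, hd⟩)
        · exact ⟨(hSval.1 pf hpf).zero_mem, (hSval.1 pf hpf).fzero⟩
        · rcases hSval.2.1 pf hpf pg hpg with rfl | h | h
          · exact absurd hxf hxg
          · exact absurd (h hxf).1 hxg
          · exact h hd
      rintro m ⟨hm0, n, ⟨t, ht, d, hd, rfl⟩, hmn⟩
      have hdk := hDBkerpf hd
      have htx := (hSval.1 pf hpf).f_smul_zero hxf (hxz pf hpf hxf) ht
      have hnmem : d + t • x ∈ pf.1 := (hSval.1 pf hpf).add_mem d hdk.1 _ htx.1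
      have hnval : pf.2 (d + t • x) = 0 := by
        rw [(hSval.1 pf hpf).fadd d hdk.1 _ htx.1, hdk.2, htx.2, add_zero]
      obtain ⟨hmmem, hmle⟩ := (hSval.1 pf hpf).mono hm0 hmn hnmem
      exact ⟨hmmem, le_antisymm (hnval ▸ hmle) ((hSval.1 pf hpf).fnonneg m hmmem)⟩
    · -- pf ∈ B : pf.1 ⊆ DB ⊆ Ker pfS
      left
      intro d hd
      exact hDBker (Or.inr ⟨pf, hpf, hxf, hd⟩)
  have hpfSnotS : pfS ∉ S := by
    intro hmem
    have := hxnc pfS hmem hxF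
    rw [hgx] at this; linarith
  have hins : insert pfS S ∈ 𝒵 := by
    refine ⟨⟨?_, ?_, ?_⟩, hS₀S'.trans (Set.subset_insert _ _)⟩
    · rintro pf (rfl | hpf); · exact hpfSisPF
      · exact hSval.1 pf hpf
    · rintro pf (rfl | hpf) pg (rfl | hpg)
      · exact Or.inl rfl
      · rcases hcond pg hpg with h | h
        · exact Or.inr (Or.inr h)
        · exact Or.inr (Or.inl h)
      · rcases hcond pf hpf with h | h
        · exact Or.inr (Or.inl h)
        · exact Or.inr (Or.inr h)
      · exact hSval.2.1 pf hpf pg hpg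
    · rintro pf (rfl | hpf)
      · exact ⟨x, hxF, by rw [hgx]; exact one_pos⟩
      · exact hSval.2.2 pf hpf
  have : insert pfS S ⊆ S := hSmax.le_of_ge hins (Set.subset_insert _ _)
  exact hpfSnotS (this (Set.mem_insert _ _))


section ChainPricing
attribute [local instance] Classical.propDecidable
variable {S : Set (PF W)}

/-- the active functional, via choice -/
noncomputable def act (S : Set (PF W)) : W → PF W := fun m =>
  if h : ∃ pf ∈ S, m ∈ pf.1 ∧ 0 < pf.2 m then h.choose else (∅, fun _ => 0)

theorem act_spec (hS : Valid S) (hC : Covering S) {m : W} (hm : 0 ≤ m) (hne : m ≠ 0) :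
    act S m ∈ S ∧ m ∈ (act S m).1 ∧ 0 < (act S m).2 m := by
  have h := hC m hm hne
  rw [act]; simp only [h, dif_pos]
  obtain ⟨h1, h2, h3⟩ := h.choose_spec
  exact ⟨h1, h2, h3⟩

theorem act_uniq (hS : Valid S) (hC : Covering S) {m : W} (hm : 0 ≤ m) (hne : m ≠ 0) {pf : PF W} (hpf : pf ∈ S)
    (h1 : m ∈ pf.1) (h2 : 0 < pf.2 m) : act S m = pf := by
  obtain ⟨a1, a2, a3⟩ := act_spec hS hC hm hne
  exact active_unique hS a1 hpf a2 a3 h1 h2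

theorem lt_irrefl' (hS : Valid S) {pf : PF W} (hpf : pf ∈ S) : ¬ pf.1 ⊆ Ker pf := fun h =>
  both_ker_contra hS hpf hpf h h

theorem lt_asymm' (hS : Valid S) {pf pg : PF W} (hpf : pf ∈ S) (hpg : pg ∈ S)
    (h : pf.1 ⊆ Ker pg) : ¬ pg.1 ⊆ Ker pf := fun h' => both_ker_contra hS hpf hpg h h'

theorem lt_trans' {pf pg ph : PF W} (h1 : pf.1 ⊆ Ker pg) (h2 : pg.1 ⊆ Ker ph) :
    pf.1 ⊆ Ker ph := fun a ha => h2 (h1 ha).1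

/-- the pricing induced by a covering chain -/
noncomputable def chainR (S : Set (PF W)) : W → W → ℝ≥0∞ := fun u v =>
  if u = 0 then (if v = 0 then 1 else 0)
  else if v = 0 then ⊤
  else if act S u = act S v then ENNReal.ofReal ((act S u).2 u / (act S u).2 v)
  else if (act S u).1 ⊆ Ker (act S v) then 0 else ⊤

/-- behaviour of `act` under addition -/
theorem act_add (hS : Valid S) (hC : Covering S) {u v : W} (hu : 0 ≤ u) (hune : u ≠ 0) (hv : 0 ≤ v) (hvne : v ≠ 0) :
    (act S (u+v) = act S u ∧ act S (u+v) = act S v ∧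
      (act S u).2 (u+v) = (act S u).2 u + (act S u).2 v) ∨
    ((act S v).1 ⊆ Ker (act S u) ∧ act S (u+v) = act S u ∧
      (act S u).2 (u+v) = (act S u).2 u) ∨
    ((act S u).1 ⊆ Ker (act S v) ∧ act S (u+v) = act S v ∧
      (act S v).2 (u+v) = (act S v).2 v) := by
  obtain ⟨hfS, hfu, hfpos⟩ := act_spec hS hC hu hune
  obtain ⟨hgS, hgv, hgpos⟩ := act_spec hS hC hv hvne
  have huv : 0 ≤ u + v := add_nonneg hu hv
  have huvne : u + v ≠ 0 := by
    intro h
    have : u ≤ 0 := by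
      have : u ≤ u + v := le_add_of_nonneg_right hv
      rw [h] at this; exact this
    exact hune (le_antisymm this hu)
  have hfPF := hS.1 _ hfS
  have hgPF := hS.1 _ hgS
  rcases hS.2.1 _ hfS _ hgS with heq | hlt | hgt
  · -- same class
    left
    have hvf : v ∈ (act S u).1 := by rw [heq]; exact hgv
    have hmem : u + v ∈ (act S u).1 := hfPF.add_mem u hfu v hvf
    have hval : (act S u).2 (u+v) = (act S u).2 u + (act S u).2 v := hfPF.fadd u hfu v hvf
    have hpos : 0 < (act S u).2 (u+v) := by
      rw [hval]
      have := hfPF.fnonneg v hvf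
      linarith
    have := act_uniq hS hC huv huvne hfS hmem hpos
    exact ⟨this, heq ▸ this, hval⟩
  · -- act u < act v : v dominates
    right; right
    refine ⟨hlt, ?_, ?_⟩
    · have huf : u ∈ (act S v).1 ∧ (act S v).2 u = 0 := hlt hfu
      have hmem : u + v ∈ (act S v).1 := hgPF.add_mem u huf.1 v hgv
      have hval : (act S v).2 (u+v) = (act S v).2 v := by
        rw [hgPF.fadd u huf.1 v hgv, huf.2, zero_add]
      exact act_uniq hS hC huv huvne hgS hmem (by rw [hval]; exact hgpos)
    · have huf : u ∈ (act S v).1 ∧ (act S v).2 u = 0 := hlt hfu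
      rw [hgPF.fadd u huf.1 v hgv, huf.2, zero_add]
  · -- act v < act u : u dominates
    right; left
    refine ⟨hgt, ?_, ?_⟩
    · have hvf : v ∈ (act S u).1 ∧ (act S u).2 v = 0 := hgt hgv
      have hmem : u + v ∈ (act S u).1 := hfPF.add_mem u hfu v hvf.1
      have hval : (act S u).2 (u+v) = (act S u).2 u := by
        rw [hfPF.fadd u hfu v hvf.1, hvf.2, add_zero]
      exact act_uniq hS hC huv huvne hfS hmem (by rw [hval]; exact hfpos)
    · have hvf : v ∈ (act S u).1 ∧ (act S u).2 v = 0 := hgt hgv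
      rw [hfPF.fadd u hfu v hvf.1, hvf.2, add_zero]

theorem chainR_eval {u v : W} (hune : u ≠ 0) (hvne : v ≠ 0) :
    chainR S u v = (if act S u = act S v then
      ENNReal.ofReal ((act S u).2 u / (act S u).2 v)
      else if (act S u).1 ⊆ Ker (act S v) then 0 else ⊤) := by
  rw [chainR]; simp [hune, hvne]

theorem chainR_pricing (hS : Valid S) (hC : Covering S) :
    ∃ R : VectorPricing W, R.r = chainR S := by
  have tri : ∀ {pa pb : PF W}, pa ∈ S → pb ∈ S → pa ≠ pb → ¬ pa.1 ⊆ Ker pb →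
      pb.1 ⊆ Ker pa := by
    intro pa pb ha hb hne hns
    rcases hS.2.1 pa ha pb hb with h | h | h
    · exact absurd h hne
    · exact absurd h hns
    · exact h
  refine ⟨⟨chainR S, ?_, ?_, ?_⟩, rfl⟩
  · -- additivity
    intro u v w hu hv hw hwne
    rcases eq_or_ne u 0 with rfl | hune
    · rw [zero_add]
      have : chainR S 0 w = 0 := by rw [chainR]; simp [hwne]
      rw [this, zero_add]
    rcases eq_or_ne v 0 with rfl | hvne
    · rw [add_zero]
      have : chainR S 0 w = 0 := by rw [chainR]; simp [hwne]
      rw [this, add_zero]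
    have huv : 0 ≤ u + v := add_nonneg hu hv
    have huvne : u + v ≠ 0 := by
      intro h
      have h2 : u ≤ 0 := by
        have : u ≤ u + v := le_add_of_nonneg_right hv
        rw [h] at this; exact this
      exact hune (le_antisymm h2 hu)
    obtain ⟨hfS, hfu, hfpos⟩ := act_spec hS hC hu hune
    obtain ⟨hgS, hgv, hgpos⟩ := act_spec hS hC hv hvne
    obtain ⟨hhS, hhw, hhpos⟩ := act_spec hS hC hw hwne
    rw [chainR_eval huvne hwne, chainR_eval hune hwne, chainR_eval hvne hwne]
    rcases act_add hS hC hu hune hv hvne with ⟨he1, he2, hval⟩ | ⟨hlt, he1, hval⟩ |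
      ⟨hlt, he1, hval⟩
    · -- (a) same class
      have hfg : act S u = act S v := he1.symm.trans he2
      rw [he1, hval, ← hfg]
      have hvf : v ∈ (act S u).1 := by rw [hfg]; exact hgv
      have hvpos : 0 < (act S u).2 v := by rw [hfg]; exact hgpos
      by_cases hfh : act S u = act S w
      · rw [if_pos hfh, if_pos hfh, if_pos hfh]
        have hwf : w ∈ (act S u).1 := by rw [hfh]; exact hhw
        have hwnn : 0 ≤ (act S u).2 w := (hS.1 _ hfS).fnonneg w hwf
        rw [add_div, ENNReal.ofReal_add (div_nonneg hfpos.le hwnn)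
          (div_nonneg hvpos.le hwnn)]
      · rw [if_neg hfh, if_neg hfh, if_neg hfh]
        by_cases hsub : (act S u).1 ⊆ Ker (act S w)
        · simp only [if_pos hsub, zero_add]
        · simp only [if_neg hsub, top_add _]
    · -- (b) v negligible : act (u+v) = act u
      rw [he1, hval]
      have hgltf : (act S v).1 ⊆ Ker (act S u) := hlt
      have hgnef : act S v ≠ act S u := by
        intro h; rw [h] at hgltf; exact lt_irrefl' hS hfS hgltf
      by_cases hfh : act S u = act S w
      · rw [if_pos hfh]
        have hgneh : act S v ≠ act S w := fun h => hgnef (h.trans hfh.symm)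
        have hgsubh : (act S v).1 ⊆ Ker (act S w) := by rw [← hfh]; exact hgltf
        rw [if_neg hgneh, if_pos hgsubh, add_zero]
      · rw [if_neg hfh]
        by_cases hsub : (act S u).1 ⊆ Ker (act S w)
        · rw [if_pos hsub]
          have hgneh : act S v ≠ act S w := by
            intro h
            exact both_ker_contra hS hfS hhS hsub (h ▸ hgltf)
          have hgsubh : (act S v).1 ⊆ Ker (act S w) := lt_trans' hgltf hsub
          rw [if_neg hgneh, if_pos hgsubh, add_zero]
        · rw [if_neg hsub, top_add _]
    · -- (c) u negligible : act (u+v) = act v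
      rw [he1, hval]
      have hfltg : (act S u).1 ⊆ Ker (act S v) := hlt
      have hfneg : act S u ≠ act S v := by
        intro h; rw [h] at hfltg; exact lt_irrefl' hS hgS hfltg
      by_cases hgh : act S v = act S w
      · rw [if_pos hgh]
        have hfneh : act S u ≠ act S w := fun h => hfneg (h.trans hgh.symm)
        have hfsubh : (act S u).1 ⊆ Ker (act S w) := by rw [← hgh]; exact hfltg
        rw [if_neg hfneh, if_pos hfsubh, zero_add]
      · rw [if_neg hgh]
        by_cases hsub : (act S v).1 ⊆ Ker (act S w)
        · rw [if_pos hsub]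
          have hfneh : act S u ≠ act S w := by
            intro h
            exact both_ker_contra hS hgS hhS hsub (h ▸ hfltg)
          have hfsubh : (act S u).1 ⊆ Ker (act S w) := lt_trans' hfltg hsub
          rw [if_neg hfneh, if_pos hfsubh, zero_add]
        · rw [if_neg hsub, add_top _]
  · -- cocycle
    intro u v w hu hv hw hnind
    rcases eq_or_ne u 0 with rfl | hune
    · rcases eq_or_ne v 0 with rfl | hvne
      · have h00 : chainR S (0:W) 0 = 1 := by rw [chainR]; simp
        rw [h00, one_mul]
      · have h0v : chainR S (0:W) v = 0 := by rw [chainR]; simp [hvne]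
        rcases eq_or_ne w 0 with rfl | hwne
        · exfalso
          have hv0 : chainR S v 0 = ⊤ := by rw [chainR]; simp [hvne]
          exact hnind (Or.inl ⟨h0v, hv0⟩)
        · have h0w : chainR S (0:W) w = 0 := by rw [chainR]; simp [hwne]
          rw [h0w, h0v, zero_mul]
    · rcases eq_or_ne v 0 with rfl | hvne
      · have hu0 : chainR S u 0 = ⊤ := by rw [chainR]; simp [hune]
        rcases eq_or_ne w 0 with rfl | hwne
        · have h00 : chainR S (0:W) 0 = 1 := by rw [chainR]; simp
          rw [hu0, h00, mul_one]
        · exfalso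
          have h0w : chainR S (0:W) w = 0 := by rw [chainR]; simp [hwne]
          exact hnind (Or.inr ⟨hu0, h0w⟩)
      · rcases eq_or_ne w 0 with rfl | hwne
        · have hu0 : chainR S u 0 = ⊤ := by rw [chainR]; simp [hune]
          have hv0 : chainR S v 0 = ⊤ := by rw [chainR]; simp [hvne]
          rw [hu0, hv0]
          have huvne : chainR S u v ≠ 0 := by
            intro h; exact hnind (Or.inl ⟨h, hv0⟩)
          rw [ENNReal.mul_top huvne]
        · -- all nonzero
          obtain ⟨hfS, hfu, hfpos⟩ := act_spec hS hC hu hune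
          obtain ⟨hgS, hgv, hgpos⟩ := act_spec hS hC hv hvne
          obtain ⟨hhS, hhw, hhpos⟩ := act_spec hS hC hw hwne
          rw [chainR_eval hune hvne, chainR_eval hvne hwne] at hnind ⊢
          rw [chainR_eval hune hwne]
          by_cases hfg : act S u = act S v
          · have hvf : 0 < (act S u).2 v := by rw [hfg]; exact hgpos
            rw [if_pos hfg] at hnind ⊢
            by_cases hgh : act S v = act S w
            · have hfh : act S u = act S w := hfg.trans hgh
              rw [if_pos hgh] at hnind ⊢
              rw [if_pos hfh]
              have hwg : 0 < (act S v).2 w := by rw [hgh]; exact hhpos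
              rw [← ENNReal.ofReal_mul (div_nonneg hfpos.le hvf.le)]
              congr 1
              have e1 : (act S v).2 v = (act S u).2 v := by rw [hfg]
              have e2 : (act S v).2 w = (act S u).2 w := by rw [hfg]
              rw [e1, e2]
              field_simp
            · rw [if_neg hgh] at hnind ⊢
              have hfh : act S u ≠ act S w := fun h => hgh (hfg.symm.trans h)
              rw [if_neg hfh]
              by_cases hsub : (act S v).1 ⊆ Ker (act S w)
              · rw [if_pos hsub] at hnind ⊢
                have : (act S u).1 ⊆ Ker (act S w) := by rw [hfg]; exact hsub
                rw [if_pos this, mul_zero]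
              · rw [if_neg hsub] at hnind ⊢
                have : ¬ (act S u).1 ⊆ Ker (act S w) := by rw [hfg]; exact hsub
                rw [if_neg this]
                rw [ENNReal.mul_top (by
                  simp only [ne_eq, ENNReal.ofReal_eq_zero, not_le]
                  exact div_pos hfpos hvf)]
          · rw [if_neg hfg] at hnind ⊢
            by_cases hsubfg : (act S u).1 ⊆ Ker (act S v)
            · rw [if_pos hsubfg] at hnind ⊢
              by_cases hgh : act S v = act S w
              · rw [if_pos hgh] at hnind ⊢
                have hfh : act S u ≠ act S w := fun h => hfg (h.trans hgh.symm)
                have hsubfh : (act S u).1 ⊆ Ker (act S w) := by rw [← hgh]; exact hsubfg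
                rw [if_neg hfh, if_pos hsubfh, zero_mul]
              · rw [if_neg hgh] at hnind ⊢
                by_cases hsub : (act S v).1 ⊆ Ker (act S w)
                · rw [if_pos hsub] at hnind ⊢
                  have hfh : act S u ≠ act S w := by
                    intro h
                    exact both_ker_contra hS hgS hhS hsub (h ▸ hsubfg)
                  have hsubfh : (act S u).1 ⊆ Ker (act S w) := lt_trans' hsubfg hsub
                  rw [if_neg hfh, if_pos hsubfh, zero_mul]
                · rw [if_neg hsub] at hnind
                  exact absurd (Or.inl ⟨rfl, rfl⟩) hnind
            · rw [if_neg hsubfg] at hnind ⊢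
              have hsubgf : (act S v).1 ⊆ Ker (act S u) :=
                tri hfS hgS hfg hsubfg
              by_cases hgh : act S v = act S w
              · rw [if_pos hgh] at hnind ⊢
                have hfh : act S u ≠ act S w := fun h => hfg (h.trans hgh.symm)
                have hnsubfh : ¬ (act S u).1 ⊆ Ker (act S w) := by
                  rw [← hgh]
                  intro h
                  exact both_ker_contra hS hfS hgS h hsubgf
                rw [if_neg hfh, if_neg hnsubfh]
                have hwg : 0 < (act S v).2 w := by rw [hgh]; exact hhpos
                rw [ENNReal.top_mul (by
                  simp only [ne_eq, ENNReal.ofReal_eq_zero, not_le]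
                  exact div_pos hgpos hwg)]
              · rw [if_neg hgh] at hnind ⊢
                by_cases hsub : (act S v).1 ⊆ Ker (act S w)
                · rw [if_pos hsub] at hnind
                  exact absurd (Or.inr ⟨rfl, rfl⟩) hnind
                · rw [if_neg hsub] at hnind ⊢
                  have hsubhg : (act S w).1 ⊆ Ker (act S v) :=
                    tri hgS hhS hgh hsub
                  have hfh : act S u ≠ act S w := by
                    intro h
                    have : (act S w).1 ⊆ Ker (act S u) := lt_trans' hsubhg hsubgf
                    rw [← h] at this
                    exact lt_irrefl' hS hfS this
                  have hnsubfh : ¬ (act S u).1 ⊆ Ker (act S w) := by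
                    intro h
                    exact both_ker_contra hS hfS hhS h (lt_trans' hsubhg hsubgf)
                  rw [if_neg hfh, if_neg hnsubfh, ENNReal.top_mul_top]
  · -- normalization
    intro u hu
    rcases eq_or_ne u 0 with rfl | hune
    · rw [chainR]; simp
    · obtain ⟨hfS, hfu, hfpos⟩ := act_spec hS hC hu hune
      rw [chainR_eval hune hune, if_pos rfl, div_self hfpos.ne', ENNReal.ofReal_one]

end ChainPricing

end VPExt

/-- Every vector pricing on a vector subspace `V` of an ordered vector space `W`
(with the induced order) extends to a vector pricing on `W`. -/
theorem vectorPricing_extend {W : Type*} [AddCommGroup W] [PartialOrder W]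
    [IsOrderedAddMonoid W] [Module ℝ W]
    [PosSMulStrictMono ℝ W] (V : Submodule ℝ W) (r : VectorPricing V) :
    ∃ R : VectorPricing W, ∀ u v : V, 0 ≤ u → 0 ≤ v →
      R.r (u : W) (v : W) = r.r u v := by
  classical
  open VPExt in
  -- order bridging between `V` and `W`
  have hcoe_le : ∀ p : V, (0 ≤ p) ↔ ((0:W) ≤ (p:W)) := fun p => by
    constructor <;> intro h <;> exact_mod_cast h
  have hle_coe : ∀ p q : V, (p ≤ q) ↔ ((p:W) ≤ (q:W)) := fun p q => by
    constructor <;> intro h <;> exact_mod_cast h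
  have hne_coe : ∀ p : V, p ≠ 0 → (p:W) ≠ 0 := fun p h => by simpa using h
  have hsm_nonneg : ∀ (t : ℝ) (p : V), 0 ≤ t → 0 ≤ p → 0 ≤ t • p := by
    intro t p ht hp
    rw [hcoe_le] at hp ⊢
    exact smul_nonneg ht hp
  -- basic facts about the pricing r
  have r0 : ∀ w : V, 0 ≤ w → w ≠ 0 → r.r 0 w = 0 := by
    intro w hw hne
    have h := r.add w 0 w hw le_rfl hw hne
    rw [add_zero, r.one w hw] at h
    have h1 : (1:ℝ≥0∞) + 0 = 1 + r.r 0 w := by rw [add_zero]; exact h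
    exact ((ENNReal.add_right_inj (by simp)).mp h1).symm
  have rtop : ∀ w : V, 0 ≤ w → w ≠ 0 → r.r w 0 = ⊤ := by
    intro w hw hne
    by_contra hnetop
    have hnind : ¬((r.r w 0 = 0 ∧ r.r 0 w = ⊤) ∨ (r.r w 0 = ⊤ ∧ r.r 0 w = 0)) := by
      rintro (⟨h1, h2⟩ | ⟨h1, h2⟩)
      · rw [r0 w hw hne] at h2; exact ENNReal.zero_ne_top h2
      · exact hnetop h1
    have h := r.cocycle w 0 w hw le_rfl hw hnind
    rw [r.one w hw, r0 w hw hne, mul_zero] at h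
    exact one_ne_zero h
  have rmono : ∀ p q w : V, 0 ≤ p → p ≤ q → 0 ≤ w → w ≠ 0 → r.r p w ≤ r.r q w := by
    intro p q w hp hpq hw hne
    have hd : 0 ≤ q - p := sub_nonneg.mpr hpq
    have h := r.add p (q - p) w hp hd hw hne
    have e : p + (q - p) = q := by abel
    rw [e] at h
    rw [h]; exact le_self_add
  have rnsmul : ∀ (n : ℕ) (p w : V), 0 ≤ p → 0 ≤ w → w ≠ 0 →
      r.r ((n:ℝ) • p) w = n * r.r p w := by
    intro n p w hp hw hne
    induction n with
    | zero => simp [r0 w hw hne, r0 _ hw hne]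
    | succ k ih =>
        have e : ((k+1:ℕ):ℝ) • p = (k:ℝ) • p + p := by
          push_cast; rw [add_smul, one_smul]
        rw [e, r.add _ p w (hsm_nonneg _ p (by positivity) hp) hp hw hne, ih]
        push_cast
        rw [add_mul, one_mul]
  have rsmulfin : ∀ (t : ℝ) (p w : V), 0 ≤ t → 0 ≤ p → 0 ≤ w → w ≠ 0 →
      r.r p w ≠ ⊤ → r.r (t • p) w ≠ ⊤ := by
    intro t p w ht hp hw hne hfin
    obtain ⟨n, hn⟩ := exists_nat_ge t
    have hle : t • p ≤ (n:ℝ) • p := by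
      rw [hle_coe]
      have h2 : (0:W) ≤ ((n:ℝ) - t) • (p:W) := smul_nonneg (by linarith) ((hcoe_le p).mp hp)
      rw [sub_smul] at h2
      have h3 : t • (p:W) ≤ (n:ℝ) • (p:W) := by
        have := sub_nonneg.mp h2; exact this
      exact_mod_cast h3
    have h1 := rmono _ _ w (hsm_nonneg t p ht hp) hle hw hne
    rw [rnsmul n p w hp hw hne] at h1
    exact ne_top_of_le_ne_top (ENNReal.mul_ne_top (ENNReal.natCast_ne_top n) hfin) h1
  have rcocL : ∀ p q s : V, 0 ≤ p → 0 ≤ q → 0 ≤ s → r.r p q ≠ 0 → r.r p q ≠ ⊤ →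
      r.r p s = r.r p q * r.r q s := by
    intro p q s hp hq hs h1 h2
    exact r.cocycle p q s hp hq hs (by rintro (⟨h, _⟩ | ⟨h, _⟩); exacts [h1 h, h2 h])
  have rcocR : ∀ p q s : V, 0 ≤ p → 0 ≤ q → 0 ≤ s → r.r q s ≠ 0 → r.r q s ≠ ⊤ →
      r.r p s = r.r p q * r.r q s := by
    intro p q s hp hq hs h1 h2
    exact r.cocycle p q s hp hq hs (by rintro (⟨_, h⟩ | ⟨_, h⟩); exacts [h2 h, h1 h])
  have simsymm : ∀ p q : V, 0 ≤ p → 0 ≤ q → r.r p q ≠ 0 → r.r p q ≠ ⊤ →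
      r.r q p ≠ 0 ∧ r.r q p ≠ ⊤ := by
    intro p q hp hq h1 h2
    have h := rcocL p q p hp hq hp h1 h2
    rw [r.one p hp] at h
    constructor
    · intro h0; rw [h0, mul_zero] at h; exact one_ne_zero h
    · intro h0; rw [h0, ENNReal.mul_top h1] at h; exact (ENNReal.one_ne_top) h
  have rinvtop : ∀ p q : V, 0 ≤ p → 0 ≤ q → r.r p q = ⊤ → r.r q p = 0 := by
    intro p q hp hq htop
    by_contra hne
    have h := r.cocycle q p q hq hp hq (by
      rintro (⟨h1, h2⟩ | ⟨h1, h2⟩)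
      · exact hne h1
      · rw [htop] at h2; exact ENNReal.top_ne_zero h2)
    rw [r.one q hq, htop, ENNReal.mul_top hne] at h
    exact ENNReal.one_ne_top h
  have rinv0 : ∀ p q : V, 0 ≤ p → 0 ≤ q → q ≠ 0 → r.r p q = 0 → r.r q p = ⊤ := by
    intro p q hp hq hqne h0
    by_contra hne
    have h := r.cocycle q p q hq hp hq (by
      rintro (⟨h1, h2⟩ | ⟨h1, h2⟩)
      · rw [h0] at h2; exact ENNReal.zero_ne_top h2
      · exact hne h1)
    rw [r.one q hq, h0, mul_zero] at h
    exact one_ne_zero h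
  -- the classes of the pricing on V
  let Ω : Type _ := {p : V // 0 ≤ p ∧ p ≠ 0}
  letI std : Setoid Ω :=
    ⟨fun p q => r.r p.1 q.1 ≠ 0 ∧ r.r p.1 q.1 ≠ ⊤, by
      constructor
      · intro p
        rw [r.one p.1 p.2.1]
        exact ⟨one_ne_zero, ENNReal.one_ne_top⟩
      · intro p q h
        exact simsymm p.1 q.1 p.2.1 q.2.1 h.1 h.2
      · intro p q s h1 h2
        rw [rcocL p.1 q.1 s.1 p.2.1 q.2.1 s.2.1 h1.1 h1.2]
        exact ⟨mul_ne_zero h1.1 h2.1, ENNReal.mul_ne_top h1.2 h2.2⟩⟩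
  let bb : Quotient std → Ω := Quotient.out
  have hbbout : ∀ p : Ω, r.r (bb (Quotient.mk std p)).1 p.1 ≠ 0 ∧
      r.r (bb (Quotient.mk std p)).1 p.1 ≠ ⊤ := by
    intro p
    have h : std.r (bb (Quotient.mk std p)) p := Quotient.mk_out (s := std) p
    exact h
  have hbb : ∀ p : Ω, r.r p.1 (bb (Quotient.mk std p)).1 ≠ 0 ∧
      r.r p.1 (bb (Quotient.mk std p)).1 ≠ ⊤ := fun p =>
    simsymm _ _ (bb _).2.1 p.2.1 (hbbout p).1 (hbbout p).2
  -- the cone of elements dominated by the class c, and its functional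
  let Nc : Quotient std → Set W := fun c =>
    {w | ∃ p : V, 0 ≤ p ∧ (p:W) = w ∧ r.r p (bb c).1 ≠ ⊤}
  let φc : Quotient std → W → ℝ := fun c w =>
    if h : ∃ p : V, 0 ≤ p ∧ (p:W) = w ∧ r.r p (bb c).1 ≠ ⊤
    then (r.r h.choose (bb c).1).toReal else 0
  have φspec : ∀ c (p : V), 0 ≤ p → r.r p (bb c).1 ≠ ⊤ →
      φc c (p:W) = (r.r p (bb c).1).toReal := by
    intro c p hp hfin
    have hex : ∃ p' : V, 0 ≤ p' ∧ (p':W) = (p:W) ∧ r.r p' (bb c).1 ≠ ⊤ := ⟨p, hp, rfl, hfin⟩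
    simp only [φc, hex, dif_pos]
    obtain ⟨h1, h2, h3⟩ := hex.choose_spec
    have he : hex.choose = p := by exact_mod_cast h2
    rw [he]
  have hNcone : ∀ c, VPExt.IsCone (Nc c) := by
    intro c
    constructor
    · exact ⟨0, le_rfl, by simp, by
        rw [r0 _ (bb c).2.1 (bb c).2.2]; exact ENNReal.zero_ne_top⟩
    · rintro a ⟨p, hp, rfl, hfin⟩ b ⟨q, hq, rfl, hfin'⟩
      refine ⟨p + q, ?_, by push_cast; ring, ?_⟩
      · rw [hcoe_le] at hp hq ⊢
        push_cast
        exact add_nonneg hp hq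
      · rw [r.add p q _ hp hq (bb c).2.1 (bb c).2.2]
        exact ENNReal.add_ne_top.mpr ⟨hfin, hfin'⟩
    · rintro a ⟨p, hp, rfl, hfin⟩ t ht
      exact ⟨t • p, hsm_nonneg t p ht hp, rfl,
        rsmulfin t p _ ht hp (bb c).2.1 (bb c).2.2 hfin⟩
    · rintro a ⟨p, hp, rfl, hfin⟩
      exact (hcoe_le p).mp hp
  have hφadd : ∀ c, ∀ a ∈ Nc c, ∀ b ∈ Nc c, φc c (a + b) = φc c a + φc c b := by
    rintro c a ⟨p, hp, rfl, hfin⟩ b ⟨q, hq, rfl, hfin'⟩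
    have hpq : 0 ≤ p + q := by
      rw [hcoe_le] at hp hq ⊢; push_cast; exact add_nonneg hp hq
    have hfin'' : r.r (p + q) (bb c).1 ≠ ⊤ := by
      rw [r.add p q _ hp hq (bb c).2.1 (bb c).2.2]
      exact ENNReal.add_ne_top.mpr ⟨hfin, hfin'⟩
    have e : (p:W) + (q:W) = ((p + q : V) : W) := by push_cast; ring
    rw [e, φspec c _ hpq hfin'', φspec c p hp hfin, φspec c q hq hfin',
      r.add p q _ hp hq (bb c).2.1 (bb c).2.2, ENNReal.toReal_add hfin hfin']
  have hφmono : ∀ c, ∀ a ∈ Nc c, ∀ b ∈ Nc c, 0 ≤ a - b → φc c b ≤ φc c a := by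
    rintro c a ⟨p, hp, rfl, hfin⟩ b ⟨q, hq, rfl, hfin'⟩ hab
    have hqp : q ≤ p := by
      rw [hle_coe]
      have := sub_nonneg.mp hab
      exact this
    rw [φspec c p hp hfin, φspec c q hq hfin']
    exact ENNReal.toReal_le_toReal hfin' hfin |>.mpr
      (rmono q p _ hq hqp (bb c).2.1 (bb c).2.2)
  choose gs hg1 hg2 using fun c => VPExt.ext_lemma (hNcone c) (φc c) (hφadd c) (hφmono c)
  let pfc : Quotient std → VPExt.PF W := fun c => (VPExt.FaceOf (Nc c), fun w => gs c w)
  have hpfcPF : ∀ c, VPExt.IsPF (pfc c) := fun c =>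
    VPExt.isPF_faceOf (hNcone c) (gs c) (hg2 c)
  have hval : ∀ c (p : V), 0 ≤ p → r.r p (bb c).1 ≠ ⊤ →
      (p:W) ∈ Nc c ∧ gs c (p:W) = (r.r p (bb c).1).toReal := by
    intro c p hp hfin
    have hmem : (p:W) ∈ Nc c := ⟨p, hp, rfl, hfin⟩
    exact ⟨hmem, by rw [hg1 c _ hmem, φspec c p hp hfin]⟩
  have htrace : ∀ c (p : V), 0 ≤ p → (p:W) ∈ VPExt.FaceOf (Nc c) →
      r.r p (bb c).1 ≠ ⊤ := by
    rintro c p hp ⟨hm0, n, ⟨q, hq, rfl, hqfin⟩, hle⟩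
    have hpq : p ≤ q := by
      rw [hle_coe]
      exact sub_nonneg.mp hle
    exact ne_top_of_le_ne_top hqfin (rmono p q _ hp hpq (bb c).2.1 (bb c).2.2)
  have hF5 : ∀ c c', r.r (bb c).1 (bb c').1 = 0 → (pfc c).1 ⊆ VPExt.Ker (pfc c') := by
    rintro c c' h0 m ⟨hm0, n, ⟨q, hq, rfl, hqfin⟩, hle⟩
    have hq' : r.r q (bb c').1 = 0 := by
      have h := r.cocycle q (bb c).1 (bb c').1 hq (bb c).2.1 (bb c').2.1 (by
        rintro (⟨h1, h2⟩ | ⟨h1, h2⟩)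
        · rw [h0] at h2; exact ENNReal.zero_ne_top h2
        · exact hqfin h1)
      rw [h0, mul_zero] at h
      exact h
    have hqv := hval c' q hq (by rw [hq']; exact ENNReal.zero_ne_top)
    have hqF : (q:W) ∈ (pfc c').1 := VPExt.subset_faceOf (hNcone c') hqv.1
    obtain ⟨hmmem, hmle⟩ := (hpfcPF c').mono hm0 hle hqF
    refine ⟨hmmem, ?_⟩
    have hq0 : gs c' (q:W) = 0 := by rw [hqv.2, hq']; simp
    have : (pfc c').2 ((q:W)) = 0 := hq0
    exact le_antisymm (by rw [← this]; exact hmle) ((hpfcPF c').fnonneg m hmmem)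
  have hbase : ∀ c, ((bb c).1 : W) ∈ (pfc c).1 ∧ 0 < gs c ((bb c).1 : W) := by
    intro c
    have hfin : r.r (bb c).1 (bb c).1 ≠ ⊤ := by
      rw [r.one _ (bb c).2.1]; exact ENNReal.one_ne_top
    have h := hval c (bb c).1 (bb c).2.1 hfin
    refine ⟨VPExt.subset_faceOf (hNcone c) h.1, ?_⟩
    rw [h.2, r.one _ (bb c).2.1]
    simp
  have hF6 : ∀ c c', c ≠ c' → r.r (bb c).1 (bb c').1 = 0 ∨ r.r (bb c).1 (bb c').1 = ⊤ := by
    intro c c' hne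
    by_contra hcon
    push_neg at hcon
    exact hne (Quotient.out_equiv_out.mp (by exact ⟨hcon.1, hcon.2⟩))
  have hS0val : VPExt.Valid (Set.range pfc) := by
    refine ⟨?_, ?_, ?_⟩
    · rintro pf ⟨c, rfl⟩; exact hpfcPF c
    · rintro pf ⟨c, rfl⟩ pg ⟨c', rfl⟩
      rcases eq_or_ne c c' with rfl | hne
      · exact Or.inl rfl
      · rcases hF6 c c' hne with h | h
        · exact Or.inr (Or.inl (hF5 c c' h))
        · exact Or.inr (Or.inr (hF5 c' c (rinvtop _ _ (bb c).2.1 (bb c').2.1 h)))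
    · rintro pf ⟨c, rfl⟩
      exact ⟨((bb c).1 : W), (hbase c).1, (hbase c).2⟩
  obtain ⟨S, hSval, hS0S, hCov⟩ := VPExt.exists_maximal_covering hS0val
  obtain ⟨R, hRr⟩ := VPExt.chainR_pricing hSval hCov
  refine ⟨R, ?_⟩
  intro u v hu hv
  rw [hRr]
  rcases eq_or_ne u 0 with rfl | hune
  · rcases eq_or_ne v 0 with rfl | hvne
    · rw [VPExt.chainR, r.one 0 le_rfl]
      simp
    · rw [VPExt.chainR, r0 v hv hvne]
      simp [hne_coe v hvne]
  · rcases eq_or_ne v 0 with rfl | hvne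
    · rw [VPExt.chainR, rtop u hu hune]
      simp [hne_coe u hune]
    · -- both nonzero
      set cu := Quotient.mk std ⟨u, hu, hune⟩ with hcu
      set cv := Quotient.mk std ⟨v, hv, hvne⟩ with hcv
      have hbu := hbb ⟨u, hu, hune⟩
      have hbv := hbb ⟨v, hv, hvne⟩
      have hvalu := hval cu u hu hbu.2
      have hvalv := hval cv v hv hbv.2
      have hgupos : 0 < gs cu (u:W) := by
        rw [hvalu.2]; exact ENNReal.toReal_pos hbu.1 hbu.2
      have hgvpos : 0 < gs cv (v:W) := by
        rw [hvalv.2]; exact ENNReal.toReal_pos hbv.1 hbv.2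
      have hactu : VPExt.act S (u:W) = pfc cu :=
        VPExt.act_uniq hSval hCov ((hcoe_le u).mp hu) (hne_coe u hune)
          (hS0S ⟨cu, rfl⟩) (VPExt.subset_faceOf (hNcone cu) hvalu.1) hgupos
      have hactv : VPExt.act S (v:W) = pfc cv :=
        VPExt.act_uniq hSval hCov ((hcoe_le v).mp hv) (hne_coe v hvne)
          (hS0S ⟨cv, rfl⟩) (VPExt.subset_faceOf (hNcone cv) hvalv.1) hgvpos
      rw [VPExt.chainR_eval (hne_coe u hune) (hne_coe v hvne), hactu, hactv]
      have heqsim : pfc cu = pfc cv → (r.r u v ≠ 0 ∧ r.r u v ≠ ⊤) := by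
        intro he
        have hvmem : (v:W) ∈ (pfc cu).1 := by
          rw [he]; exact VPExt.subset_faceOf (hNcone cv) hvalv.1
        have hfinv : r.r v (bb cu).1 ≠ ⊤ := htrace cu v hv hvmem
        have hgv : gs cu (v:W) = gs cv (v:W) := congrFun (congrArg Prod.snd he) (v:W)
        have hpos : 0 < gs cu (v:W) := by rw [hgv]; exact hgvpos
        have hvalvcu := (hval cu v hv hfinv).2
        have hne0 : r.r v (bb cu).1 ≠ 0 := by
          intro h0
          rw [hvalvcu, h0] at hpos; simp at hpos
        have hcveq : cv = cu := by
          have : Quotient.mk std ⟨v, hv, hvne⟩ = Quotient.mk std (bb cu) :=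
            Quotient.sound (by exact ⟨hne0, hfinv⟩)
          rw [hcv, this, Quotient.out_eq]
        have hbvcu : r.r (bb cu).1 v ≠ 0 ∧ r.r (bb cu).1 v ≠ ⊤ :=
          simsymm _ _ hv (bb cu).2.1 hne0 hfinv
        rw [rcocL u (bb cu).1 v hu (bb cu).2.1 hv hbu.1 hbu.2]
        exact ⟨mul_ne_zero hbu.1 hbvcu.1, ENNReal.mul_ne_top hbu.2 hbvcu.2⟩
      rcases eq_or_ne (r.r u v) 0 with h0 | hne0
      · have hnecls : pfc cu ≠ pfc cv := fun he => (heqsim he).1 h0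
        have hubv : r.r u (bb cv).1 = 0 := by
          rw [rcocR u v (bb cv).1 hu hv (bb cv).2.1 hbv.1 hbv.2, h0, zero_mul]
        have hbou := hbbout ⟨u, hu, hune⟩
        have hkey : r.r (bb cu).1 (bb cv).1 = 0 := by
          rw [rcocL (bb cu).1 u (bb cv).1 (bb cu).2.1 hu (bb cv).2.1 hbou.1 hbou.2,
            hubv, mul_zero]
        rw [if_neg hnecls, if_pos (hF5 cu cv hkey), h0]
      · rcases eq_or_ne (r.r u v) ⊤ with htop | hnetop
        · have hnecls : pfc cu ≠ pfc cv := fun he => (heqsim he).2 htop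
          have hvu0 : r.r v u = 0 := rinvtop u v hu hv htop
          have hvbu : r.r v (bb cu).1 = 0 := by
            rw [rcocR v u (bb cu).1 hv hu (bb cu).2.1 hbu.1 hbu.2, hvu0, zero_mul]
          have hbov := hbbout ⟨v, hv, hvne⟩
          have hkey : r.r (bb cv).1 (bb cu).1 = 0 := by
            rw [rcocL (bb cv).1 v (bb cu).1 (bb cv).2.1 hv (bb cu).2.1 hbov.1 hbov.2,
              hvbu, mul_zero]
          have hsub' : (pfc cv).1 ⊆ VPExt.Ker (pfc cu) := hF5 cv cu hkey
          have hnsub : ¬ (pfc cu).1 ⊆ VPExt.Ker (pfc cv) := fun h =>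
            VPExt.both_ker_contra hSval (hS0S ⟨cu, rfl⟩) (hS0S ⟨cv, rfl⟩) h hsub'
          rw [if_neg hnecls, if_neg hnsub, htop]
        · have hcls : cu = cv := Quotient.sound (by exact ⟨hne0, hnetop⟩)
          have heq : pfc cu = pfc cv := by rw [hcls]
          rw [if_pos heq]
          have hbucv : r.r u (bb cv).1 ≠ 0 ∧ r.r u (bb cv).1 ≠ ⊤ := by
            rw [← hcls]; exact hbu
          have hvalucv := hval cv u hu hbucv.2
          have hA : (pfc cu).2 (u:W) = (r.r u (bb cv).1).toReal := by
            rw [heq]; exact hvalucv.2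
          have hB : (pfc cu).2 (v:W) = (r.r v (bb cv).1).toReal := by
            rw [heq]; exact hvalv.2
          rw [hA, hB]
          have hid : r.r u (bb cv).1 = r.r u v * r.r v (bb cv).1 :=
            rcocR u v (bb cv).1 hu hv (bb cv).2.1 hbv.1 hbv.2
          rw [hid, ENNReal.toReal_mul, mul_div_assoc,
            div_self (ENNReal.toReal_ne_zero.mpr ⟨hbv.1, hbv.2⟩), mul_one,
            ENNReal.ofReal_toReal hnetop]
end

section
/- Let G be a semigroup acting by positive linear maps on an ordered vector space V and let r be a vector pricing on V. The following are equivalent: (i) r(u,v) = r(gu, v) for all g ∈ G, u, v ∈ V⁺; (ii) r(u,v) = r(u, gv) for all g, u, v; (iii) r(u,v) = r(gu, hv) for all g, h, u, v; (iv) r(u, gu) = 1 for all g and u ∈ V⁺; (v) r(u, u + gu) = 1/2 for all g and u ∈ V⁺. -/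
open scoped ENNReal

/-- For a semigroup `G` acting by positive linear maps on an ordered vector space `V`
and a vector pricing `r` on `V`, the various formulations of `G`-invariance
(restricted to nonzero positive vectors) are equivalent. -/
theorem vectorPricing_invariance_tfae {V : Type*} [AddCommGroup V] [PartialOrder V]
    [IsOrderedAddMonoid V] [Module ℝ V]
    [PosSMulStrictMono ℝ V] [PosSMulReflectLT ℝ V] {G : Type*} [Semigroup G] (ρ : G → V →ₗ[ℝ] V)
    (hmul : ∀ g h : G, ρ (g * h) = (ρ g).comp (ρ h))
    (hpos : ∀ (g : G) (v : V), 0 ≤ v → 0 ≤ ρ g v)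
    (r : VectorPricing V) :
    [ (∀ (g : G) (u v : V), 0 ≤ u → u ≠ 0 → 0 ≤ v → v ≠ 0 → r.r (ρ g u) v = r.r u v),
      (∀ (g : G) (u v : V), 0 ≤ u → u ≠ 0 → 0 ≤ v → v ≠ 0 → r.r u (ρ g v) = r.r u v),
      (∀ (g h : G) (u v : V), 0 ≤ u → u ≠ 0 → 0 ≤ v → v ≠ 0 →
        r.r (ρ g u) (ρ h v) = r.r u v),
      (∀ (g : G) (u : V), 0 ≤ u → u ≠ 0 → r.r u (ρ g u) = 1),
      (∀ (g : G) (u : V), 0 ≤ u → u ≠ 0 → r.r u (u + ρ g u) = 1 / 2) ].TFAE := by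
  have hane0 : (1 : ℝ≥0∞) / 2 ≠ 0 := by simp
  have hanetop : (1 : ℝ≥0∞) / 2 ≠ ⊤ :=
    (ENNReal.half_lt_self one_ne_zero ENNReal.one_ne_top).ne_top
  have h21 : (2 : ℝ≥0∞) * (1 / 2) = 1 := by
    rw [one_div, ENNReal.mul_inv_cancel two_ne_zero ENNReal.ofNat_ne_top]
  have hsum_ne : ∀ u v : V, 0 ≤ u → u ≠ 0 → 0 ≤ v → u + v ≠ 0 := by
    intro u v hu hu0 hv h
    exact hu0 (le_antisymm (by rw [eq_neg_of_add_eq_zero_left h]; exact neg_nonpos.mpr hv) hu)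
  -- reciprocity for value 1
  have hrec1 : ∀ u v : V, 0 ≤ u → 0 ≤ v → r.r u v = 1 → r.r v u = 1 := by
    intro u v hu hv h
    have hc := r.cocycle u v u hu hv hu (by simp [h])
    rw [r.one u hu, h, one_mul] at hc
    exact hc.symm
  have hdouble : ∀ u : V, 0 ≤ u → u ≠ 0 → r.r (u + u) u = 2 := by
    intro u hu hu0
    rw [r.add u u u hu hu hu hu0, r.one u hu, one_add_one_eq_two]
  have hhalf : ∀ u : V, 0 ≤ u → u ≠ 0 → r.r u (u + u) = 1 / 2 := by
    intro u hu hu0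
    have h2 := hdouble u hu hu0
    have hc := r.cocycle u (u + u) u hu (add_nonneg hu hu) hu
      (by rw [h2]; rintro (⟨-, ht⟩ | ⟨-, h0⟩)
          exacts [ENNReal.ofNat_ne_top ht, two_ne_zero h0])
    rw [r.one u hu, h2] at hc
    rw [ENNReal.eq_div_iff two_ne_zero ENNReal.ofNat_ne_top, mul_comm]
    exact hc.symm
  tfae_have 1 → 4 := by
    intro h1 g u hu hu0
    have hgu : 0 ≤ ρ g u := hpos g u hu
    have hgu0 : ρ g u ≠ 0 := by
      intro hz
      have h := h1 g u u hu hu0 hu hu0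
      rw [hz, r.one u hu] at h
      have hadd := r.add 0 0 u le_rfl le_rfl hu hu0
      rw [add_zero, h, one_add_one_eq_two] at hadd
      exact ENNReal.one_lt_two.ne hadd
    have h := h1 g u (ρ g u) hu hu0 hgu hgu0
    rw [r.one (ρ g u) hgu] at h
    exact h.symm
  tfae_have 2 → 4 := by
    intro h2 g u hu hu0
    have h := h2 g u u hu hu0 hu hu0
    rwa [r.one u hu] at h
  tfae_have 4 → 1 := by
    intro h4 g u v hu hu0 hv hv0
    have hgu : 0 ≤ ρ g u := hpos g u hu
    have h1 : r.r u (ρ g u) = 1 := h4 g u hu hu0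
    have h2 : r.r (ρ g u) u = 1 := hrec1 u (ρ g u) hu hgu h1
    have hc := r.cocycle (ρ g u) u v hgu hu hv (by simp [h2])
    rwa [h2, one_mul] at hc
  tfae_have 4 → 2 := by
    intro h4 g u v hu hu0 hv hv0
    have hgv : 0 ≤ ρ g v := hpos g v hv
    have h1 : r.r v (ρ g v) = 1 := h4 g v hv hv0
    have hc := r.cocycle u v (ρ g v) hu hv hgv (by simp [h1])
    rwa [h1, mul_one] at hc
  tfae_have 4 → 3 := by
    intro h4 g h u v hu hu0 hv hv0
    have hgu : 0 ≤ ρ g u := hpos g u hu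
    have hhv : 0 ≤ ρ h v := hpos h v hv
    have hA : r.r (ρ g u) u = 1 := hrec1 u (ρ g u) hu hgu (h4 g u hu hu0)
    have hB : r.r v (ρ h v) = 1 := h4 h v hv hv0
    have hc1 := r.cocycle (ρ g u) u (ρ h v) hgu hu hhv (by simp [hA])
    have hc2 := r.cocycle u v (ρ h v) hu hv hhv (by simp [hB])
    rw [hA, one_mul] at hc1
    rw [hB, mul_one] at hc2
    rw [hc1, hc2]
  tfae_have 3 → 1 := by
    intro h3 g u v hu hu0 hv hv0
    have hgu : 0 ≤ ρ g u := hpos g u hu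
    have hgu0 : ρ g u ≠ 0 := by
      intro hz
      have huu : 0 ≤ u + u := add_nonneg hu hu
      have huu0 : u + u ≠ 0 := hsum_ne u u hu hu0 hu
      have h := h3 g g u (u + u) hu hu0 huu huu0
      rw [hz, map_add, hz, add_zero, r.one 0 le_rfl] at h
      have h' := hrec1 u (u + u) hu huu h.symm
      rw [hdouble u hu hu0] at h'
      exact ENNReal.one_lt_two.ne' h'
    have e1 := h3 g g (ρ g u) v hgu hgu0 hv hv0
    have e2 := h3 (g * g) g u v hu hu0 hv hv0
    rw [hmul] at e2
    simp only [LinearMap.comp_apply] at e2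
    rw [← e1]
    exact e2
  tfae_have 4 → 5 := by
    intro h4 g u hu hu0
    have hgu : 0 ≤ ρ g u := hpos g u hu
    have hw : 0 ≤ u + ρ g u := add_nonneg hu hgu
    have hw0 : u + ρ g u ≠ 0 := hsum_ne u (ρ g u) hu hu0 hgu
    have hsum := r.add u (ρ g u) (u + ρ g u) hu hgu hw hw0
    rw [r.one _ hw] at hsum
    have h1 : r.r u (ρ g u) = 1 := h4 g u hu hu0
    have hc := r.cocycle u (ρ g u) (u + ρ g u) hu hgu hw (by simp [h1])
    rw [h1, one_mul] at hc
    rw [← hc] at hsum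
    rw [ENNReal.eq_div_iff two_ne_zero ENNReal.ofNat_ne_top, two_mul]
    exact hsum.symm
  tfae_have 5 → 4 := by
    intro h5 g u hu hu0
    have hgu : 0 ≤ ρ g u := hpos g u hu
    have hgu0 : ρ g u ≠ 0 := by
      intro hz
      have h := h5 g u hu hu0
      rw [hz, add_zero, r.one u hu] at h
      exact (ENNReal.half_lt_self one_ne_zero ENNReal.one_ne_top).ne' h
    have hw : 0 ≤ u + ρ g u := add_nonneg hu hgu
    have hw0 : u + ρ g u ≠ 0 := hsum_ne u (ρ g u) hu hu0 hgu
    have ha : r.r u (u + ρ g u) = 1 / 2 := h5 g u hu hu0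
    have hsum := r.add u (ρ g u) (u + ρ g u) hu hgu hw hw0
    rw [r.one _ hw, ha] at hsum
    -- hsum : 1 = 1/2 + r (ρ g u) (u + ρ g u)
    have hb : r.r (ρ g u) (u + ρ g u) = 1 / 2 := by
      have hh : (1 : ℝ≥0∞) / 2 + r.r (ρ g u) (u + ρ g u) = 1 / 2 + 1 / 2 := by
        rw [← hsum, ENNReal.add_halves]
      exact (ENNReal.add_right_inj hanetop).mp hh
    -- reciprocity: r (u + gu) u = 2
    have hcu := r.cocycle u (u + ρ g u) u hu hw hu
      (by rw [ha]; rintro (⟨h0, -⟩ | ⟨ht, -⟩); exacts [hane0 h0, hanetop ht])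
    rw [r.one u hu, ha] at hcu
    -- hcu : 1 = 1/2 * r (u+gu) u
    have hx : r.r (u + ρ g u) u = 2 := by
      calc r.r (u + ρ g u) u = 2 * (1 / 2) * r.r (u + ρ g u) u := by rw [h21, one_mul]
        _ = 2 * (1 / 2 * r.r (u + ρ g u) u) := by rw [mul_assoc]
        _ = 2 * 1 := by rw [← hcu]
        _ = 2 := mul_one 2
    have hcw := r.cocycle (u + ρ g u) u (ρ g u) hw hu hgu
      (by rw [hx]; rintro (⟨h0, -⟩ | ⟨ht, -⟩)
          exacts [two_ne_zero h0, ENNReal.ofNat_ne_top ht])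
    rw [hx] at hcw
    -- hcw : r (u+gu) (gu) = 2 * r u (gu)
    have hadd2 := r.add u (ρ g u) (ρ g u) hu hgu hgu hgu0
    rw [r.one _ hgu] at hadd2
    -- hadd2 : r (u+gu) (gu) = r u (gu) + 1
    have hcne : r.r u (ρ g u) ≠ ⊤ := by
      intro htop
      have hc2 := r.cocycle u (ρ g u) (u + ρ g u) hu hgu hw
        (by rw [hb]; rintro (⟨-, ht⟩ | ⟨-, h0⟩); exacts [hanetop ht, hane0 h0])
      rw [ha, htop, hb, ENNReal.top_mul hane0] at hc2
      exact hanetop hc2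
    have heq : r.r u (ρ g u) + 1 = r.r u (ρ g u) + r.r u (ρ g u) := by
      rw [← hadd2, hcw, two_mul]
    exact ((ENNReal.add_right_inj hcne).mp heq).symm
  tfae_finish
end

section
/- Let G be a finitely generated group admitting no surjective homomorphism onto ℤ. Then every G-equivariant vector pricing on ℓ∞(G) is G-invariant. -/
open scoped ENNReal

/-- The space `ℓ∞(G)` of bounded real functions on `G`, as a submodule of `G → ℝ`. -/
def linf (G : Type*) : Submodule ℝ (G → ℝ) where
  carrier := {f | ∃ C : ℝ, ∀ x, |f x| ≤ C}
  add_mem' := by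
    rintro f g ⟨C, hC⟩ ⟨D, hD⟩
    exact ⟨C + D, fun x => (abs_add_le _ _).trans (add_le_add (hC x) (hD x))⟩
  zero_mem' := ⟨0, fun x => by simp⟩
  smul_mem' := by
    rintro c f ⟨C, hC⟩
    refine ⟨|c| * C, fun x => ?_⟩
    have h : |(c • f) x| = |c| * |f x| := by
      simp [abs_mul]
    rw [h]
    exact mul_le_mul_of_nonneg_left (hC x) (abs_nonneg c)

/-- The left translation action of `G` on `ℓ∞(G)`: `(g • f)(x) = f(g⁻¹ x)`. -/
def lTranslate {G : Type*} [Group G] (g : G) (f : linf G) : linf G :=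
  ⟨fun x => (f : G → ℝ) (g⁻¹ * x), by
    obtain ⟨C, hC⟩ := f.2
    exact ⟨C, fun x => hC _⟩⟩

/-! ### Auxiliary lemmas -/

section Aux

set_option linter.unusedSectionVars false

variable {G : Type*} [Group G]

lemma linf_coe_add (u v : linf G) (x : G) :
    ((u + v : linf G) : G → ℝ) x = (u:G→ℝ) x + (v:G→ℝ) x := rfl

lemma linf_coe_smul (c : ℝ) (u : linf G) (x : G) :
    ((c • u : linf G) : G → ℝ) x = c * (u:G→ℝ) x := rfl

lemma linf_coe_sum {ι : Type*} (s : Finset ι) (f : ι → linf G) (x : G) :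
    ((∑ i ∈ s, f i : linf G) : G → ℝ) x = ∑ i ∈ s, (f i : G → ℝ) x := by
  classical
  induction s using Finset.induction with
  | empty => rfl
  | insert a s hi ih => rw [Finset.sum_insert hi, Finset.sum_insert hi, linf_coe_add, ih]

lemma lTranslate_coe (g : G) (f : linf G) (x : G) :
    ((lTranslate g f : linf G) : G → ℝ) x = (f : G → ℝ) (g⁻¹ * x) := rfl

lemma lTranslate_one (f : linf G) : lTranslate 1 f = f := by
  apply Subtype.ext; funext x; simp [lTranslate]

lemma lTranslate_mul (g h : G) (f : linf G) :
    lTranslate (g * h) f = lTranslate g (lTranslate h f) := by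
  apply Subtype.ext; funext x
  simp [lTranslate, mul_assoc]

lemma lTranslate_smul (g : G) (c : ℝ) (f : linf G) :
    lTranslate g (c • f) = c • lTranslate g f := rfl

lemma lTranslate_zero (g : G) : lTranslate g (0 : linf G) = 0 := rfl

lemma lTranslate_mono (g : G) {u v : linf G} (h : u ≤ v) :
    lTranslate g u ≤ lTranslate g v := by
  intro x
  show (u : G → ℝ) (g⁻¹ * x) ≤ (v : G → ℝ) (g⁻¹ * x)
  exact h _

lemma lTranslate_nonneg (g : G) {u : linf G} (h : 0 ≤ u) : 0 ≤ lTranslate g u := by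
  intro x
  show (0:ℝ) ≤ (u : G → ℝ) (g⁻¹ * x)
  exact h _

lemma linf_sub_nonneg {a b : linf G} (h : a ≤ b) : 0 ≤ b - a := by
  intro x
  have h1 : (a : G → ℝ) x ≤ (b : G → ℝ) x := h x
  show (0:ℝ) ≤ (b : G → ℝ) x - (a : G → ℝ) x
  linarith

lemma linf_add_nonneg {a b : linf G} (ha : 0 ≤ a) (hb : 0 ≤ b) : 0 ≤ a + b := by
  intro x
  have h1 : (0:ℝ) ≤ (a : G → ℝ) x := ha x
  have h2 : (0:ℝ) ≤ (b : G → ℝ) x := hb x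
  show (0:ℝ) ≤ (a : G → ℝ) x + (b : G → ℝ) x
  linarith

lemma linf_nsmul_nonneg {a : linf G} (ha : 0 ≤ a) (n : ℕ) : 0 ≤ n • a := by
  induction n with
  | zero => simp
  | succ k ih => rw [succ_nsmul]; exact linf_add_nonneg ih ha

lemma linf_smul_nonneg {c : ℝ} (hc : 0 ≤ c) {a : linf G} (ha : 0 ≤ a) : 0 ≤ c • a := by
  intro x
  show (0:ℝ) ≤ c * (a : G → ℝ) x
  exact mul_nonneg hc (ha x)

lemma linf_sum_nonneg {ι : Type*} {s : Finset ι} {f : ι → linf G} (hf : ∀ i ∈ s, 0 ≤ f i) :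
    0 ≤ ∑ i ∈ s, f i := by
  intro x
  show (0:ℝ) ≤ ((∑ i ∈ s, f i : linf G) : G → ℝ) x
  rw [linf_coe_sum]
  exact Finset.sum_nonneg fun i hi => hf i hi x

lemma linf_le_add_right {a b : linf G} (hb : 0 ≤ b) : a ≤ a + b := by
  intro x
  have h2 : (0:ℝ) ≤ (b : G → ℝ) x := hb x
  show (a : G → ℝ) x ≤ (a : G → ℝ) x + (b : G → ℝ) x
  linarith

lemma linf_smul_le_smul {c : ℝ} (hc : 0 ≤ c) {a b : linf G} (h : a ≤ b) : c • a ≤ c • b := by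
  intro x
  show c * (a : G → ℝ) x ≤ c * (b : G → ℝ) x
  exact mul_le_mul_of_nonneg_left (h x) hc

/-! ### Pricing arithmetic -/

variable (rp : VectorPricing (linf G)) {W : linf G}

lemma r_zero (hW0 : 0 ≤ W) (hWne : W ≠ 0) : rp.r 0 W = 0 := by
  have h := rp.add W 0 W hW0 le_rfl hW0 hWne
  rw [add_zero, rp.one W hW0] at h
  have h2 : (1 : ℝ≥0∞) + 0 = 1 + rp.r 0 W := by rw [add_zero]; exact h
  exact ((ENNReal.add_right_inj (by simp)).mp h2).symm

lemma r_mono (hW0 : 0 ≤ W) (hWne : W ≠ 0) {a b : linf G} (ha : 0 ≤ a) (hab : a ≤ b) :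
    rp.r a W ≤ rp.r b W := by
  have hb : b = a + (b - a) := by abel
  rw [hb, rp.add a (b - a) W ha (linf_sub_nonneg hab) hW0 hWne]
  exact le_self_add

lemma r_nsmul (hW0 : 0 ≤ W) (hWne : W ≠ 0) {a : linf G} (ha : 0 ≤ a) (n : ℕ) :
    rp.r (n • a) W = n * rp.r a W := by
  induction n with
  | zero => simp [r_zero rp hW0 hWne]
  | succ k ih =>
      rw [succ_nsmul, rp.add _ a W (linf_nsmul_nonneg ha k) ha hW0 hWne, ih]
      push_cast
      ring

lemma r_sum (hW0 : 0 ≤ W) (hWne : W ≠ 0) {ι : Type*} (s : Finset ι) (f : ι → linf G)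
    (hf : ∀ i ∈ s, 0 ≤ f i) :
    rp.r (∑ i ∈ s, f i) W = ∑ i ∈ s, rp.r (f i) W := by
  classical
  induction s using Finset.induction with
  | empty => simp [r_zero rp hW0 hWne]
  | insert a s hi ih =>
      rw [Finset.sum_insert hi, Finset.sum_insert hi,
        rp.add _ _ W (hf a (Finset.mem_insert_self a s))
          (linf_sum_nonneg fun i hi' => hf i (Finset.mem_insert_of_mem hi')) hW0 hWne,
        ih (fun i hi' => hf i (Finset.mem_insert_of_mem hi'))]

/-! ### The resolvent vector -/

lemma exists_W (S : Finset G) (hS1 : (1:G) ∈ S) (u : linf G) (hu : 0 ≤ u) :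
    ∃ W : linf G, 0 ≤ W ∧ u ≤ W ∧
      W = u + (1/(2*(S.card:ℝ))) • ∑ s ∈ S, lTranslate s W := by
  classical
  set n₀ : ℕ := S.card with hn₀
  have hn₀pos : 0 < (n₀:ℝ) := by
    have : 0 < n₀ := Finset.card_pos.mpr ⟨1, hS1⟩
    exact_mod_cast this
  set c : ℝ := 1/(2*(n₀:ℝ)) with hc
  have hcpos : 0 < c := by positivity
  have hcn : c * n₀ = 1/2 := by rw [hc]; field_simp
  obtain ⟨C, hC⟩ := u.2
  set M : ℝ := max C 0 with hM
  have hM0 : 0 ≤ M := le_max_right _ _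
  have hMu : ∀ x, (u : G → ℝ) x ≤ M := fun x =>
    (le_abs_self _).trans ((hC x).trans (le_max_left _ _))
  set P : linf G → linf G := fun f => c • ∑ s ∈ S, lTranslate s f with hP
  set V : ℕ → linf G := fun k => P^[k] u with hV
  have hV0 : V 0 = u := rfl
  have hVsucc : ∀ k, V (k+1) = P (V k) := fun k => Function.iterate_succ_apply' P k u
  have hVnonneg : ∀ k, 0 ≤ V k := by
    intro k
    induction k with
    | zero => exact hu
    | succ k ih =>
        rw [hVsucc]
        exact linf_smul_nonneg hcpos.le (linf_sum_nonneg fun s _ => lTranslate_nonneg s ih)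
  have hPcoe : ∀ (f : linf G) (x : G),
      ((P f : linf G) : G → ℝ) x = c * ∑ s ∈ S, (f : G→ℝ) (s⁻¹ * x) := by
    intro f x
    rw [hP]
    show c * ((∑ s ∈ S, lTranslate s f : linf G) : G → ℝ) x = _
    rw [linf_coe_sum]
    rfl
  have hVb : ∀ k x, (V k : G → ℝ) x ≤ M * (1/2)^k := by
    intro k
    induction k with
    | zero => intro x; simp only [pow_zero, mul_one]; exact hMu x
    | succ k ih =>
        intro x
        rw [hVsucc, hPcoe]
        have hsumle : ∑ s ∈ S, (V k : G→ℝ) (s⁻¹ * x) ≤ (n₀:ℝ) * (M * (1/2)^k) := by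
          have h1 : ∑ s ∈ S, (V k : G→ℝ) (s⁻¹ * x) ≤ ∑ s ∈ S, M * (1/2)^k :=
            Finset.sum_le_sum fun s _ => ih _
          rw [Finset.sum_const, nsmul_eq_mul, ← hn₀] at h1
          exact h1
        calc c * ∑ s ∈ S, (V k : G→ℝ) (s⁻¹ * x) ≤ c * ((n₀:ℝ) * (M * (1/2)^k)) :=
              mul_le_mul_of_nonneg_left hsumle hcpos.le
          _ = M * (1/2)^(k+1) := by
              rw [← mul_assoc, hcn]; ring
  have hsum : ∀ x, Summable (fun k => (V k : G → ℝ) x) := by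
    intro x
    refine Summable.of_nonneg_of_le (fun k => hVnonneg k x) (fun k => hVb k x) ?_
    exact (summable_geometric_two).mul_left M
  set Wf : G → ℝ := fun x => ∑' k, (V k : G → ℝ) x with hWf
  have hWmem : Wf ∈ linf G := by
    refine ⟨2*M, fun x => ?_⟩
    rw [abs_of_nonneg (tsum_nonneg fun k => hVnonneg k x)]
    have h1 : Wf x ≤ ∑' k, M * (1/2:ℝ)^k :=
      Summable.tsum_le_tsum (fun k => hVb k x) (hsum x) ((summable_geometric_two).mul_left M)
    have h2 : ∑' k, M * (1/2:ℝ)^k = M * 2 := by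
      rw [tsum_mul_left, tsum_geometric_two]
    linarith
  refine ⟨⟨Wf, hWmem⟩, ?_, ?_, ?_⟩
  · intro x
    exact tsum_nonneg fun k => hVnonneg k x
  · intro x
    have := Summable.le_tsum (hsum x) 0 (fun j _ => hVnonneg j x)
    simpa [hV0] using this
  · apply Subtype.ext
    funext x
    show Wf x = (u : G→ℝ) x + c * ((∑ s ∈ S, lTranslate s ⟨Wf, hWmem⟩ : linf G) : G → ℝ) x
    rw [linf_coe_sum]
    have hWcoe : ∀ y, ((⟨Wf, hWmem⟩ : linf G) : G → ℝ) y = ∑' k, (V k : G → ℝ) y :=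
      fun y => rfl
    have step1 : ∀ s : G, ((lTranslate s ⟨Wf, hWmem⟩ : linf G) : G → ℝ) x
        = ∑' k, (V k : G→ℝ) (s⁻¹ * x) := by
      intro s; rw [lTranslate_coe, hWcoe]
    rw [Finset.sum_congr rfl fun s _ => step1 s]
    rw [← Summable.tsum_finsetSum (fun s _ => hsum _)]
    rw [← tsum_mul_left]
    have step2 : ∀ k, c * ∑ s ∈ S, (V k : G→ℝ) (s⁻¹ * x) = (V (k+1) : G→ℝ) x := by
      intro k; rw [hVsucc, hPcoe]
    rw [tsum_congr step2]
    have h9 := Summable.tsum_eq_zero_add (hsum x)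
    rw [show Wf x = ∑' k, (V k : G→ℝ) x from rfl, h9, hV0]

end Aux

/-! ### Triviality of homomorphisms to ℝ -/

theorem hom_to_real_trivial {G : Type*} [Group G] (hfg : Group.FG G)
    (hZ : ¬∃ φ : G →* Multiplicative ℤ, Function.Surjective φ)
    (ψ : G →* Multiplicative ℝ) : ∀ g, ψ g = 1 := by
  by_contra hne
  push_neg at hne
  obtain ⟨g₀, hg₀⟩ := hne
  haveI : Group.FG G := hfg
  set ψ' : Additive G →+ ℝ :=
    { toFun := fun a => Multiplicative.toAdd (ψ (Additive.toMul a))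
      map_zero' := by simp
      map_add' := by intro a b; simp } with hψ'
  haveI : AddGroup.FG (Additive G) := AddGroup.fg_of_group_fg
  haveI hR : AddGroup.FG ↥ψ'.range := AddGroup.fg_of_surjective ψ'.rangeRestrict_surjective
  haveI : Module.Finite ℤ ↥ψ'.range := Module.Finite.iff_addGroup_fg.mpr hR
  haveI : NoZeroSMulDivisors ℤ ↥ψ'.range := by
    constructor
    rintro n x hx
    rcases smul_eq_zero.mp (show (n : ℤ) • (x : ℝ) = 0 by
      rw [← AddSubgroup.coe_zsmul, hx, AddSubgroup.coe_zero]) with h | h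
    · exact Or.inl h
    · exact Or.inr (by ext; simpa using h)
  haveI : Module.Free ℤ ↥ψ'.range := Module.free_of_finite_type_torsion_free'
  haveI : Nontrivial ↥ψ'.range := by
    refine ⟨⟨ψ'.rangeRestrict (Additive.ofMul g₀), 0, ?_⟩⟩
    intro h
    apply hg₀
    have : ψ' (Additive.ofMul g₀) = 0 := by
      have := congrArg (Subtype.val) h
      simpa using this
    have h2 : Multiplicative.toAdd (ψ g₀) = 0 := this
    have := congrArg Multiplicative.ofAdd h2
    simpa using this
  let b := Module.Free.chooseBasis ℤ ↥ψ'.range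
  obtain ⟨i⟩ := b.index_nonempty
  set χ : G →* Multiplicative ℤ :=
    { toFun := fun g => Multiplicative.ofAdd (b.coord i (ψ'.rangeRestrict (Additive.ofMul g)))
      map_one' := by simp
      map_mul' := by
        intro g h
        show Multiplicative.ofAdd _ = Multiplicative.ofAdd _ * Multiplicative.ofAdd _
        rw [← ofAdd_add]
        congr 1
        have h1 : Additive.ofMul (g * h) = Additive.ofMul g + Additive.ofMul h := rfl
        rw [h1, map_add, map_add] } with hχ
  apply hZ
  refine ⟨χ, ?_⟩
  obtain ⟨a, ha⟩ := ψ'.rangeRestrict_surjective (b i)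
  intro n
  refine ⟨(Additive.toMul a) ^ (Multiplicative.toAdd n), ?_⟩
  have h1 : χ (Additive.toMul a) = Multiplicative.ofAdd 1 := by
    simp only [hχ, MonoidHom.coe_mk, OneHom.coe_mk]
    congr 1
    have : ψ'.rangeRestrict (Additive.ofMul (Additive.toMul a)) = b i := by simpa using ha
    rw [this]
    simp [Module.Basis.coord_apply]
  rw [map_zpow, h1, ← ofAdd_zsmul, smul_eq_mul, mul_one, ofAdd_toAdd]

/-! ### Main theorem -/

/-- For a finitely generated group `G` with no surjective homomorphism onto `ℤ`,
every `G`-equivariant vector pricing on `ℓ∞(G)` is `G`-invariant. -/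
theorem equivariant_pricing_invariant {G : Type*} [Group G] (hfg : Group.FG G)
    (hZ : ¬∃ φ : G →* Multiplicative ℤ, Function.Surjective φ)
    (r : VectorPricing (linf G))
    (hequiv : ∀ (g : G) (u v : linf G), 0 ≤ u → 0 ≤ v →
      r.r (lTranslate g u) (lTranslate g v) = r.r u v) :
    ∀ (g : G) (u v : linf G), 0 ≤ u → 0 ≤ v → r.r (lTranslate g u) v = r.r u v := by
  classical
  intro g u v hu hv
  by_cases hu0 : u = 0
  · rw [hu0, lTranslate_zero]
  -- a symmetric finite generating set containing 1
  obtain ⟨Sset, hSc, hSfin⟩ := Group.fg_iff.mp hfg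
  set T : Finset G := hSfin.toFinset with hT
  set S : Finset G := insert 1 (T ∪ T.image (·⁻¹)) with hS
  have hS1 : (1:G) ∈ S := Finset.mem_insert_self _ _
  have hgen : ∀ gg : G, ∃ L : List G, (∀ y ∈ L, y ∈ S) ∧ L.prod = gg := by
    intro gg
    have h1 : gg ∈ Subgroup.closure Sset := by rw [hSc]; trivial
    have h2 : gg ∈ (Subgroup.closure Sset).toSubmonoid := h1
    rw [Subgroup.closure_toSubmonoid] at h2
    obtain ⟨L, hL, hLp⟩ := Submonoid.exists_list_of_mem_closure h2
    refine ⟨L, fun y hy => ?_, hLp⟩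
    rcases hL y hy with h | h
    · exact Finset.mem_insert_of_mem (Finset.mem_union_left _ (hSfin.mem_toFinset.mpr h))
    · refine Finset.mem_insert_of_mem (Finset.mem_union_right _ ?_)
      exact Finset.mem_image.mpr ⟨y⁻¹, hSfin.mem_toFinset.mpr (Set.mem_inv.mp h), inv_inv y⟩
  -- the resolvent vector
  obtain ⟨W, hW0, huW, hid⟩ := exists_W S hS1 u hu
  set n₀ : ℕ := S.card with hn₀
  have hn₀pos : 0 < (n₀:ℝ) := by
    have : 0 < n₀ := Finset.card_pos.mpr ⟨1, hS1⟩
    exact_mod_cast this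
  set c : ℝ := 1/(2*(n₀:ℝ)) with hc
  have hcpos : 0 < c := one_div_pos.mpr (by linarith)
  have hWne : W ≠ 0 := by
    intro h
    exact hu0 (le_antisymm (h ▸ huW) hu)
  have hW1 : r.r W W = 1 := r.one W hW0
  have hLTW : ∀ gg : G, 0 ≤ lTranslate gg W := fun gg => lTranslate_nonneg gg hW0
  -- single-generator bound
  have hstep : ∀ s ∈ S, c • lTranslate s W ≤ W := by
    intro s hs
    have hsplit : ∑ s' ∈ S, lTranslate s' W
        = lTranslate s W + ∑ s' ∈ S.erase s, lTranslate s' W :=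
      (Finset.add_sum_erase S _ hs).symm
    have hid2 : W = c • lTranslate s W + (u + c • ∑ s' ∈ S.erase s, lTranslate s' W) :=
      calc W = u + c • ∑ s' ∈ S, lTranslate s' W := hid
        _ = c • lTranslate s W + (u + c • ∑ s' ∈ S.erase s, lTranslate s' W) := by
            rw [hsplit, smul_add]; abel
    calc c • lTranslate s W
        ≤ c • lTranslate s W + (u + c • ∑ s' ∈ S.erase s, lTranslate s' W) :=
          linf_le_add_right (linf_add_nonneg hu (linf_smul_nonneg hcpos.le
            (linf_sum_nonneg fun i _ => lTranslate_nonneg i hW0)))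
      _ = W := hid2.symm
  -- word bound
  have hword : ∀ gg : G, ∃ k : ℕ, (c^k) • lTranslate gg W ≤ W := by
    intro gg
    obtain ⟨L, hL, hLp⟩ := hgen gg
    subst hLp
    clear hgen
    induction L with
    | nil =>
        refine ⟨0, ?_⟩
        simp [List.prod_nil, lTranslate_one]
    | cons a L ih =>
        obtain ⟨k, hk⟩ := ih (fun y hy => hL y (List.mem_cons_of_mem a hy))
        refine ⟨k+1, ?_⟩
        have haS : a ∈ S := hL a List.mem_cons_self
        rw [List.prod_cons, lTranslate_mul]
        have h1 : lTranslate a ((c^k) • lTranslate L.prod W) ≤ lTranslate a W :=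
          lTranslate_mono a hk
        rw [lTranslate_smul] at h1
        have h2 : c • ((c^k) • lTranslate a (lTranslate L.prod W)) ≤ c • lTranslate a W :=
          linf_smul_le_smul hcpos.le h1
        have h3 : c • ((c^k) • lTranslate a (lTranslate L.prod W))
            = (c^(k+1)) • lTranslate a (lTranslate L.prod W) := by
          rw [smul_smul, pow_succ]
          ring_nf
        rw [h3] at h2
        exact h2.trans (hstep a haS)
  -- φ values
  set φ : G → ℝ≥0∞ := fun gg => r.r (lTranslate gg W) W with hφ
  have hφone : φ 1 = 1 := by rw [hφ]; simp only [lTranslate_one]; exact hW1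
  have hφtop : ∀ gg : G, φ gg ≠ ⊤ := by
    intro gg
    obtain ⟨k, hk⟩ := hword gg
    set N : ℕ := (2*n₀)^k with hN
    have hNc : ((N:ℝ)) * c^k = 1 := by
      have hNr : (N:ℝ) = (2*(n₀:ℝ))^k := by rw [hN]; push_cast; ring
      rw [hNr, hc, ← mul_pow,
        show (2*(n₀:ℝ)) * (1/(2*(n₀:ℝ))) = 1 by field_simp, one_pow]
    have hrepr : lTranslate gg W = (N:ℝ) • ((c^k) • lTranslate gg W) := by
      rw [smul_smul, hNc, one_smul]
    have hsk : 0 ≤ (c^k) • lTranslate gg W :=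
      linf_smul_nonneg (pow_nonneg hcpos.le k) (hLTW gg)
    have h1 : r.r (lTranslate gg W) W = N * r.r ((c^k) • lTranslate gg W) W := by
      conv_lhs => rw [hrepr]
      rw [Nat.cast_smul_eq_nsmul, r_nsmul r hW0 hWne hsk]
    have h2 : r.r ((c^k) • lTranslate gg W) W ≤ 1 := by
      rw [← hW1]
      exact r_mono r hW0 hWne hsk hk
    rw [hφ]
    simp only
    rw [h1]
    intro hcon
    rcases ENNReal.mul_eq_top.mp hcon with ⟨_, h⟩ | ⟨h, _⟩
    · exact (h2.trans_lt (by norm_num)).ne h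
    · exact (ENNReal.natCast_ne_top N) h
  have hφinv : ∀ gg : G, r.r W (lTranslate gg W) = φ gg⁻¹ := by
    intro gg
    have := hequiv gg⁻¹ W (lTranslate gg W) hW0 (hLTW gg)
    rw [← lTranslate_mul, inv_mul_cancel, lTranslate_one] at this
    exact this.symm
  have hφmulinv : ∀ gg : G, φ gg⁻¹ * φ gg = 1 := by
    intro gg
    have hco := r.cocycle W (lTranslate gg W) W hW0 (hLTW gg) hW0 ?_
    · rw [hW1, hφinv] at hco
      exact hco.symm
    · rintro (⟨_, h2⟩ | ⟨h1, _⟩)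
      · exact hφtop gg h2
      · rw [hφinv] at h1
        exact hφtop gg⁻¹ h1
  have hφ0 : ∀ gg : G, φ gg ≠ 0 := by
    intro gg hcon
    have := hφmulinv gg
    rw [hcon, mul_zero] at this
    exact zero_ne_one this
  have hφmul : ∀ g₁ g₂ : G, φ (g₁ * g₂) = φ g₁ * φ g₂ := by
    intro g₁ g₂
    have hco := r.cocycle (lTranslate (g₁*g₂) W) (lTranslate g₁ W) W
      (hLTW _) (hLTW _) hW0 ?_
    · have heq : r.r (lTranslate (g₁*g₂) W) (lTranslate g₁ W) = φ g₂ := by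
        rw [lTranslate_mul]
        exact hequiv g₁ (lTranslate g₂ W) W (hLTW g₂) hW0
      rw [heq] at hco
      rw [hφ]
      simp only
      rw [hco]
      exact mul_comm _ _
    · have heq : r.r (lTranslate (g₁*g₂) W) (lTranslate g₁ W) = φ g₂ := by
        rw [lTranslate_mul]
        exact hequiv g₁ (lTranslate g₂ W) W (hLTW g₂) hW0
      rintro (⟨_, h2⟩ | ⟨h1, _⟩)
      · exact hφtop g₁ h2
      · rw [heq] at h1
        exact hφtop g₂ h1
  -- φ ≡ 1 via hZ
  have hφ1 : ∀ gg : G, φ gg = 1 := by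
    set ψ : G →* Multiplicative ℝ :=
      { toFun := fun gg => Multiplicative.ofAdd (Real.log (φ gg).toReal)
        map_one' := by
          show Multiplicative.ofAdd (Real.log (φ 1).toReal) = 1
          rw [hφone]
          simp
        map_mul' := by
          intro g₁ g₂
          show Multiplicative.ofAdd (Real.log (φ (g₁*g₂)).toReal)
            = Multiplicative.ofAdd (Real.log (φ g₁).toReal)
              * Multiplicative.ofAdd (Real.log (φ g₂).toReal)
          rw [← ofAdd_add]
          congr 1
          rw [hφmul, ENNReal.toReal_mul]
          exact Real.log_mul
            (ENNReal.toReal_ne_zero.mpr ⟨hφ0 g₁, hφtop g₁⟩)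
            (ENNReal.toReal_ne_zero.mpr ⟨hφ0 g₂, hφtop g₂⟩) } with hψ
    have htriv := hom_to_real_trivial hfg hZ ψ
    intro gg
    have h1 : Multiplicative.ofAdd (Real.log (φ gg).toReal) = (1 : Multiplicative ℝ) :=
      htriv gg
    have h2 : Real.log (φ gg).toReal = 0 := by
      have := congrArg Multiplicative.toAdd h1
      simpa using this
    have h3 : (φ gg).toReal = 1 := by
      rcases Real.log_eq_zero.mp h2 with h | h | h
      · exact absurd h (ENNReal.toReal_ne_zero.mpr ⟨hφ0 gg, hφtop gg⟩)
      · exact h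
      · nlinarith [ENNReal.toReal_nonneg (a := φ gg)]
    exact (ENNReal.toReal_eq_one_iff _).mp h3
  -- the mass of `u` inside `W`
  set x : ℝ≥0∞ := r.r u W with hxdef
  set A : ℝ≥0∞ := (n₀ : ℝ≥0∞) with hA
  have hA0 : A ≠ 0 := by
    rw [hA]
    exact_mod_cast (Finset.card_pos.mpr ⟨1, hS1⟩).ne'
  have hAtop : A ≠ ⊤ := ENNReal.natCast_ne_top n₀
  have hCsum : ((2*n₀:ℕ):ℝ) • W = ((2*n₀:ℕ):ℝ) • u + ∑ s ∈ S, lTranslate s W := by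
    have h2n : ((2*n₀:ℕ):ℝ) = 2*(n₀:ℝ) := by push_cast; ring
    calc ((2*n₀:ℕ):ℝ) • W = ((2*n₀:ℕ):ℝ) • (u + c • ∑ s ∈ S, lTranslate s W) := by rw [← hid]
      _ = ((2*n₀:ℕ):ℝ) • u + (((2*n₀:ℕ):ℝ) * c) • ∑ s ∈ S, lTranslate s W := by
            rw [smul_add, smul_smul]
      _ = ((2*n₀:ℕ):ℝ) • u + ∑ s ∈ S, lTranslate s W := by
            rw [h2n, hc, show (2*(n₀:ℝ)) * (1/(2*(n₀:ℝ))) = 1 by field_simp, one_smul]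
  have hmass : 2*A = 2*A*x + A := by
    have hL : r.r (((2*n₀:ℕ):ℝ) • W) W = ((2*n₀:ℕ):ℝ≥0∞) * 1 := by
      rw [Nat.cast_smul_eq_nsmul, r_nsmul r hW0 hWne hW0, hW1]
    have hR : r.r (((2*n₀:ℕ):ℝ) • u + ∑ s ∈ S, lTranslate s W) W
        = ((2*n₀:ℕ):ℝ≥0∞) * x + A := by
      rw [r.add _ _ W (by
            rw [Nat.cast_smul_eq_nsmul]; exact linf_nsmul_nonneg hu _)
          (linf_sum_nonneg fun i _ => hLTW i) hW0 hWne]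
      rw [Nat.cast_smul_eq_nsmul, r_nsmul r hW0 hWne hu,
        r_sum r hW0 hWne S _ (fun i _ => hLTW i)]
      have : ∑ s ∈ S, r.r (lTranslate s W) W = A := by
        rw [Finset.sum_congr rfl (fun s _ => hφ1 s), Finset.sum_const, ← hn₀, hA]
        simp
      rw [this]
    have h2A : ((2*n₀:ℕ):ℝ≥0∞) = 2*A := by rw [hA]; push_cast; ring
    have hEq := hR
    rw [← hCsum, hL, mul_one] at hEq
    rw [h2A] at hEq
    exact hEq
  have hx0 : x ≠ 0 := by
    intro h
    rw [h, mul_zero, zero_add] at hmass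
    rw [two_mul] at hmass
    have h7 : A + A = A + 0 := by rw [add_zero]; exact hmass
    exact hA0 ((ENNReal.add_right_inj hAtop).mp h7)
  have hxtop : x ≠ ⊤ := by
    intro h
    rw [h, ENNReal.mul_top (by simp [hA0])] at hmass
    have : (2:ℝ≥0∞)*A = ⊤ := by rw [hmass]; simp
    exact (ENNReal.mul_ne_top (by simp) hAtop) this
  -- transport along g
  have hgu : r.r (lTranslate g u) W = x := by
    have hφg : r.r (lTranslate g W) W = 1 := hφ1 g
    have hco := r.cocycle (lTranslate g u) (lTranslate g W) W
      (lTranslate_nonneg g hu) (hLTW g) hW0 ?_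
    · rw [hequiv g u W hu hW0, hφg, mul_one] at hco
      exact hco
    · rw [hequiv g u W hu hW0, hφg]
      rintro (⟨_, h2⟩ | ⟨_, h2⟩)
      · exact ENNReal.one_ne_top h2
      · exact one_ne_zero h2
  have h5 := r.cocycle (lTranslate g u) W v (lTranslate_nonneg g hu) hW0 hv (by
    rw [hgu]
    rintro (⟨h1, _⟩ | ⟨h1, _⟩)
    · exact hx0 h1
    · exact hxtop h1)
  have h6 := r.cocycle u W v hu hW0 hv (by
    rw [← hxdef]
    rintro (⟨h1, _⟩ | ⟨h1, _⟩)
    · exact hx0 h1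
    · exact hxtop h1)
  rw [h5, h6, hgu, ← hxdef]
end
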